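/- arXiv:2105.11355 — 9 statements merged into one kernel-verified Lean document; each statement's English description precedes it below -/
import Mathlib

section
/- There exists a continuous function f : [0,1] → [0,1] such that the lower-scaled oscillation l_f(x) is finite for every x ∈ [0,1], and for every y ∈ [0,1] the level set f⁻¹(y) is infinite. -/
open Set MeasureTheory Metric Filter
open scoped ENNReal NNReal Topology

/-- Lower-scaled oscillation of `f` with domain `A`:
`l_f(x) = liminf_{r→0⁺} (sup_{y ∈ A, dist y x ≤ r} dist (f y) (f x)) / r`. -/
noncomputable def lowerScaledOsc {E F : Type*} [PseudoMetricSpace E] [PseudoMetricSpace F]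
    (A : Set E) (f : E → F) (x : E) : ℝ≥0∞ :=
  Filter.liminf
    (fun r : ℝ =>
      (⨆ (y : E) (_ : y ∈ A) (_ : dist y x ≤ r), ENNReal.ofReal (dist (f y) (f x))) /
        ENNReal.ofReal r)
    (nhdsWithin 0 (Set.Ioi 0))

/-- Upper-scaled oscillation of `f` with domain `A`:
`L_f(x) = limsup_{r→0⁺} (sup_{y ∈ A, dist y x ≤ r} dist (f y) (f x)) / r`. -/
noncomputable def upperScaledOsc {E F : Type*} [PseudoMetricSpace E] [PseudoMetricSpace F]
    (A : Set E) (f : E → F) (x : E) : ℝ≥0∞ :=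
  Filter.limsup
    (fun r : ℝ =>
      (⨆ (y : E) (_ : y ∈ A) (_ : dist y x ≤ r), ENNReal.ofReal (dist (f y) (f x))) /
        ENNReal.ofReal r)
    (nhdsWithin 0 (Set.Ioi 0))

/-!
Build a fat Cantor set in `[0, 1]`: the interval coded by a binary word `σ` of length `n` has
length `width n ≈ 2^{-n-1}` and loses an open middle gap of length `gapWidth n = 4^{-n-1}`.
Twice the measure of the Cantor set below `t` is a `2`-Lipschitz staircase, constant on the gaps,
taking every value in `[0, 1]`. On each depth-`n` gap add a zigzag of height `2 * width n` and clamp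
to `[0, 1]`: every `y` is then attained inside some gap of every depth, so all level sets are
infinite. Distinct gaps of depth at most `n` are `width (n + 1)` apart, so at a point outside the
gaps two radii `r` and `r' ≤ r / 2` cannot both meet zigzags of height much larger than the radius;
hence the function moves by `O(r)` on `r`-balls for arbitrarily small `r`.
-/

theorem tsum_comp_length {α : Type*} [Fintype α] (g : ℕ → ℝ≥0∞) :
    ∑' σ : List α, g σ.length = ∑' n, (Fintype.card α : ℝ≥0∞) ^ n * g n := by
  rw [← (Equiv.sigmaFiberEquiv List.length).tsum_eq, ENNReal.tsum_sigma']
  refine tsum_congr fun n => ?_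
  change ∑' σ : List.Vector α n, g σ.1.length = _
  simp [List.Vector.length_val, card_vector]

section ScaledOscillation

variable {E F : Type*} [PseudoMetricSpace E] [PseudoMetricSpace F]

theorem lowerScaledOsc_lt_top_of_frequently {A : Set E} {f : E → F} {x : E} {C : ℝ}
    (h : ∃ᶠ r in 𝓝[>] (0 : ℝ), ∀ y ∈ A, dist y x ≤ r → dist (f y) (f x) ≤ C * r) :
    lowerScaledOsc A f x < ⊤ := by
  refine lt_of_le_of_lt (liminf_le_of_frequently_le' (x := ENNReal.ofReal C) ?_)
    ENNReal.ofReal_lt_top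
  refine (h.and_eventually self_mem_nhdsWithin).mono fun r ⟨hr, (hr0 : 0 < r)⟩ => ?_
  have hsup : (⨆ (y : E) (_ : y ∈ A) (_ : dist y x ≤ r), ENNReal.ofReal (dist (f y) (f x))) ≤
      ENNReal.ofReal (C * r) :=
    iSup₂_le fun y hy => iSup_le fun hyx => ENNReal.ofReal_le_ofReal (hr y hy hyx)
  calc _ ≤ ENNReal.ofReal (C * r) / ENNReal.ofReal r := by gcongr
    _ ≤ ENNReal.ofReal C := by
      rw [ENNReal.div_le_iff (by simpa using hr0) ENNReal.ofReal_ne_top]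
      exact (ENNReal.ofReal_mul' hr0.le).le

theorem continuousAt_of_frequently_dist_le {f : E → F} {x : E} {C : ℝ}
    (h : ∃ᶠ r in 𝓝[>] (0 : ℝ), ∀ y, dist y x ≤ r → dist (f y) (f x) ≤ C * r) :
    ContinuousAt f x := by
  rw [Metric.continuousAt_iff]
  intro δ hδ
  obtain ⟨r, ⟨hr0, hrε⟩, hr⟩ :=
    (nhdsGT_basis (0 : ℝ)).frequently_iff.1 h (δ / (|C| + 1)) (by positivity)
  refine ⟨r, hr0, fun y hy => (hr y hy.le).trans_lt ?_⟩
  rw [lt_div_iff₀ (by positivity)] at hrε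
  nlinarith [le_abs_self C, abs_nonneg C]

end ScaledOscillation

namespace FatCantor

noncomputable section

def width (n : ℕ) : ℝ := (1 / 2) ^ (n + 1) + 1 / 2 * (1 / 4) ^ n

def gapWidth (n : ℕ) : ℝ := (1 / 4) ^ (n + 1)

theorem width_pos (n : ℕ) : 0 < width n := by unfold width; positivity

theorem gapWidth_pos (n : ℕ) : 0 < gapWidth n := by unfold gapWidth; positivity

theorem width_zero : width 0 = 1 := by norm_num [width]

theorem width_eq (n : ℕ) : width n = 2 * width (n + 1) + gapWidth n := by
  simp only [width, gapWidth, pow_succ]; ring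

theorem gapWidth_le_width_succ (n : ℕ) : gapWidth n ≤ width (n + 1) := by
  have : (1 / 4 : ℝ) ^ (n + 1) ≤ (1 / 2) ^ (n + 2) := by
    rw [show (1 / 4 : ℝ) = (1 / 2) ^ 2 by norm_num, ← pow_mul]
    exact pow_le_pow_of_le_one (by norm_num) (by norm_num) (by omega)
  have : (0 : ℝ) < (1 / 4) ^ (n + 1) := by positivity
  unfold gapWidth width; linarith

theorem width_le_three_mul_width_succ (n : ℕ) : width n ≤ 3 * width (n + 1) := by
  linarith [width_eq n, gapWidth_le_width_succ n]

theorem width_antitone : Antitone width :=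
  antitone_nat_of_succ_le fun n => by
    have := gapWidth_pos n; have := width_pos (n + 1); rw [width_eq n]; linarith

/-- Left end of the interval coded by `σ` when the digits of `σ` sit at depths `d, d + 1, …`. -/
def loFrom : ℕ → List Bool → ℝ
  | _, [] => 0
  | d, b :: σ => (if b then width (d + 1) + gapWidth d else 0) + loFrom (d + 1) σ

theorem loFrom_append_singleton (d : ℕ) (σ : List Bool) (b : Bool) :
    loFrom d (σ ++ [b]) =
      loFrom d σ + if b then width (d + σ.length + 1) + gapWidth (d + σ.length) else 0 := by
  induction σ generalizing d with
  | nil => simp [loFrom]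
  | cons a σ ih =>
    simp only [List.cons_append, loFrom, List.length_cons, ih, add_assoc, add_comm 1]

def lo (σ : List Bool) : ℝ := loFrom 0 σ

def hi (σ : List Bool) : ℝ := lo σ + width σ.length

def gapLo (σ : List Bool) : ℝ := lo σ + width (σ.length + 1)

def gapHi (σ : List Bool) : ℝ := gapLo σ + gapWidth σ.length

theorem gapLo_lt_gapHi (σ : List Bool) : gapLo σ < gapHi σ := by
  have := gapWidth_pos σ.length; unfold gapHi; linarith

theorem gapHi_add_width (σ : List Bool) : gapHi σ + width (σ.length + 1) = hi σ := by
  have := width_eq σ.length; unfold gapHi gapLo hi; linarith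

theorem lo_append_false (σ : List Bool) : lo (σ ++ [false]) = lo σ := by
  simp [lo, loFrom_append_singleton]

theorem hi_append_false (σ : List Bool) : hi (σ ++ [false]) = gapLo σ := by
  simp [hi, gapLo, lo_append_false]

theorem lo_append_true (σ : List Bool) : lo (σ ++ [true]) = gapHi σ := by
  simp [lo, gapHi, gapLo, loFrom_append_singleton]; ring

theorem hi_append_true (σ : List Bool) : hi (σ ++ [true]) = hi σ := by
  rw [hi, lo_append_true, List.length_append, List.length_singleton, gapHi_add_width]

theorem lo_le_lo_and_hi_le_hi_of_prefix {σ τ : List Bool} (h : σ <+: τ) :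
    lo σ ≤ lo τ ∧ hi τ ≤ hi σ := by
  obtain ⟨ρ, rfl⟩ := h
  induction ρ using List.reverseRecOn with
  | nil => simp
  | append_singleton ρ b ih =>
    rw [← List.append_assoc]
    have := width_pos ((σ ++ ρ).length + 1)
    have := gapLo_lt_gapHi (σ ++ ρ)
    have := gapHi_add_width (σ ++ ρ)
    cases b
    · rw [lo_append_false, hi_append_false]; unfold gapLo hi at *; constructor <;> linarith
    · rw [lo_append_true, hi_append_true]; unfold gapLo at *; constructor <;> linarith

theorem hi_le_gapLo_of_prefix {σ τ : List Bool} (h : σ ++ [false] <+: τ) : hi τ ≤ gapLo σ :=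
  hi_append_false σ ▸ (lo_le_lo_and_hi_le_hi_of_prefix h).2

theorem gapHi_le_lo_of_prefix {σ τ : List Bool} (h : σ ++ [true] <+: τ) : gapHi σ ≤ lo τ :=
  lo_append_true σ ▸ (lo_le_lo_and_hi_le_hi_of_prefix h).1

theorem zero_le_lo (σ : List Bool) : 0 ≤ lo σ := by
  simpa [lo, loFrom] using (lo_le_lo_and_hi_le_hi_of_prefix (List.nil_prefix (l := σ))).1

theorem hi_le_one (σ : List Bool) : hi σ ≤ 1 := by
  simpa [hi, lo, loFrom, width_zero] using
    (lo_le_lo_and_hi_le_hi_of_prefix (List.nil_prefix (l := σ))).2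

theorem Icc_gap_subset_Icc (σ : List Bool) : Icc (gapLo σ) (gapHi σ) ⊆ Icc 0 1 := by
  have := zero_le_lo σ; have := hi_le_one σ; have := gapHi_add_width σ
  have := width_pos (σ.length + 1)
  intro t ht; unfold gapLo at ht; constructor <;> linarith [ht.1, ht.2]

theorem prefix_or_prefix_or_diverge : ∀ σ τ : List Bool,
    σ <+: τ ∨ τ <+: σ ∨ ∃ c b, c ++ [b] <+: σ ∧ c ++ [!b] <+: τ
  | [], _ => Or.inl List.nil_prefix
  | _ :: _, [] => Or.inr (Or.inl List.nil_prefix)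
  | a :: σ, a' :: τ => by
    by_cases ha : a = a'
    · subst ha
      rcases prefix_or_prefix_or_diverge σ τ with h | h | ⟨c, b, h₁, h₂⟩
      · exact Or.inl (List.cons_prefix_cons.2 ⟨rfl, h⟩)
      · exact Or.inr (Or.inl (List.cons_prefix_cons.2 ⟨rfl, h⟩))
      · exact Or.inr (Or.inr ⟨a :: c, b, List.cons_prefix_cons.2 ⟨rfl, h₁⟩,
          List.cons_prefix_cons.2 ⟨rfl, h₂⟩⟩)
    · obtain rfl : a' = !a := by cases a <;> cases a' <;> simp_all
      exact Or.inr (Or.inr ⟨[], a, List.cons_prefix_cons.2 ⟨rfl, List.nil_prefix⟩,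
        List.cons_prefix_cons.2 ⟨rfl, List.nil_prefix⟩⟩)

theorem lo_add_width_le_of_mem {σ : List Bool} {z : ℝ} (hz : z ∈ Icc (gapLo σ) (gapHi σ)) :
    lo σ + width (σ.length + 1) ≤ z ∧ z + width (σ.length + 1) ≤ hi σ := by
  have := gapHi_add_width σ; unfold gapLo at hz; constructor <;> linarith [hz.1, hz.2]

theorem width_le_abs_sub_of_prefix {σ τ : List Bool} {b : Bool} (h : σ ++ [b] <+: τ) {z w : ℝ}
    (hz : z ∈ Icc (gapLo σ) (gapHi σ)) (hw : w ∈ Icc (gapLo τ) (gapHi τ)) :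
    width (τ.length + 1) ≤ |z - w| := by
  obtain ⟨hw₁, hw₂⟩ := lo_add_width_le_of_mem hw
  have := width_pos (τ.length + 1)
  cases b
  · have := hi_le_gapLo_of_prefix h
    rw [abs_of_nonneg (by linarith [hz.1])]; linarith [hz.1]
  · have := gapHi_le_lo_of_prefix h
    rw [abs_of_nonpos (by linarith [hz.2])]; linarith [hz.2]

theorem width_le_abs_sub_of_diverge {σ τ c : List Bool} {b : Bool} (hσ : c ++ [b] <+: σ)
    (hτ : c ++ [!b] <+: τ) {z w : ℝ} (hz : z ∈ Icc (gapLo σ) (gapHi σ))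
    (hw : w ∈ Icc (gapLo τ) (gapHi τ)) : width (σ.length + 1) ≤ |z - w| := by
  obtain ⟨hz₁, hz₂⟩ := lo_add_width_le_of_mem hz
  obtain ⟨hw₁, hw₂⟩ := lo_add_width_le_of_mem hw
  have := gapLo_lt_gapHi c
  have := width_pos (σ.length + 1)
  have := width_pos (τ.length + 1)
  cases b
  · have := hi_le_gapLo_of_prefix hσ
    have := gapHi_le_lo_of_prefix hτ
    rw [abs_of_nonpos (by linarith)]; linarith
  · have := gapHi_le_lo_of_prefix hσ
    have := hi_le_gapLo_of_prefix hτ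
    rw [abs_of_nonneg (by linarith)]; linarith

theorem width_le_abs_sub_of_prefix_of_ne {σ τ : List Bool} (h : σ <+: τ) (hne : σ ≠ τ) {z w : ℝ}
    (hz : z ∈ Icc (gapLo σ) (gapHi σ)) (hw : w ∈ Icc (gapLo τ) (gapHi τ)) :
    width (max σ.length τ.length + 1) ≤ |z - w| := by
  obtain ⟨_ | ⟨b, ρ⟩, rfl⟩ := h
  · simp at hne
  · rw [max_eq_right (by simp)]
    exact width_le_abs_sub_of_prefix (b := b) ⟨ρ, by simp⟩ hz hw

theorem width_le_abs_sub {σ τ : List Bool} (hne : σ ≠ τ) {z w : ℝ}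
    (hz : z ∈ Icc (gapLo σ) (gapHi σ)) (hw : w ∈ Icc (gapLo τ) (gapHi τ)) :
    width (max σ.length τ.length + 1) ≤ |z - w| := by
  rcases prefix_or_prefix_or_diverge σ τ with h | h | ⟨c, b, hσ, hτ⟩
  · exact width_le_abs_sub_of_prefix_of_ne h hne hz hw
  · rw [max_comm, abs_sub_comm]; exact width_le_abs_sub_of_prefix_of_ne h hne.symm hw hz
  · exact (width_antitone (by omega)).trans (width_le_abs_sub_of_diverge hσ hτ hz hw)

theorem eq_of_mem_Icc_gap {σ τ : List Bool} {z : ℝ} (hσ : z ∈ Icc (gapLo σ) (gapHi σ))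
    (hτ : z ∈ Icc (gapLo τ) (gapHi τ)) : σ = τ := by
  by_contra hne
  have := width_le_abs_sub hne hσ hτ
  rw [sub_self, abs_zero] at this
  exact (width_pos _).not_ge this

theorem notMem_gap_of_mem_Icc_gap {σ τ : List Bool} (hne : τ ≠ σ) {z : ℝ}
    (hz : z ∈ Icc (gapLo σ) (gapHi σ)) : z ∉ Ioo (gapLo τ) (gapHi τ) :=
  fun hτ => hne (eq_of_mem_Icc_gap (Ioo_subset_Icc_self hτ) hz)

def cantorSet : Set ℝ := Icc 0 1 \ ⋃ σ : List Bool, Ioo (gapLo σ) (gapHi σ)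

theorem measurableSet_cantorSet : MeasurableSet cantorSet :=
  measurableSet_Icc.diff (isOpen_iUnion fun _ => isOpen_Ioo).measurableSet

theorem volume_cantorSet_inter_ne_top (s : Set ℝ) : volume (cantorSet ∩ s) ≠ ⊤ :=
  ((measure_mono (inter_subset_left.trans sdiff_subset)).trans_lt measure_Icc_lt_top).ne

theorem volume_iUnion_gap_le :
    volume (⋃ σ : List Bool, Ioo (gapLo σ) (gapHi σ)) ≤ ENNReal.ofReal (1 / 2) := by
  have hsum : ∑' n : ℕ, (1 / 4 : ℝ) * (1 / 2) ^ n = 1 / 2 := by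
    rw [tsum_mul_left, tsum_geometric_of_lt_one (by norm_num) (by norm_num)]; norm_num
  have hterm (n : ℕ) : (Fintype.card Bool : ℝ≥0∞) ^ n * ENNReal.ofReal (gapWidth n) =
      ENNReal.ofReal (1 / 4 * (1 / 2) ^ n) := by
    rw [Fintype.card_bool, ← ENNReal.ofReal_natCast, ← ENNReal.ofReal_pow (by norm_num),
      ← ENNReal.ofReal_mul (by positivity), gapWidth, pow_succ, ← mul_assoc, ← mul_pow]
    norm_num; ring_nf
  calc volume (⋃ σ : List Bool, Ioo (gapLo σ) (gapHi σ))
      ≤ ∑' σ : List Bool, volume (Ioo (gapLo σ) (gapHi σ)) := measure_iUnion_le _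
    _ = ∑' σ : List Bool, ENNReal.ofReal (gapWidth σ.length) := by
      simp only [Real.volume_Ioo, gapHi, add_sub_cancel_left]
    _ = ENNReal.ofReal (1 / 2) := by
      rw [tsum_comp_length (fun n => ENNReal.ofReal (gapWidth n)), tsum_congr hterm,
        ← ENNReal.ofReal_tsum_of_nonneg (fun _ => by positivity)
          ((summable_geometric_of_lt_one (by norm_num) (by norm_num)).mul_left _), hsum]

theorem half_le_volume_real_cantorSet : 1 / 2 ≤ volume.real cantorSet := by
  have : ENNReal.ofReal (1 / 2) ≤ volume cantorSet :=
    calc ENNReal.ofReal (1 / 2) = ENNReal.ofReal (1 - 0) - ENNReal.ofReal (1 / 2) := by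
          rw [← ENNReal.ofReal_sub _ (by norm_num)]; norm_num
      _ ≤ volume (Icc (0 : ℝ) 1) - volume (⋃ σ : List Bool, Ioo (gapLo σ) (gapHi σ)) := by
          rw [Real.volume_Icc]; exact tsub_le_tsub_left volume_iUnion_gap_le _
      _ ≤ volume cantorSet := le_measure_sdiff
  have hfin : volume cantorSet ≠ ⊤ := by simpa using volume_cantorSet_inter_ne_top univ
  exact (ENNReal.ofReal_le_iff_le_toReal hfin).1 this

def staircase (t : ℝ) : ℝ := 2 * volume.real (cantorSet ∩ Iic t)

theorem staircase_sub {s t : ℝ} (hst : s ≤ t) :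
    staircase t - staircase s = 2 * volume.real (cantorSet ∩ Ioc s t) := by
  have hdisj : Disjoint (cantorSet ∩ Iic s) (cantorSet ∩ Ioc s t) :=
    (Iic_disjoint_Ioc le_rfl).mono inter_subset_right inter_subset_right
  rw [staircase, staircase, ← Iic_union_Ioc_eq_Iic hst, inter_union_distrib_left,
    measureReal_union hdisj (measurableSet_cantorSet.inter measurableSet_Ioc)
      (volume_cantorSet_inter_ne_top _) (volume_cantorSet_inter_ne_top _)]
  ring

theorem staircase_sub_le {s t : ℝ} (hst : s ≤ t) :
    0 ≤ staircase t - staircase s ∧ staircase t - staircase s ≤ 2 * (t - s) := by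
  rw [staircase_sub hst, ← Real.volume_real_Ioc_of_le hst]
  exact ⟨by positivity, by gcongr; exacts [measure_Ioc_lt_top.ne, inter_subset_right]⟩

theorem lipschitzWith_staircase : LipschitzWith 2 staircase := by
  refine LipschitzWith.of_dist_le_mul fun t s => ?_
  simp only [Real.dist_eq, NNReal.coe_ofNat]
  wlog hst : s ≤ t generalizing s t
  · rw [abs_sub_comm, abs_sub_comm t]; exact this s t (not_le.1 hst).le
  obtain ⟨h₀, h₂⟩ := staircase_sub_le hst
  rwa [abs_of_nonneg h₀, abs_of_nonneg (sub_nonneg.2 hst)]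

theorem staircase_eq_of_mem {σ : List Bool} {s t : ℝ} (hs : s ∈ Icc (gapLo σ) (gapHi σ))
    (ht : t ∈ Icc (gapLo σ) (gapHi σ)) : staircase s = staircase t := by
  wlog hst : s ≤ t generalizing s t
  · exact (this ht hs (le_of_not_ge hst)).symm
  have hsub : cantorSet ∩ Ioc s t ⊆ {t} := by
    rintro u ⟨⟨-, hu⟩, hus, hut⟩
    by_contra hne
    exact hu (mem_iUnion.2
      ⟨σ, lt_of_le_of_lt hs.1 hus, lt_of_lt_of_le (lt_of_le_of_ne hut hne) ht.2⟩)
  have : volume.real (cantorSet ∩ Ioc s t) = 0 := by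
    simp [Measure.real, measure_mono_null hsub (measure_singleton t)]
  linarith [staircase_sub hst]

theorem staircase_zero : staircase 0 = 0 := by
  have hsub : cantorSet ∩ Iic 0 ⊆ {0} := fun u hu => le_antisymm hu.2 hu.1.1.1
  have : volume (cantorSet ∩ Iic 0) = 0 := measure_mono_null hsub (measure_singleton 0)
  simp [staircase, Measure.real, this]

theorem one_le_staircase_one : 1 ≤ staircase 1 := by
  have : cantorSet ∩ Iic 1 = cantorSet := inter_eq_left.2 fun u hu => hu.1.2
  rw [staircase, this]
  linarith [half_le_volume_real_cantorSet]

def tent (a b s : ℝ) : ℝ := max 0 (min (s - a) (b - s))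

theorem lipschitzWith_tent (a b : ℝ) : LipschitzWith 1 (tent a b) := by
  show LipschitzWith 1 fun s => max 0 (min (s - a) (b - s))
  simpa using (LipschitzWith.const (0 : ℝ)).max ((LipschitzWith.id.sub (LipschitzWith.const a)).min
    ((LipschitzWith.const b).sub LipschitzWith.id))

theorem tent_nonneg (a b s : ℝ) : 0 ≤ tent a b s := le_max_left _ _

theorem tent_le {a b : ℝ} (hab : a ≤ b) (s : ℝ) : tent a b s ≤ (b - a) / 2 := by
  refine max_le (by linarith) ?_
  rcases le_total s ((a + b) / 2) with h | h
  · exact (min_le_left _ _).trans (by linarith)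
  · exact (min_le_right _ _).trans (by linarith)

theorem tent_eq_zero {a b s : ℝ} (hs : s ∉ Ioo a b) : tent a b s = 0 := by
  rw [mem_Ioo, not_and_or, not_lt, not_lt] at hs
  refine max_eq_left ?_
  rcases hs with hs | hs
  · exact (min_le_left _ _).trans (by linarith)
  · exact (min_le_right _ _).trans (by linarith)

def zigzag (s : ℝ) : ℝ := 4 * (tent (1 / 2) 1 s - tent 0 (1 / 2) s)

theorem zigzag_eq_zero {s : ℝ} (hs : s ∉ Ioo 0 1) : zigzag s = 0 := by
  rw [zigzag, tent_eq_zero fun h => hs ⟨by linarith [h.1], h.2⟩,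
    tent_eq_zero fun h => hs ⟨h.1, by linarith [h.2]⟩, sub_self, mul_zero]

theorem abs_zigzag_le (s : ℝ) : |zigzag s| ≤ 1 := by
  have := tent_le (by norm_num : (1 / 2 : ℝ) ≤ 1) s
  have := tent_le (by norm_num : (0 : ℝ) ≤ 1 / 2) s
  have := tent_nonneg (1 / 2) 1 s
  have := tent_nonneg 0 (1 / 2) s
  rw [zigzag, abs_le]; constructor <;> linarith

theorem zigzag_one_quarter : zigzag (1 / 4) = -1 := by norm_num [zigzag, tent]

theorem zigzag_three_quarters : zigzag (3 / 4) = 1 := by norm_num [zigzag, tent]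

theorem abs_zigzag_sub_le (s u : ℝ) : |zigzag s - zigzag u| ≤ 8 * |s - u| := by
  have h₁ := (lipschitzWith_tent (1 / 2) 1).dist_le_mul s u
  have h₂ := (lipschitzWith_tent 0 (1 / 2)).dist_le_mul s u
  simp only [Real.dist_eq, NNReal.coe_one, one_mul] at h₁ h₂
  calc |zigzag s - zigzag u|
      = 4 * |(tent (1 / 2) 1 s - tent (1 / 2) 1 u) - (tent 0 (1 / 2) s - tent 0 (1 / 2) u)| := by
        rw [zigzag, zigzag, ← mul_sub, abs_mul, abs_of_pos (by norm_num : (0 : ℝ) < 4)]; ring_nf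
    _ ≤ 4 * (|s - u| + |s - u|) := by gcongr; exact (abs_sub _ _).trans (add_le_add h₁ h₂)
    _ = 8 * |s - u| := by ring

def wiggle (σ : List Bool) (t : ℝ) : ℝ :=
  2 * width σ.length * zigzag ((t - gapLo σ) / gapWidth σ.length)

def wiggleSlope (σ : List Bool) : ℝ := 16 * width σ.length / gapWidth σ.length

theorem wiggleSlope_nonneg (σ : List Bool) : 0 ≤ wiggleSlope σ := by
  have := width_pos σ.length; have := gapWidth_pos σ.length; unfold wiggleSlope; positivity

theorem wiggle_eq_zero {σ : List Bool} {t : ℝ} (ht : t ∉ Ioo (gapLo σ) (gapHi σ)) :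
    wiggle σ t = 0 := by
  have hg := gapWidth_pos σ.length
  refine mul_eq_zero_of_right _ (zigzag_eq_zero fun h => ht ?_)
  rw [mem_Ioo, lt_div_iff₀ hg, div_lt_iff₀ hg] at h
  exact ⟨by linarith, by unfold gapHi; linarith⟩

theorem abs_wiggle_le (σ : List Bool) (t : ℝ) : |wiggle σ t| ≤ 2 * width σ.length := by
  have := width_pos σ.length
  rw [wiggle, abs_mul, abs_of_pos (by positivity)]
  exact mul_le_of_le_one_right (by positivity) (abs_zigzag_le _)

theorem abs_wiggle_sub_le (σ : List Bool) (s t : ℝ) :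
    |wiggle σ t - wiggle σ s| ≤ wiggleSlope σ * |t - s| := by
  have := width_pos σ.length; have hg := gapWidth_pos σ.length
  calc |wiggle σ t - wiggle σ s|
      = 2 * width σ.length * |zigzag ((t - gapLo σ) / gapWidth σ.length) -
          zigzag ((s - gapLo σ) / gapWidth σ.length)| := by
        rw [wiggle, wiggle, ← mul_sub, abs_mul, abs_of_pos (by positivity)]
    _ ≤ 2 * width σ.length * (8 * |(t - gapLo σ) / gapWidth σ.length -
          (s - gapLo σ) / gapWidth σ.length|) := by gcongr; exact abs_zigzag_sub_le _ _
    _ = wiggleSlope σ * |t - s| := by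
        rw [← sub_div, sub_sub_sub_cancel_right, abs_div, abs_of_pos hg, wiggleSlope]; ring

theorem wiggle_one_quarter (σ : List Bool) :
    wiggle σ (gapLo σ + gapWidth σ.length / 4) = -(2 * width σ.length) := by
  have := (gapWidth_pos σ.length).ne'
  rw [wiggle, show (gapLo σ + gapWidth σ.length / 4 - gapLo σ) / gapWidth σ.length = 1 / 4 by
    field_simp; ring, zigzag_one_quarter, mul_neg_one]

theorem wiggle_three_quarters (σ : List Bool) :
    wiggle σ (gapLo σ + 3 * gapWidth σ.length / 4) = 2 * width σ.length := by
  have := (gapWidth_pos σ.length).ne'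
  rw [wiggle, show (gapLo σ + 3 * gapWidth σ.length / 4 - gapLo σ) / gapWidth σ.length = 3 / 4 by
    field_simp; ring, zigzag_three_quarters, mul_one]

def wiggleSum (t : ℝ) : ℝ := ∑' σ, wiggle σ t

theorem wiggleSum_eq {σ : List Bool} {t : ℝ} (ht : t ∈ Icc (gapLo σ) (gapHi σ)) :
    wiggleSum t = wiggle σ t :=
  tsum_eq_single σ fun _ hτ => wiggle_eq_zero (notMem_gap_of_mem_Icc_gap hτ ht)

theorem wiggleSum_eq_zero {t : ℝ} (ht : ∀ σ : List Bool, t ∉ Ioo (gapLo σ) (gapHi σ)) :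
    wiggleSum t = 0 := by
  simp [wiggleSum, wiggle_eq_zero (ht _)]

def wavy (t : ℝ) : ℝ := staircase t + wiggleSum t

theorem wavy_eq_of_mem {σ : List Bool} {t : ℝ} (ht : t ∈ Icc (gapLo σ) (gapHi σ)) :
    wavy t = staircase (gapLo σ) + wiggle σ t := by
  rw [wavy, wiggleSum_eq ht, staircase_eq_of_mem ht (left_mem_Icc.2 (gapLo_lt_gapHi σ).le)]

theorem exists_wiggleSlope_bound (x : ℝ) :
    ∃ K, 0 ≤ K ∧ ∀ σ : List Bool, x ∈ Icc (gapLo σ) (gapHi σ) → wiggleSlope σ ≤ K := by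
  by_cases h : ∃ σ : List Bool, x ∈ Icc (gapLo σ) (gapHi σ)
  · obtain ⟨σ₀, hσ₀⟩ := h
    exact ⟨wiggleSlope σ₀, wiggleSlope_nonneg σ₀, fun σ hσ => (eq_of_mem_Icc_gap hσ hσ₀) ▸ le_rfl⟩
  · exact ⟨0, le_rfl, fun σ hσ => absurd ⟨σ, hσ⟩ h⟩

/-- If both `r` and `d / 2` failed, `d` being the distance to a tall gap seen at radius `r`, the
two tall gaps would be closer to each other than `width_le_abs_sub` allows. -/
theorem frequently_nearby_gaps_low (x : ℝ) :
    ∃ᶠ r in 𝓝[>] (0 : ℝ), ∀ σ : List Bool, x ∉ Icc (gapLo σ) (gapHi σ) →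
      infDist x (Icc (gapLo σ) (gapHi σ)) ≤ r → 2 * width σ.length ≤ 18 * r := by
  have hne (σ : List Bool) : (Icc (gapLo σ) (gapHi σ)).Nonempty :=
    nonempty_Icc.2 (gapLo_lt_gapHi σ).le
  rw [(nhdsGT_basis 0).frequently_iff]
  intro ε hε
  by_contra! H
  obtain ⟨σ₁, hx₁, hd₁, hw₁⟩ := H (ε / 2) ⟨by positivity, by linarith⟩
  set d₁ := infDist x (Icc (gapLo σ₁) (gapHi σ₁))
  have hd₁pos : 0 < d₁ := (isClosed_Icc.notMem_iff_infDist_pos (hne σ₁)).1 hx₁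
  obtain ⟨σ₂, -, hd₂, hw₂⟩ := H (d₁ / 2) ⟨by positivity, by linarith⟩
  have hσ : σ₁ ≠ σ₂ := by rintro rfl; linarith
  obtain ⟨z₁, hz₁, hxz₁⟩ := isCompact_Icc.exists_infDist_eq_dist (hne σ₁) x
  obtain ⟨z₂, hz₂, hxz₂⟩ := isCompact_Icc.exists_infDist_eq_dist (hne σ₂) x
  have hz : |z₁ - z₂| ≤ d₁ + d₁ / 2 := by
    rw [Real.dist_eq] at hxz₁ hxz₂
    calc |z₁ - z₂| ≤ |z₁ - x| + |x - z₂| := abs_sub_le _ _ _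
      _ ≤ d₁ + d₁ / 2 := by rw [abs_sub_comm]; linarith
  have hsep := width_le_abs_sub hσ hz₁ hz₂
  have h₃ := width_le_three_mul_width_succ (max σ₁.length σ₂.length)
  rw [width_antitone.map_max] at h₃
  rcases min_choice (width σ₁.length) (width σ₂.length) with h | h <;> rw [h] at h₃ <;> linarith

theorem abs_wiggleSum_le {x r K y : ℝ} (hx : ∀ σ : List Bool, x ∉ Ioo (gapLo σ) (gapHi σ))
    (hK₀ : 0 ≤ K) (hK : ∀ σ : List Bool, x ∈ Icc (gapLo σ) (gapHi σ) → wiggleSlope σ ≤ K)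
    (hr : ∀ σ : List Bool, x ∉ Icc (gapLo σ) (gapHi σ) →
      infDist x (Icc (gapLo σ) (gapHi σ)) ≤ r → 2 * width σ.length ≤ 18 * r)
    (hy : |y - x| ≤ r) : |wiggleSum y| ≤ (18 + K) * r := by
  have hr₀ : 0 ≤ r := (abs_nonneg _).trans hy
  by_cases hyσ : ∃ σ : List Bool, y ∈ Ioo (gapLo σ) (gapHi σ)
  · obtain ⟨σ, hσ⟩ := hyσ
    rw [wiggleSum_eq (Ioo_subset_Icc_self hσ)]
    by_cases hxσ : x ∈ Icc (gapLo σ) (gapHi σ)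
    · calc |wiggle σ y| = |wiggle σ y - wiggle σ x| := by rw [wiggle_eq_zero (hx σ), sub_zero]
        _ ≤ wiggleSlope σ * |y - x| := abs_wiggle_sub_le σ x y
        _ ≤ K * r := mul_le_mul (hK σ hxσ) hy (abs_nonneg _) hK₀
        _ ≤ (18 + K) * r := by nlinarith
    · have hd : infDist x (Icc (gapLo σ) (gapHi σ)) ≤ r :=
        (infDist_le_dist_of_mem (Ioo_subset_Icc_self hσ)).trans
          (by rwa [Real.dist_eq, abs_sub_comm])
      have := hr σ hxσ hd
      have := abs_wiggle_le σ y
      nlinarith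
  · push Not at hyσ
    rw [wiggleSum_eq_zero hyσ, abs_zero]
    positivity

theorem exists_frequently_abs_wavy_sub_le (x : ℝ) :
    ∃ C, ∃ᶠ r in 𝓝[>] (0 : ℝ), ∀ y, |y - x| ≤ r → |wavy y - wavy x| ≤ C * r := by
  by_cases hx : ∃ σ : List Bool, x ∈ Ioo (gapLo σ) (gapHi σ)
  · obtain ⟨σ, hσ⟩ := hx
    refine ⟨wiggleSlope σ, Eventually.frequently ?_⟩
    filter_upwards [Ioo_mem_nhdsGT (lt_min (sub_pos.2 hσ.1) (sub_pos.2 hσ.2))] with r hr y hy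
    have hyσ : y ∈ Icc (gapLo σ) (gapHi σ) := by
      have := abs_le.1 hy; have := lt_min_iff.1 hr.2; constructor <;> linarith
    rw [wavy_eq_of_mem hyσ, wavy_eq_of_mem (Ioo_subset_Icc_self hσ), add_sub_add_left_eq_sub]
    exact (abs_wiggle_sub_le σ x y).trans (mul_le_mul_of_nonneg_left hy (wiggleSlope_nonneg σ))
  · push Not at hx
    obtain ⟨K, hK₀, hK⟩ := exists_wiggleSlope_bound x
    refine ⟨2 + (18 + K), (frequently_nearby_gaps_low x).mono fun r hr y hy => ?_⟩
    have hF := lipschitzWith_staircase.dist_le_mul y x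
    rw [Real.dist_eq, Real.dist_eq, NNReal.coe_ofNat] at hF
    calc |wavy y - wavy x| = |(staircase y - staircase x) + wiggleSum y| := by
          rw [wavy, wavy, wiggleSum_eq_zero hx]; congr 1; ring
      _ ≤ |staircase y - staircase x| + |wiggleSum y| := abs_add_le _ _
      _ ≤ 2 * r + (18 + K) * r :=
          add_le_add (hF.trans (by linarith)) (abs_wiggleSum_le hx hK₀ hK hr hy)
      _ = (2 + (18 + K)) * r := by ring

def wavyClamped (t : ℝ) : ℝ := max 0 (min 1 (wavy t))

theorem abs_clamp_sub_clamp_le (a b : ℝ) :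
    |max 0 (min 1 a) - max 0 (min 1 b)| ≤ |a - b| :=
  calc |max 0 (min 1 a) - max 0 (min 1 b)| ≤ |min 1 a - min 1 b| := by
        rw [max_comm 0, max_comm 0]; exact abs_max_sub_max_le_abs _ _ 0
    _ ≤ |a - b| := by simpa using abs_min_sub_min_le_max 1 a 1 b

theorem exists_frequently_dist_wavyClamped_le (x : ℝ) :
    ∃ C, ∃ᶠ r in 𝓝[>] (0 : ℝ), ∀ y, dist y x ≤ r →
      dist (wavyClamped y) (wavyClamped x) ≤ C * r := by
  obtain ⟨C, hC⟩ := exists_frequently_abs_wavy_sub_le x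
  exact ⟨C, hC.mono fun r hr y hy => (abs_clamp_sub_clamp_le _ _).trans (hr y hy)⟩

theorem continuous_wavyClamped : Continuous wavyClamped :=
  continuous_iff_continuousAt.2 fun x =>
    continuousAt_of_frequently_dist_le (exists_frequently_dist_wavyClamped_le x).choose_spec

theorem mapsTo_wavyClamped : MapsTo wavyClamped (Icc 0 1) (Icc 0 1) :=
  fun _ _ => ⟨le_max_left _ _, max_le zero_le_one (min_le_left _ _)⟩

theorem exists_mem_Icc_staircase_eq (n : ℕ) {t : ℝ} (ht : t ∈ Icc (0 : ℝ) 1) :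
    ∃ ρ : List Bool, ρ.length = n ∧ ∃ t' ∈ Icc (lo ρ) (hi ρ), staircase t' = staircase t := by
  induction n with
  | zero => exact ⟨[], rfl, t, by simpa [lo, loFrom, hi, width_zero] using ht, rfl⟩
  | succ n ih =>
    obtain ⟨ρ, rfl, t', ht', heq⟩ := ih
    have := gapLo_lt_gapHi ρ
    have := width_pos (ρ.length + 1)
    rcases le_or_gt t' (gapLo ρ) with h | h
    · refine ⟨ρ ++ [false], by simp, t', ?_, heq⟩
      rw [lo_append_false, hi_append_false]; exact ⟨ht'.1, h⟩
    rcases le_or_gt (gapHi ρ) t' with h' | h'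
    · refine ⟨ρ ++ [true], by simp, t', ?_, heq⟩
      rw [lo_append_true, hi_append_true]; exact ⟨h', ht'.2⟩
    · refine ⟨ρ ++ [false], by simp, gapLo ρ, ?_, ?_⟩
      · rw [lo_append_false, hi_append_false]; exact ⟨by unfold gapLo; linarith, le_rfl⟩
      · rw [← heq]
        exact staircase_eq_of_mem (left_mem_Icc.2 (gapLo_lt_gapHi ρ).le) ⟨h.le, h'.le⟩

theorem exists_abs_staircase_gapLo_sub_le (n : ℕ) {y : ℝ} (hy : y ∈ Icc (0 : ℝ) 1) :
    ∃ σ : List Bool, σ.length = n ∧ |staircase (gapLo σ) - y| ≤ 2 * width n := by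
  obtain ⟨t, ht, rfl⟩ := intermediate_value_Icc zero_le_one
    lipschitzWith_staircase.continuous.continuousOn
    ⟨by rw [staircase_zero]; exact hy.1, hy.2.trans one_le_staircase_one⟩
  obtain ⟨σ, rfl, t', ht', heq⟩ := exists_mem_Icc_staircase_eq n ht
  refine ⟨σ, rfl, ?_⟩
  have hF := lipschitzWith_staircase.dist_le_mul (gapLo σ) t'
  rw [Real.dist_eq, Real.dist_eq, NNReal.coe_ofNat, heq] at hF
  have := width_antitone (Nat.le_succ σ.length)
  have := width_pos (σ.length + 1)
  have hd : |gapLo σ - t'| ≤ width σ.length := by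
    unfold hi at ht'; unfold gapLo
    exact abs_sub_le_iff.2 ⟨by linarith [ht'.1], by linarith [ht'.2]⟩
  linarith

theorem exists_mem_gap_wavyClamped_eq (n : ℕ) {y : ℝ} (hy : y ∈ Icc (0 : ℝ) 1) :
    ∃ σ : List Bool, σ.length = n ∧ ∃ x ∈ Ioo (gapLo σ) (gapHi σ), wavyClamped x = y := by
  obtain ⟨σ, rfl, hσ⟩ := exists_abs_staircase_gapLo_sub_le n hy
  have hg := gapWidth_pos σ.length
  have hq₁ : gapLo σ + gapWidth σ.length / 4 ∈ Icc (gapLo σ) (gapHi σ) := by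
    unfold gapHi; constructor <;> linarith
  have hq₃ : gapLo σ + 3 * gapWidth σ.length / 4 ∈ Icc (gapLo σ) (gapHi σ) := by
    unfold gapHi; constructor <;> linarith
  have h₁ : wavyClamped (gapLo σ + gapWidth σ.length / 4) ≤ y := by
    rw [wavyClamped, wavy_eq_of_mem hq₁, wiggle_one_quarter]
    exact max_le hy.1 ((min_le_right _ _).trans (by linarith [(abs_le.1 hσ).2]))
  have h₃ : y ≤ wavyClamped (gapLo σ + 3 * gapWidth σ.length / 4) := by
    rw [wavyClamped, wavy_eq_of_mem hq₃, wiggle_three_quarters]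
    exact le_max_of_le_right (le_min hy.2 (by linarith [(abs_le.1 hσ).1]))
  obtain ⟨x, hx, hxy⟩ :=
    intermediate_value_Icc (by linarith) continuous_wavyClamped.continuousOn ⟨h₁, h₃⟩
  exact ⟨σ, rfl, x, ⟨by linarith [hx.1], by unfold gapHi; linarith [hx.2]⟩, hxy⟩

theorem infinite_inter_preimage_wavyClamped {y : ℝ} (hy : y ∈ Icc (0 : ℝ) 1) :
    (Icc (0 : ℝ) 1 ∩ wavyClamped ⁻¹' {y}).Infinite := by
  choose σ hσ x hx hxy using fun n => exists_mem_gap_wavyClamped_eq n hy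
  refine infinite_of_injective_forall_mem (f := x) (fun m n hmn => ?_)
    fun n => ⟨Icc_gap_subset_Icc _ (Ioo_subset_Icc_self (hx n)), hxy n⟩
  rw [← hσ m, ← hσ n,
    eq_of_mem_Icc_gap (Ioo_subset_Icc_self (hx m)) (hmn ▸ Ioo_subset_Icc_self (hx n))]

end

end FatCantor

/-- There exists a continuous function `f : [0,1] → [0,1]` with finite lower-scaled
oscillation at every point, all of whose level sets are infinite. -/
theorem stmt0 :
    ∃ f : ℝ → ℝ,
      ContinuousOn f (Set.Icc 0 1) ∧
      Set.MapsTo f (Set.Icc 0 1) (Set.Icc 0 1) ∧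
      (∀ x ∈ Set.Icc (0:ℝ) 1, lowerScaledOsc (Set.Icc 0 1) f x < ⊤) ∧
      (∀ y ∈ Set.Icc (0:ℝ) 1, (Set.Icc (0:ℝ) 1 ∩ f ⁻¹' {y}).Infinite) := by
  refine ⟨FatCantor.wavyClamped, FatCantor.continuous_wavyClamped.continuousOn,
    FatCantor.mapsTo_wavyClamped, fun x _ => ?_,
    fun y hy => FatCantor.infinite_inter_preimage_wavyClamped hy⟩
  obtain ⟨C, hC⟩ := FatCantor.exists_frequently_dist_wavyClamped_le x
  exact lowerScaledOsc_lt_top_of_frequently (hC.mono fun r hr y _ => hr y)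
end

section
/- For every integer m = k ≥ 1 there exists a continuous function f : [0,1]^m → [0,1]^k such that the lower-scaled oscillation l_f(x) is finite for every x ∈ [0,1]^m, and for every y ∈ [0,1]^k the level set f⁻¹(y) is infinite. -/
open Set MeasureTheory Metric Filter
open scoped ENNReal NNReal Topology

/-!
In one variable, let `stair` be the nondecreasing 1-Lipschitz map which has slope `1` except on
closed intervals ("plateaus"), one of length `4^{-(j+1)}` for each dyadic node
`c = (2i+1)/2^{j+1}`, on which it is constant equal to `c`. On the plateau of `c` add a zigzag
running from `c` down to `c - 2^{-j}`, up to `c + 2^{-j}` and back to `c`. Every `y ∈ [0,1]` is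
within `2^{-j}` of a node of level `j`, so it is attained on a plateau of every level.

The zigzags are steep, but at every point `x` there are arbitrarily small radii `r` such that
every plateau meeting `[x - r, x + r]`, other than the one containing `x`, has zigzag amplitude at
most `8 r`. Indeed, if some plateau of amplitude `a` not containing `x` comes within `a / 8` of
`x`, then `r = a / 8` works, because nodes of amplitude at least `a` are `a / 2`-separated while
`stair` is 1-Lipschitz; otherwise only the finitely many plateaus of amplitude at least a fixed
size can come that close, and any `r` below their distances to `x` works. At such radii the
oscillation is at most `r` (from `stair`) plus `16 r` plus `r` times the Lipschitz constant of the
zigzag through `x`.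

In dimension `m` the function acts, rescaled to `[0,1]`, on the first coordinate.
-/

def LowerLipschitzAt {E F : Type*} [PseudoMetricSpace E] [PseudoMetricSpace F] (f : E → F)
    (x : E) : Prop :=
  ∃ K : ℝ≥0, ∃ᶠ r in 𝓝[>] (0 : ℝ), MapsTo f (closedBall x r) (closedBall (f x) (K * r))

namespace LowerLipschitzAt

variable {E F : Type*} [PseudoMetricSpace E] [PseudoMetricSpace F] {f : E → F} {x : E}

theorem lowerScaledOsc_lt_top (hf : LowerLipschitzAt f x) (A : Set E) :
    lowerScaledOsc A f x < ⊤ := by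
  obtain ⟨K, hK⟩ := hf
  refine (liminf_le_of_frequently_le ((hK.and_eventually self_mem_nhdsWithin).mono
    fun r ⟨hmaps, hr⟩ => ?_)).trans_lt (ENNReal.coe_lt_top (r := K))
  refine ENNReal.div_le_of_le_mul (iSup₂_le fun y _ => iSup_le fun hy => ?_)
  rw [← ENNReal.ofReal_coe_nnreal, ← ENNReal.ofReal_mul K.coe_nonneg]
  exact ENNReal.ofReal_le_ofReal (hmaps hy)

theorem _root_.LipschitzWith.comp_lowerLipschitzAt {G : Type*} [PseudoMetricSpace G]
    {g : F → G} {L : ℝ≥0} (hg : LipschitzWith L g) (hf : LowerLipschitzAt f x) :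
    LowerLipschitzAt (g ∘ f) x := by
  obtain ⟨K, hK⟩ := hf
  refine ⟨L * K, hK.mono fun r hmaps y hy => ?_⟩
  calc dist (g (f y)) (g (f x)) ≤ L * dist (f y) (f x) := hg.dist_le_mul _ _
    _ ≤ L * (K * r) := mul_le_mul_of_nonneg_left (hmaps hy) L.coe_nonneg
    _ = ↑(L * K) * r := by push_cast; ring

theorem comp_const_mul {f : ℝ → F} {c x : ℝ} (hc : 0 < c) (hf : LowerLipschitzAt f (c * x)) :
    LowerLipschitzAt (fun y => f (c * y)) x := by
  obtain ⟨K, hK⟩ := hf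
  have hdiv : Tendsto (· / c) (𝓝[>] 0) (𝓝[>] 0) :=
    tendsto_nhdsWithin_iff.2 ⟨((continuous_id.div_const c).tendsto' 0 0 (zero_div c)).mono_left
      nhdsWithin_le_nhds, eventually_mem_nhdsWithin.mono fun s hs => div_pos hs hc⟩
  refine ⟨K * c.toNNReal, hdiv.frequently (hK.mono fun s hmaps => ?_)⟩
  intro y hy
  have hcy : c * y ∈ closedBall (c * x) (c * (s / c)) := by
    rw [mem_closedBall, Real.dist_eq, ← mul_sub, abs_mul, abs_of_pos hc]
    exact mul_le_mul_of_nonneg_left hy hc.le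
  rw [mul_div_cancel₀ s hc.ne'] at hcy
  simpa [Real.coe_toNNReal c hc.le, mul_assoc, mul_div_cancel₀ s hc.ne'] using hmaps hcy

theorem update {ι : Type*} [Fintype ι] [DecidableEq ι] {g : ℝ → ℝ} {x : ι → ℝ} (i : ι)
    (hg : LowerLipschitzAt g (x i)) :
    LowerLipschitzAt (fun y : ι → ℝ => Function.update y i (g (y i))) x := by
  obtain ⟨K, hK⟩ := hg
  refine ⟨max K 1, (hK.and_eventually self_mem_nhdsWithin).mono
    fun r ⟨hmaps, (hr : 0 < r)⟩ y hy => ?_⟩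
  have hcoord (j : ι) : dist (y j) (x j) ≤ r := (dist_le_pi_dist y x j).trans hy
  rw [mem_closedBall, dist_pi_le_iff (by positivity)]
  intro j
  rcases eq_or_ne j i with rfl | hj
  · simp only [Function.update_self]
    exact (hmaps (hcoord j)).trans (by gcongr; exact le_max_left _ _)
  · simp only [Function.update_of_ne hj]
    exact (hcoord j).trans (le_mul_of_one_le_left hr.le (by simp))

end LowerLipschitzAt

theorem eventually_disjoint_closedBall {X : Type*} [PseudoMetricSpace X] {C : Set X} {x : X}
    (hC : IsClosed C) (hx : x ∉ C) : ∀ᶠ r in 𝓝[>] (0 : ℝ), Disjoint (closedBall x r) C := by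
  obtain ⟨ε, hε, hball⟩ := Metric.isOpen_iff.1 hC.isOpen_compl x hx
  filter_upwards [Ioo_mem_nhdsGT hε] with r hr
  exact subset_compl_iff_disjoint_right.1 ((closedBall_subset_ball hr.2).trans hball)

section Update

variable {ι : Type*} [DecidableEq ι] {g : ℝ → ℝ}

theorem update_mem_Icc {y : ι → ℝ} {v : ℝ} (hy : y ∈ Icc 0 1) (hv : v ∈ Icc (0 : ℝ) 1) (i : ι) :
    Function.update y i v ∈ Icc (0 : ι → ℝ) 1 := by
  rw [← pi_univ_Icc] at hy ⊢
  exact (update_mem_pi_iff_of_mem hy).2 fun _ => hv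

theorem mapsTo_update_Icc (hg : MapsTo g (Icc 0 1) (Icc 0 1)) (i : ι) :
    MapsTo (fun y : ι → ℝ => Function.update y i (g (y i))) (Icc 0 1) (Icc 0 1) :=
  fun _ hy => update_mem_Icc hy (hg ⟨hy.1 i, hy.2 i⟩) i

theorem infinite_Icc_inter_preimage_update
    (hg : ∀ y ∈ Icc (0 : ℝ) 1, (Icc 0 1 ∩ g ⁻¹' {y}).Infinite) (i : ι) :
    ∀ y ∈ Icc (0 : ι → ℝ) 1,
      (Icc 0 1 ∩ (fun z : ι → ℝ => Function.update z i (g (z i))) ⁻¹' {y}).Infinite := by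
  intro y hy
  refine ((hg (y i) ⟨hy.1 i, hy.2 i⟩).image (Function.update_injective y i).injOn).mono ?_
  rintro _ ⟨u, ⟨hu, hgu⟩, rfl⟩
  exact ⟨update_mem_Icc hy hu i, by simp_all⟩

end Update

namespace PlateauZigzag

section Profiles

variable {a p m h x y s : ℝ}

def ramp (a p x : ℝ) : ℝ := min p (max 0 (x - a))

theorem ramp_of_le (hp : 0 ≤ p) (hx : x ≤ a) : ramp a p x = 0 := by
  simp [ramp, hp, hx]

theorem ramp_of_ge (hp : 0 ≤ p) (hx : a + p ≤ x) : ramp a p x = p := by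
  simp only [ramp]
  rw [max_eq_right (by linarith), min_eq_left (by linarith)]

theorem ramp_add (hs : 0 ≤ s) (hsp : s ≤ p) : ramp a p (a + s) = s := by
  simp [ramp, hs, hsp]

theorem ramp_sub_ramp (hp : 0 ≤ p) (hxy : x ≤ y) :
    ramp a p y - ramp a p x = volume.real (Ioc x y ∩ Ioc a (a + p)) := by
  rw [Ioc_inter_Ioc, Real.volume_real_Ioc]
  simp only [ramp, min_def, max_def]
  split_ifs <;> linarith

theorem ramp_nonneg (hp : 0 ≤ p) : 0 ≤ ramp a p x := le_min hp (le_max_left _ _)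

theorem ramp_le : ramp a p x ≤ p := min_le_left _ _

noncomputable def tent (m h x : ℝ) : ℝ := max 0 (1 - |x - m| / h)

theorem continuous_tent : Continuous (tent m h) := by
  unfold tent; fun_prop

theorem tent_nonneg : 0 ≤ tent m h x := le_max_left _ _

theorem tent_le_one (hh : 0 ≤ h) : tent m h x ≤ 1 :=
  max_le zero_le_one (sub_le_self _ (by positivity))

theorem tent_self : tent m h m = 1 := by simp [tent]

theorem tent_of_le (hh : 0 < h) (hx : h ≤ |x - m|) : tent m h x = 0 :=
  max_eq_left (by rw [sub_nonpos, le_div_iff₀ hh]; linarith)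

theorem abs_tent_sub_le (hh : 0 < h) : |tent m h x - tent m h y| ≤ |x - y| / h := by
  refine (abs_max_sub_max_le_max _ _ _ _).trans ?_
  rw [sub_self, abs_zero, max_eq_right (abs_nonneg _), sub_sub_sub_cancel_left, ← sub_div,
    abs_div, abs_of_pos hh]
  refine div_le_div_of_nonneg_right ?_ hh.le
  calc |(|y - m| - |x - m|)| ≤ |(y - m) - (x - m)| := abs_abs_sub_abs_le_abs_sub _ _
    _ = |x - y| := by rw [abs_sub_comm]; ring_nf

end Profiles

abbrev Node : Type := Σ j : ℕ, Fin (2 ^ j)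

noncomputable def height (t : Node) : ℝ := (2 * (t.2 : ℕ) + 1 : ℝ) / 2 ^ (t.1 + 1)

noncomputable def amp (j : ℕ) : ℝ := (2 ^ j)⁻¹

noncomputable def len (j : ℕ) : ℝ := (4 ^ (j + 1))⁻¹

theorem amp_pos (j : ℕ) : 0 < amp j := by unfold amp; positivity

theorem len_pos (j : ℕ) : 0 < len j := by unfold len; positivity

theorem amp_anti : Antitone amp := fun _ _ h =>
  inv_anti₀ (by positivity) (pow_le_pow_right₀ one_le_two h)

theorem exists_amp_lt {ε : ℝ} (hε : 0 < ε) : ∃ j, amp j < ε := by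
  obtain ⟨j, hj⟩ := exists_pow_lt_of_lt_one hε (by norm_num : (2 : ℝ)⁻¹ < 1)
  exact ⟨j, by rwa [amp, ← inv_pow]⟩

theorem summable_amp : Summable amp :=
  (summable_geometric_of_lt_one (by norm_num) (by norm_num : (2 : ℝ)⁻¹ < 1)).congr (inv_pow 2)

theorem height_pos (t : Node) : 0 < height t := by unfold height; positivity

theorem height_lt_one (t : Node) : height t < 1 := by
  have : ((t.2 : ℕ) : ℝ) + 1 ≤ 2 ^ t.1 := by exact_mod_cast t.2.isLt
  rw [height, div_lt_one (by positivity), pow_succ]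
  linarith

theorem hasSum_len : HasSum (fun t : Node => len t.1) (1 / 2) := by
  have hlevel (j : ℕ) : HasSum (fun _ : Fin (2 ^ j) => len j) (4⁻¹ * 2⁻¹ ^ j) := by
    convert hasSum_fintype (fun _ : Fin (2 ^ j) => len j) using 1
    simp only [len, Finset.sum_const, Finset.card_univ, Fintype.card_fin, nsmul_eq_mul]
    push_cast
    rw [pow_succ, inv_pow, show (4 : ℝ) ^ j = 2 ^ j * 2 ^ j by rw [← mul_pow]; norm_num]
    field_simp
  have hgeom : HasSum (fun j : ℕ => 4⁻¹ * 2⁻¹ ^ j) (1 / 2 : ℝ) := by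
    rw [show (1 / 2 : ℝ) = 4⁻¹ * (1 - 2⁻¹)⁻¹ by norm_num]
    exact (hasSum_geometric_of_lt_one (by norm_num) (by norm_num)).mul_left _
  exact hgeom.sigma_of_hasSum hlevel ((summable_sigma_of_nonneg fun t => (len_pos t.1).le).2
    ⟨fun j => (hlevel j).summable, by simpa only [(hlevel _).tsum_eq] using hgeom.summable⟩)

theorem summable_len : Summable fun t : Node => len t.1 := hasSum_len.summable

theorem min_amp_le_two_mul_abs_height_sub {t t' : Node} (h : t ≠ t') :
    min (amp t.1) (amp t'.1) ≤ 2 * |height t - height t'| := by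
  wlog hle : t.1 ≤ t'.1 generalizing t t'
  · rw [min_comm, abs_sub_comm]
    exact this h.symm (le_of_not_ge hle)
  obtain ⟨j, i⟩ := t
  obtain ⟨j', i'⟩ := t'
  obtain ⟨d, rfl⟩ := Nat.exists_eq_add_of_le hle
  have hne : (2 * (i : ℕ) + 1) * 2 ^ d ≠ 2 * (i' : ℕ) + 1 := by
    rcases d with _ | d
    · intro hii
      exact h (Sigma.ext rfl (heq_of_eq (Fin.ext (by simpa using hii))))
    · intro hii
      have h2 := congrArg (· % 2) hii
      simp only [pow_succ, ← mul_assoc, Nat.mul_mod_left] at h2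
      omega
  set A := (2 * (i : ℕ) + 1) * 2 ^ d
  set B := 2 * (i' : ℕ) + 1
  have hone : (1 : ℝ) ≤ |(A : ℝ) - B| := by
    have : (1 : ℤ) ≤ |(A : ℤ) - B| := Int.one_le_abs (sub_ne_zero.2 (by exact_mod_cast hne))
    exact_mod_cast this
  have hdiff : height ⟨j, i⟩ - height ⟨j + d, i'⟩ = ((A : ℝ) - B) / 2 ^ (j + d + 1) := by
    simp only [height, A, B]
    push_cast
    rw [show j + d + 1 = j + 1 + d by ring, pow_add]
    field_simp
    ring
  rw [hdiff, abs_div, abs_of_pos (by positivity : (0 : ℝ) < 2 ^ (j + d + 1))]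
  calc min (amp j) (amp (j + d)) ≤ amp (j + d) := min_le_right _ _
    _ = 2 * (1 / 2 ^ (j + d + 1)) := by rw [amp, pow_succ]; field_simp
    _ ≤ _ := by gcongr

theorem height_injective : Function.Injective height := fun t t' h => by
  by_contra hne
  have := min_amp_le_two_mul_abs_height_sub hne
  rw [h, sub_self, abs_zero, mul_zero] at this
  exact this.not_gt (lt_min (amp_pos _) (amp_pos _))

noncomputable def shift (x : ℝ) : ℝ := ∑' t : Node, if height t < x then len t.1 else 0

theorem summable_shift (x : ℝ) : Summable fun t : Node => if height t < x then len t.1 else 0 :=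
  summable_len.of_nonneg_of_le (fun t => by split_ifs <;> simp [(len_pos _).le])
    (fun t => by split_ifs <;> simp [(len_pos _).le])

theorem shift_nonneg (x : ℝ) : 0 ≤ shift x :=
  tsum_nonneg fun t => by split_ifs <;> simp [(len_pos _).le]

theorem shift_le_tsum_len (x : ℝ) : shift x ≤ ∑' t : Node, len t.1 :=
  (summable_shift x).tsum_le_tsum (fun t => by split_ifs <;> simp [(len_pos _).le]) summable_len

theorem shift_add_len_le {t : Node} {x y : ℝ} (hx : x ≤ height t) (hy : height t < y) :
    shift x + len t.1 ≤ shift y := by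
  have hsum := (summable_shift x).add (hasSum_ite_eq t (len t.1)).summable
  calc shift x + len t.1
      = ∑' s : Node, ((if height s < x then len s.1 else 0) + if s = t then len t.1 else 0) := by
        rw [(summable_shift x).tsum_add (hasSum_ite_eq t _).summable, tsum_ite_eq]; rfl
    _ ≤ shift y := hsum.tsum_le_tsum (fun s => ?_) (summable_shift y)
  rcases eq_or_ne s t with rfl | hs
  · simp [hx.not_gt, hy]
  · simp only [hs, if_false, add_zero]
    split_ifs <;> first | linarith | simp [(len_pos _).le]

-- The plateau of `t` comes after those of all lower nodes, so that `stair = height t` on it.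
noncomputable def start (t : Node) : ℝ := height t + shift (height t)

def plateau (t : Node) : Set ℝ := Icc (start t) (start t + len t.1)

theorem start_add_len_add_le {t t' : Node} (h : height t < height t') :
    start t + len t.1 + (height t' - height t) ≤ start t' := by
  unfold start
  linarith [shift_add_len_le le_rfl h]

theorem plateau_subset_Icc (t : Node) : plateau t ⊆ Icc 0 2 := by
  have h1 := shift_add_len_le (t := t) le_rfl (height_lt_one t)
  have h2 := shift_le_tsum_len 1
  rw [hasSum_len.tsum_eq] at h2
  have h3 := shift_nonneg (height t)
  have h4 := height_pos t
  exact Icc_subset_Icc (by unfold start; linarith) (by unfold start; linarith [height_lt_one t])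

theorem ramp_start_add {t : Node} {s : ℝ} (hs : 0 ≤ s) (hsl : s ≤ len t.1) (t' : Node) :
    ramp (start t') (len t'.1) (start t + s) =
      (if height t' < height t then len t'.1 else 0) + if t' = t then s else 0 := by
  rcases eq_or_ne t' t with rfl | hne
  · simp [ramp_add hs hsl]
  rw [if_neg hne, add_zero]
  rcases lt_or_gt_of_ne (height_injective.ne hne) with h | h
  · rw [if_pos h]
    exact ramp_of_ge (len_pos _).le (by linarith [start_add_len_add_le h])
  · rw [if_neg h.not_gt]
    exact ramp_of_le (len_pos _).le (by linarith [start_add_len_add_le h])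

theorem summable_ramp (x : ℝ) : Summable fun t : Node => ramp (start t) (len t.1) x :=
  summable_len.of_nonneg_of_le (fun _ => ramp_nonneg (len_pos _).le) fun _ => ramp_le

noncomputable def stair (x : ℝ) : ℝ := x - ∑' t : Node, ramp (start t) (len t.1) x

theorem stair_of_mem_plateau {t : Node} {z : ℝ} (hz : z ∈ plateau t) : stair z = height t := by
  obtain ⟨s, ⟨hs, hsl⟩, rfl⟩ : ∃ s ∈ Icc 0 (len t.1), start t + s = z :=
    ⟨z - start t, ⟨by linarith [hz.1], by linarith [hz.2]⟩, by ring⟩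
  have hsum : ∑' t', ramp (start t') (len t'.1) (start t + s) = shift (height t) + s := by
    simp_rw [ramp_start_add hs hsl]
    rw [(summable_shift _).tsum_add (hasSum_ite_eq t s).summable, tsum_ite_eq]
    rfl
  rw [stair, hsum, start]
  ring

theorem eq_of_mem_plateau {t t' : Node} {z : ℝ} (hz : z ∈ plateau t) (hz' : z ∈ plateau t') :
    t = t' :=
  height_injective ((stair_of_mem_plateau hz).symm.trans (stair_of_mem_plateau hz'))

theorem sum_ramp_sub_le (F : Finset Node) {x y : ℝ} (hxy : x ≤ y) :
    ∑ t ∈ F, (ramp (start t) (len t.1) y - ramp (start t) (len t.1) x) ≤ y - x := by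
  rw [Finset.sum_congr rfl fun t _ => ramp_sub_ramp (len_pos t.1).le hxy,
    ← measureReal_biUnion_finset ?_ (fun _ _ => measurableSet_Ioc.inter measurableSet_Ioc)
      fun _ _ => ((measure_mono inter_subset_left).trans_lt measure_Ioc_lt_top).ne]
  · calc _ ≤ volume.real (Ioc x y) :=
          measureReal_mono (iUnion₂_subset fun _ _ => inter_subset_left) measure_Ioc_lt_top.ne
      _ = y - x := by rw [Real.volume_real_Ioc, max_eq_left (sub_nonneg.2 hxy)]
  · intro t _ t' _ hne
    refine Set.disjoint_left.2 fun z hz hz' => hne (eq_of_mem_plateau (z := z) ?_ ?_)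
    · exact ⟨hz.2.1.le, hz.2.2⟩
    · exact ⟨hz'.2.1.le, hz'.2.2⟩

theorem lipschitzWith_stair : LipschitzWith 1 stair := by
  have key {x y : ℝ} (hxy : x ≤ y) : 0 ≤ stair y - stair x ∧ stair y - stair x ≤ y - x := by
    have hsub : stair y - stair x =
        (y - x) - ∑' t : Node, (ramp (start t) (len t.1) y - ramp (start t) (len t.1) x) := by
      rw [stair, stair, (summable_ramp y).tsum_sub (summable_ramp x)]
      ring
    have h0 : 0 ≤ ∑' t : Node, (ramp (start t) (len t.1) y - ramp (start t) (len t.1) x) :=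
      tsum_nonneg fun t => by rw [ramp_sub_ramp (len_pos t.1).le hxy]; exact measureReal_nonneg
    have h1 := ((summable_ramp y).sub (summable_ramp x)).tsum_le_of_sum_le
      fun F => sum_ramp_sub_le F hxy
    constructor <;> linarith
  refine LipschitzWith.of_dist_le_mul fun x y => ?_
  rw [NNReal.coe_one, one_mul, Real.dist_eq, Real.dist_eq]
  rcases le_total x y with h | h
  · obtain ⟨h0, h1⟩ := key h
    rw [abs_sub_comm, abs_of_nonneg h0, abs_sub_comm, abs_of_nonneg (by linarith)]
    exact h1
  · obtain ⟨h0, h1⟩ := key h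
    rw [abs_of_nonneg h0, abs_of_nonneg (by linarith)]
    exact h1

theorem abs_height_sub_le {t t' : Node} {z z' : ℝ} (hz : z ∈ plateau t) (hz' : z' ∈ plateau t') :
    |height t - height t'| ≤ |z - z'| := by
  rw [← stair_of_mem_plateau hz, ← stair_of_mem_plateau hz', ← Real.dist_eq, ← Real.dist_eq]
  simpa using lipschitzWith_stair.dist_le_mul z z'

noncomputable def wiggle (t : Node) (x : ℝ) : ℝ :=
  amp t.1 * (tent (start t + 3 * len t.1 / 4) (len t.1 / 4) x -
    tent (start t + len t.1 / 4) (len t.1 / 4) x)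

theorem continuous_wiggle (t : Node) : Continuous (wiggle t) :=
  continuous_const.mul (continuous_tent.sub continuous_tent)

theorem wiggle_of_notMem {t : Node} {x : ℝ} (hx : x ∉ plateau t) : wiggle t x = 0 := by
  have hl := len_pos t.1
  have hfar : len t.1 / 4 ≤ |x - (start t + 3 * len t.1 / 4)| ∧
      len t.1 / 4 ≤ |x - (start t + len t.1 / 4)| := by
    rcases not_and_or.1 hx with h | h <;> push Not at h
    · rw [abs_of_neg (by linarith), abs_of_neg (by linarith)]
      constructor <;> linarith
    · rw [abs_of_pos (by linarith), abs_of_pos (by linarith)]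
      constructor <;> linarith
  rw [wiggle, tent_of_le (by positivity) hfar.1, tent_of_le (by positivity) hfar.2, sub_zero,
    mul_zero]

theorem wiggle_of_mem_plateau_ne {t t' : Node} {x : ℝ} (hx : x ∈ plateau t) (h : t' ≠ t) :
    wiggle t' x = 0 :=
  wiggle_of_notMem fun hx' => h (eq_of_mem_plateau hx' hx)

theorem abs_wiggle_le (t : Node) (x : ℝ) : |wiggle t x| ≤ amp t.1 := by
  have hl := (len_pos t.1).le
  rw [wiggle, abs_mul, abs_of_pos (amp_pos _)]
  refine mul_le_of_le_one_right (amp_pos _).le (abs_sub_le_iff.2 ⟨?_, ?_⟩) <;>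
    linarith [tent_nonneg (m := start t + 3 * len t.1 / 4) (h := len t.1 / 4) (x := x),
      tent_nonneg (m := start t + len t.1 / 4) (h := len t.1 / 4) (x := x),
      tent_le_one (m := start t + 3 * len t.1 / 4) (x := x) (by positivity : 0 ≤ len t.1 / 4),
      tent_le_one (m := start t + len t.1 / 4) (x := x) (by positivity : 0 ≤ len t.1 / 4)]

theorem abs_wiggle_sub_le (t : Node) (x y : ℝ) :
    |wiggle t x - wiggle t y| ≤ 8 * amp t.1 / len t.1 * |x - y| := by
  have hl : 0 < len t.1 / 4 := by have := len_pos t.1; positivity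
  obtain ⟨h1l, h1r⟩ :=
    abs_le.1 (abs_tent_sub_le (m := start t + 3 * len t.1 / 4) (x := x) (y := y) hl)
  obtain ⟨h2l, h2r⟩ := abs_le.1 (abs_tent_sub_le (m := start t + len t.1 / 4) (x := x) (y := y) hl)
  rw [wiggle, wiggle, ← mul_sub, abs_mul, abs_of_pos (amp_pos _)]
  calc _ ≤ amp t.1 * (|x - y| / (len t.1 / 4) + |x - y| / (len t.1 / 4)) :=
        mul_le_mul_of_nonneg_left (abs_le.2 ⟨by linarith, by linarith⟩) (amp_pos _).le
    _ = 8 * amp t.1 / len t.1 * |x - y| := by field_simp; ring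

theorem wiggle_start_add_quarter (t : Node) : wiggle t (start t + len t.1 / 4) = -amp t.1 := by
  have hl := len_pos t.1
  rw [wiggle, tent_self, tent_of_le (by positivity) (by rw [abs_of_neg (by linarith)]; linarith)]
  ring

theorem wiggle_start_add_three_quarter (t : Node) :
    wiggle t (start t + 3 * len t.1 / 4) = amp t.1 := by
  have hl := len_pos t.1
  rw [wiggle, tent_self, tent_of_le (by positivity) (by rw [abs_of_pos (by linarith)]; linarith)]
  ring

noncomputable def wiggleSum (x : ℝ) : ℝ := ∑' j, ∑ i : Fin (2 ^ j), wiggle ⟨j, i⟩ x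

theorem abs_sum_wiggle_le (j : ℕ) (x : ℝ) : |∑ i : Fin (2 ^ j), wiggle ⟨j, i⟩ x| ≤ amp j := by
  by_cases hx : ∃ i, x ∈ plateau ⟨j, i⟩
  · obtain ⟨i, hi⟩ := hx
    rw [Finset.sum_eq_single i (fun i' _ hne => wiggle_of_mem_plateau_ne hi (by simpa using hne))
      (by simp)]
    exact abs_wiggle_le _ x
  · push Not at hx
    rw [Finset.sum_eq_zero fun i _ => wiggle_of_notMem (hx i), abs_zero]
    exact (amp_pos j).le

theorem continuous_wiggleSum : Continuous wiggleSum :=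
  continuous_tsum (fun j => continuous_finsetSum _ fun i _ => continuous_wiggle _) summable_amp
    fun j x => by rw [Real.norm_eq_abs]; exact abs_sum_wiggle_le j x

theorem wiggleSum_of_mem {t : Node} {x : ℝ} (hx : x ∈ plateau t) : wiggleSum x = wiggle t x := by
  rw [wiggleSum, tsum_eq_single t.1 fun j hj => Finset.sum_eq_zero fun i _ =>
      wiggle_of_mem_plateau_ne hx fun h => hj (congrArg Sigma.fst h),
    Finset.sum_eq_single t.2 (fun i _ hi => wiggle_of_mem_plateau_ne hx fun h =>
      hi (eq_of_heq (Sigma.ext_iff.1 h).2)) (by simp)]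

theorem wiggleSum_of_forall_notMem {x : ℝ} (hx : ∀ t, x ∉ plateau t) : wiggleSum x = 0 := by
  simp [wiggleSum, wiggle_of_notMem (hx _)]

noncomputable def zigzag (x : ℝ) : ℝ := stair x + wiggleSum x

theorem continuous_zigzag : Continuous zigzag :=
  lipschitzWith_stair.continuous.add continuous_wiggleSum

theorem zigzag_of_mem {t : Node} {x : ℝ} (hx : x ∈ plateau t) :
    zigzag x = height t + wiggle t x := by
  rw [zigzag, stair_of_mem_plateau hx, wiggleSum_of_mem hx]

theorem exists_abs_sub_height_le {y : ℝ} (hy : y ∈ Icc (0 : ℝ) 1) (j : ℕ) :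
    ∃ i : Fin (2 ^ j), |y - height ⟨j, i⟩| ≤ amp j := by
  have hN : (0 : ℝ) < 2 ^ j := by positivity
  have hN1 := Nat.one_le_two_pow (n := j)
  set f := ⌊y * 2 ^ j⌋₊
  have hf1 : (f : ℝ) ≤ y * 2 ^ j := Nat.floor_le (mul_nonneg hy.1 hN.le)
  have hf2 : y * 2 ^ j < f + 1 := Nat.lt_floor_add_one _
  have hyN : y * 2 ^ j ≤ 2 ^ j := mul_le_of_le_one_left hN.le hy.2
  refine ⟨⟨min f (2 ^ j - 1), by omega⟩, ?_⟩
  have key : |2 * (y * 2 ^ j) - 2 * ((min f (2 ^ j - 1) : ℕ) : ℝ) - 1| ≤ 2 := by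
    rw [abs_le]
    rcases le_total f (2 ^ j - 1) with h | h
    · rw [min_eq_left h]
      constructor <;> linarith
    · have hcast : ((2 ^ j - 1 : ℕ) : ℝ) = 2 ^ j - 1 := by push_cast [Nat.cast_sub hN1]; ring
      have hfN : ((2 ^ j - 1 : ℕ) : ℝ) ≤ f := by exact_mod_cast h
      rw [min_eq_right h, hcast]
      rw [hcast] at hfN
      constructor <;> linarith
  have hdiff : y - height ⟨j, ⟨min f (2 ^ j - 1), by omega⟩⟩ =
      (2 * (y * 2 ^ j) - 2 * ((min f (2 ^ j - 1) : ℕ) : ℝ) - 1) / (2 * 2 ^ j) := by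
    simp only [height, pow_succ]
    field_simp
    ring
  rw [hdiff, abs_div, abs_of_pos (by positivity : (0 : ℝ) < 2 * 2 ^ j)]
  calc _ ≤ 2 / (2 * 2 ^ j) := by gcongr
    _ = amp j := by rw [amp]; field_simp

theorem exists_mem_plateau_zigzag_eq {y : ℝ} (hy : y ∈ Icc (0 : ℝ) 1) (j : ℕ) :
    ∃ i : Fin (2 ^ j), ∃ x ∈ plateau ⟨j, i⟩, zigzag x = y := by
  obtain ⟨i, hi⟩ := exists_abs_sub_height_le hy j
  set t : Node := ⟨j, i⟩
  have hl := len_pos j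
  have hsub : Icc (start t + len j / 4) (start t + 3 * len j / 4) ⊆ plateau t :=
    Icc_subset_Icc (by linarith) (by linarith)
  have hlo : zigzag (start t + len j / 4) = height t - amp j := by
    rw [zigzag_of_mem (hsub (left_mem_Icc.2 (by linarith))), wiggle_start_add_quarter]
    ring
  have hhi : zigzag (start t + 3 * len j / 4) = height t + amp j := by
    rw [zigzag_of_mem (hsub (right_mem_Icc.2 (by linarith))), wiggle_start_add_three_quarter]
  have hy' : y ∈ Icc (zigzag (start t + len j / 4)) (zigzag (start t + 3 * len j / 4)) := by
    rw [hlo, hhi]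
    constructor <;> linarith [(abs_le.1 hi).1, (abs_le.1 hi).2]
  obtain ⟨x, hx, hxy⟩ :=
    intermediate_value_Icc (by linarith) continuous_zigzag.continuousOn hy'
  exact ⟨i, x, hsub hx, hxy⟩

noncomputable def zigzagUnit (u : ℝ) : ℝ := projIcc 0 1 zero_le_one (zigzag (2 * u))

theorem continuous_zigzagUnit : Continuous zigzagUnit :=
  continuous_subtype_val.comp
    (continuous_projIcc.comp (continuous_zigzag.comp (continuous_const.mul continuous_id)))

theorem mapsTo_zigzagUnit : MapsTo zigzagUnit (Icc 0 1) (Icc 0 1) := fun _ _ => Subtype.prop _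

theorem infinite_Icc_inter_preimage_zigzagUnit {y : ℝ} (hy : y ∈ Icc (0 : ℝ) 1) :
    (Icc 0 1 ∩ zigzagUnit ⁻¹' {y}).Infinite := by
  choose i x hx hxy using exists_mem_plateau_zigzag_eq hy
  refine Set.infinite_of_injective_forall_mem (f := fun j => x j / 2) (fun j j' h => ?_) fun j => ?_
  · have hxx : x j = x j' := by simpa using h
    exact congrArg Sigma.fst (eq_of_mem_plateau (hx j) (hxx ▸ hx j'))
  · have := plateau_subset_Icc _ (hx j)
    refine ⟨⟨by linarith [this.1], by linarith [this.2]⟩, ?_⟩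
    simp [zigzagUnit, mul_div_cancel₀, hxy, projIcc_of_mem _ hy]

def IsGoodRadius (x r : ℝ) : Prop :=
  ∀ t, x ∉ plateau t → (plateau t ∩ closedBall x r).Nonempty → amp t.1 ≤ 8 * r

theorem frequently_isGoodRadius (x : ℝ) : ∃ᶠ r in 𝓝[>] 0, IsGoodRadius x r := by
  rw [(nhdsGT_basis 0).frequently_iff]
  intro ε hε
  by_cases hnear : ∃ t', x ∉ plateau t' ∧ (plateau t' ∩ closedBall x (amp t'.1 / 8)).Nonempty ∧
      amp t'.1 < 8 * ε
  · obtain ⟨t', -, ⟨z', hz'⟩, hε'⟩ := hnear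
    have ha := amp_pos t'.1
    refine ⟨amp t'.1 / 8, ⟨by positivity, by linarith⟩, fun t _ ⟨z, hz⟩ => ?_⟩
    by_contra! hbig
    have hsep := min_amp_le_two_mul_abs_height_sub (t := t) (t' := t') (by rintro rfl; linarith)
    rw [min_eq_right (by linarith)] at hsep
    have hzz : |z - z'| ≤ amp t'.1 / 8 + amp t'.1 / 8 := by
      rw [mem_inter_iff, mem_closedBall, Real.dist_eq] at hz' hz
      exact (abs_sub_le z x z').trans (add_le_add hz.2 (by rw [abs_sub_comm]; exact hz'.2))
    linarith [abs_height_sub_le hz.1 hz'.1]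
  · push Not at hnear
    obtain ⟨J, hJ⟩ := exists_amp_lt (by positivity : 0 < 8 * ε)
    let F : Finset Node := (Finset.range J).sigma fun _ => Finset.univ
    have hfar : ∀ᶠ r in 𝓝[>] 0, ∀ t ∈ F, x ∉ plateau t → Disjoint (closedBall x r) (plateau t) :=
      (eventually_all_finset F).2 fun t _ => by
        by_cases hx : x ∈ plateau t
        · exact Eventually.of_forall fun _ h => absurd hx h
        · exact (eventually_disjoint_closedBall isClosed_Icc hx).mono fun _ h _ => h
    obtain ⟨r, ⟨hdisj, hrε⟩, hr⟩ :=
      ((hfar.and (Ioo_mem_nhdsGT hε)).and self_mem_nhdsWithin).exists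
    refine ⟨r, ⟨hr, hrε.2⟩, fun t hx ⟨z, hz⟩ => ?_⟩
    by_contra! hbig
    have h8 := hnear t hx ⟨z, hz.1, closedBall_subset_closedBall (by linarith) hz.2⟩
    have htF : t ∈ F := by
      simp only [F, Finset.mem_sigma, Finset.mem_range, Finset.mem_univ, and_true]
      by_contra! hJt
      linarith [amp_anti hJt]
    exact Set.disjoint_left.1 (hdisj t htF hx) hz.2 hz.1

theorem exists_forall_mem_plateau_eq (x : ℝ) : ∃ t₀ : Node, ∀ t, x ∈ plateau t → t = t₀ := by
  by_cases h : ∃ t₀, x ∈ plateau t₀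
  · obtain ⟨t₀, h₀⟩ := h
    exact ⟨t₀, fun t ht => eq_of_mem_plateau ht h₀⟩
  · push Not at h
    exact ⟨⟨0, 0⟩, fun t ht => absurd ht (h t)⟩

theorem abs_wiggleSum_sub_wiggle_le {x r y : ℝ} {t₀ : Node} (hr : IsGoodRadius x r)
    (ht₀ : ∀ t, x ∈ plateau t → t = t₀) (hy : y ∈ closedBall x r) :
    |wiggleSum y - wiggle t₀ y| ≤ 8 * r := by
  have hr0 : 0 ≤ r := dist_nonneg.trans hy
  by_cases hy' : ∃ t, y ∈ plateau t
  · obtain ⟨t, ht⟩ := hy'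
    rw [wiggleSum_of_mem ht]
    rcases eq_or_ne t t₀ with rfl | hne
    · rw [sub_self, abs_zero]
      positivity
    · rw [wiggle_of_mem_plateau_ne ht hne.symm, sub_zero]
      exact (abs_wiggle_le t y).trans (hr t (fun hx => hne (ht₀ t hx)) ⟨y, ht, hy⟩)
  · push Not at hy'
    rw [wiggleSum_of_forall_notMem hy', wiggle_of_notMem (hy' t₀), sub_zero, abs_zero]
    positivity

theorem lowerLipschitzAt_zigzag (x : ℝ) : LowerLipschitzAt zigzag x := by
  obtain ⟨t₀, ht₀⟩ := exists_forall_mem_plateau_eq x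
  set L := 8 * amp t₀.1 / len t₀.1
  have hL : 0 ≤ L := by have := amp_pos t₀.1; have := len_pos t₀.1; positivity
  refine ⟨(1 + L + 16).toNNReal, (frequently_isGoodRadius x).mono fun r hr y hy => ?_⟩
  have hr0 : 0 ≤ r := dist_nonneg.trans hy
  have hyx : |y - x| ≤ r := (Real.dist_eq y x).symm.trans_le hy
  have h1 : |stair y - stair x| ≤ r := by
    have := lipschitzWith_stair.dist_le_mul y x
    rw [Real.dist_eq, Real.dist_eq, NNReal.coe_one, one_mul] at this
    exact this.trans hyx
  have h2 : |wiggle t₀ y - wiggle t₀ x| ≤ L * r :=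
    (abs_wiggle_sub_le t₀ y x).trans (mul_le_mul_of_nonneg_left hyx hL)
  have h3 := abs_wiggleSum_sub_wiggle_le hr ht₀ hy
  have h4 := abs_wiggleSum_sub_wiggle_le hr ht₀ (mem_closedBall_self hr0)
  rw [mem_closedBall, Real.dist_eq, Real.coe_toNNReal _ (by positivity)]
  calc |zigzag y - zigzag x|
      = |(stair y - stair x) + (wiggle t₀ y - wiggle t₀ x) +
          ((wiggleSum y - wiggle t₀ y) - (wiggleSum x - wiggle t₀ x))| := by
        rw [zigzag, zigzag]; congr 1; ring
    _ ≤ |stair y - stair x| + |wiggle t₀ y - wiggle t₀ x| +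
          (|wiggleSum y - wiggle t₀ y| + |wiggleSum x - wiggle t₀ x|) :=
        (abs_add_three _ _ _).trans (add_le_add le_rfl (abs_sub _ _))
    _ ≤ r + L * r + (8 * r + 8 * r) := by gcongr
    _ = (1 + L + 16) * r := by ring

theorem lowerLipschitzAt_zigzagUnit (u : ℝ) : LowerLipschitzAt zigzagUnit u :=
  ((LipschitzWith.subtype_val _).comp (LipschitzWith.projIcc zero_le_one)).comp_lowerLipschitzAt
    ((lowerLipschitzAt_zigzag _).comp_const_mul two_pos)

end PlateauZigzag

open PlateauZigzag in
/-- For every `m = k ≥ 1` there is a continuous `f : [0,1]^m → [0,1]^k` with finite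
lower-scaled oscillation at every point, all of whose level sets are infinite. -/
theorem stmt2 (m k : ℕ) (hm : 1 ≤ m) (hmk : m = k) :
    ∃ f : (Fin m → ℝ) → (Fin k → ℝ),
      ContinuousOn f (Set.Icc 0 1) ∧
      Set.MapsTo f (Set.Icc 0 1) (Set.Icc 0 1) ∧
      (∀ x ∈ Set.Icc (0 : Fin m → ℝ) 1, lowerScaledOsc (Set.Icc 0 1) f x < ⊤) ∧
      (∀ y ∈ Set.Icc (0 : Fin k → ℝ) 1,
        (Set.Icc (0 : Fin m → ℝ) 1 ∩ f ⁻¹' {y}).Infinite) := by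
  subst hmk
  let i₀ : Fin m := ⟨0, hm⟩
  exact ⟨fun x => Function.update x i₀ (zigzagUnit (x i₀)),
    (continuous_id.update i₀ (continuous_zigzagUnit.comp (continuous_apply i₀))).continuousOn,
    mapsTo_update_Icc mapsTo_zigzagUnit i₀,
    fun x _ => ((lowerLipschitzAt_zigzagUnit _).update i₀).lowerScaledOsc_lt_top _,
    infinite_Icc_inter_preimage_update (fun _ => infinite_Icc_inter_preimage_zigzagUnit) i₀⟩
end

section
/- Let f : [0,1]^m → ℝ be a continuous function such that the lower-scaled oscillation l_f(x) is finite for every x ∈ [0,1]^m. Then the graph G_f([0,1]^m) = {(x, f(x)) : x ∈ [0,1]^m} ⊂ ℝ^{m+1} has σ-finite m-dimensional Hausdorff measure. -/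
/-!
Where `l_f(x) < N` there are arbitrarily small radii `r` with `|f y - f x| ≤ N r` on
`closedBall x r`, so the graph over that ball lies in `2N + 1` cells of size `r`. A Vitali
subfamily of such balls of radius `< δ` covers `{l_f < N}`, and the disjointness of the shrunken
balls inside an enlarged cube bounds `∑ r^m` by `6^m`. Hence the graph over `{l_f < N}` has
`H^m`-measure at most `(2N + 1) 12^m`, and the graph over the cube is the union of these pieces.
-/

open Set MeasureTheory Metric Filter
open scoped ENNReal NNReal Topology

theorem exists_dist_le_of_lowerScaledOsc_lt {E F : Type*} [PseudoMetricSpace E]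
    [PseudoMetricSpace F] {A : Set E} {f : E → F} {x : E} {c : ℝ≥0}
    (h : lowerScaledOsc A f x < c) {δ : ℝ} (hδ : 0 < δ) :
    ∃ r ∈ Ioo 0 δ, ∀ y ∈ A, dist y x ≤ r → dist (f y) (f x) ≤ c * r := by
  have hsmall : ∀ᶠ r : ℝ in 𝓝[>] 0, r ∈ Ioo 0 δ := Ioo_mem_nhdsGT hδ
  obtain ⟨r, hlt, hr⟩ :=
    ((frequently_lt_of_liminf_lt (by isBoundedDefault) h).and_eventually hsmall).exists
  refine ⟨r, hr, fun y hy hyx => ?_⟩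
  have hsup : ⨆ (y : E) (_ : y ∈ A) (_ : dist y x ≤ r), ENNReal.ofReal (dist (f y) (f x))
      < ENNReal.ofReal (c * r) := by
    rwa [ENNReal.div_lt_iff (Or.inl (by simp [hr.1])) (Or.inl ENNReal.ofReal_ne_top),
      ← ENNReal.ofReal_coe_nnreal, ← ENNReal.ofReal_mul c.coe_nonneg] at hlt
  exact ((ENNReal.ofReal_lt_ofReal_iff_of_nonneg dist_nonneg).1
    ((le_iSup₂_of_le y hy (le_iSup_of_le (f := fun _ => _) hyx le_rfl)).trans_lt hsup)).le

theorem exists_fin_mem_Icc_add_mul {a y r : ℝ} (hr : 0 < r) {n : ℕ} (hay : a ≤ y)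
    (hy : y < a + n * r) : ∃ k : Fin n, y ∈ Icc (a + k * r) (a + k * r + r) := by
  have hq : 0 ≤ (y - a) / r := div_nonneg (sub_nonneg.2 hay) hr.le
  refine ⟨⟨⌊(y - a) / r⌋₊, (Nat.floor_lt hq).2 ((div_lt_iff₀ hr).2 (by linarith))⟩, ?_, ?_⟩
  · have := (le_div_iff₀ hr).1 (Nat.floor_le hq)
    linarith
  · have := (div_lt_iff₀ hr).1 (Nat.lt_floor_add_one ((y - a) / r))
    linarith

def columnCell {X : Type*} [PseudoMetricSpace X] (b : X) (r c : ℝ) (k : ℕ) : Set (X × ℝ) :=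
  closedBall b r ×ˢ Icc (c + k * r) (c + k * r + r)

theorem ediam_columnCell_le {X : Type*} [PseudoMetricSpace X] (b : X) {r : ℝ} (hr : 0 ≤ r)
    (c : ℝ) (k : ℕ) : ediam (columnCell b r c k) ≤ ENNReal.ofReal (2 * r) := by
  refine ediam_le_of_forall_dist_le fun p hp q hq => ?_
  rw [Prod.dist_eq]
  refine max_le ?_ ?_
  · calc dist p.1 q.1 ≤ dist p.1 b + dist q.1 b := dist_triangle_right _ _ _
      _ ≤ r + r := add_le_add hp.1 hq.1
      _ = 2 * r := by ring
  · linarith [Real.dist_le_of_mem_Icc hp.2 hq.2]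

section UnitCube

variable {ι : Type*} [Fintype ι]

theorem closedBall_subset_Icc_of_mem_Icc {b : ι → ℝ} (hb : b ∈ Icc 0 1) {ρ : ℝ} (hρ : ρ ≤ 1) :
    closedBall b ρ ⊆ Icc (-1) 2 := by
  intro y hy
  have hcoord : ∀ i, -1 ≤ y i ∧ y i ≤ 2 := fun i => by
    have hyb := abs_le.1 ((Real.dist_eq _ _).symm.trans_le
      ((dist_le_pi_dist y b i).trans (mem_closedBall.1 hy)))
    have h0 : 0 ≤ b i := hb.1 i
    have h1 : b i ≤ 1 := hb.2 i
    constructor <;> linarith [hyb.1, hyb.2]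
  exact ⟨fun i => (hcoord i).1, fun i => (hcoord i).2⟩

theorem tsum_ofReal_two_mul_pow_le_of_pairwiseDisjoint {u : Set (ι → ℝ)} (hu : u.Countable)
    (hu01 : u ⊆ Icc 0 1) {ρ : (ι → ℝ) → ℝ} (hρ : ∀ b ∈ u, 0 ≤ ρ b ∧ ρ b ≤ 1)
    (hdisj : u.PairwiseDisjoint fun b => closedBall b (ρ b)) :
    ∑' b : u, ENNReal.ofReal (2 * ρ b) ^ Fintype.card ι ≤ 3 ^ Fintype.card ι := by
  calc ∑' b : u, ENNReal.ofReal (2 * ρ b) ^ Fintype.card ι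
      = ∑' b : u, volume (closedBall (b : ι → ℝ) (ρ b)) := by
        refine tsum_congr fun b => ?_
        rw [Real.volume_pi_closedBall _ (hρ b b.2).1,
          ENNReal.ofReal_pow (mul_nonneg zero_le_two (hρ b b.2).1)]
    _ = volume (⋃ b ∈ u, closedBall b (ρ b)) :=
        (measure_biUnion hu hdisj fun _ _ => measurableSet_closedBall).symm
    _ ≤ volume (Icc (-1) 2 : Set (ι → ℝ)) :=
        measure_mono (iUnion₂_subset fun b hb =>
          closedBall_subset_Icc_of_mem_Icc (hu01 hb) (hρ b hb).2)
    _ = 3 ^ Fintype.card ι := by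
        rw [Real.volume_Icc_pi]
        norm_num

theorem exists_countable_closedBall_cover_tsum_pow_le {A : Set (ι → ℝ)} (hA : A ⊆ Icc 0 1)
    {r : (ι → ℝ) → ℝ} (hr : ∀ x ∈ A, 0 < r x ∧ r x ≤ 4) :
    ∃ u ⊆ A, u.Countable ∧ A ⊆ ⋃ b ∈ u, closedBall b (r b) ∧
      ∑' b : u, ENNReal.ofReal (r b) ^ Fintype.card ι ≤ 6 ^ Fintype.card ι := by
  obtain ⟨u, huA, hdisj, hcover⟩ :=
    Vitali.exists_disjoint_subfamily_covering_enlargement_closedBall A id (fun x => r x / 4) 1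
      (fun x hx => by linarith [hr x hx]) 4 (by norm_num)
  have hρ : ∀ b ∈ u, 0 ≤ r b / 4 ∧ r b / 4 ≤ 1 := fun b hb => by
    constructor <;> linarith [hr b (huA hb)]
  have hu : u.Countable := hdisj.countable_of_nonempty_interior fun b hb =>
    (nonempty_ball.2 (by linarith [hr b (huA hb)])).mono ball_subset_interior_closedBall
  refine ⟨u, huA, hu, fun x hx => ?_, ?_⟩
  · obtain ⟨b, hb, hsub⟩ := hcover x hx
    have hx' : x ∈ closedBall b (4 * (r b / 4)) :=
      hsub (mem_closedBall_self (by linarith [hr x hx]))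
    exact mem_biUnion hb (by rwa [mul_div_cancel₀ _ four_ne_zero] at hx')
  · have hsum := tsum_ofReal_two_mul_pow_le_of_pairwiseDisjoint hu (huA.trans hA) hρ hdisj
    calc ∑' b : u, ENNReal.ofReal (r b) ^ Fintype.card ι
        = ∑' b : u, 2 ^ Fintype.card ι * ENNReal.ofReal (2 * (r b / 4)) ^ Fintype.card ι := by
          refine tsum_congr fun b => ?_
          rw [← mul_pow, ← ENNReal.ofReal_ofNat 2, ← ENNReal.ofReal_mul zero_le_two]
          ring_nf
      _ ≤ 2 ^ Fintype.card ι * 3 ^ Fintype.card ι := by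
          rw [ENNReal.tsum_mul_left]
          gcongr
      _ = 6 ^ Fintype.card ι := by
          rw [← mul_pow]
          norm_num

theorem exists_countable_graph_cover {A : Set (ι → ℝ)} (hA : A ⊆ Icc 0 1) {f : (ι → ℝ) → ℝ}
    {N : ℕ} {δ : ℝ} (hδ : δ ≤ 4)
    (hosc : ∀ x ∈ A, ∃ r ∈ Ioo 0 δ, ∀ y ∈ A, dist y x ≤ r → dist (f y) (f x) ≤ N * r) :
    ∃ u ⊆ A, ∃ r : (ι → ℝ) → ℝ, u.Countable ∧ (∀ b ∈ u, r b ∈ Ioo 0 δ) ∧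
      (fun x => (x, f x)) '' A ⊆
        ⋃ p : u × Fin (2 * N + 1), columnCell (p.1 : ι → ℝ) (r p.1) (f p.1 - N * r p.1) p.2 ∧
      ∑' b : u, ENNReal.ofReal (r b) ^ Fintype.card ι ≤ 6 ^ Fintype.card ι := by
  choose! r hr hrosc using hosc
  obtain ⟨u, huA, hu, hcover, hsum⟩ := exists_countable_closedBall_cover_tsum_pow_le hA
    (r := r) fun x hx => ⟨(hr x hx).1, (hr x hx).2.le.trans hδ⟩
  refine ⟨u, huA, r, hu, fun b hb => hr b (huA hb), ?_, hsum⟩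
  rintro _ ⟨x, hx, rfl⟩
  obtain ⟨b, hb, hxb⟩ := mem_iUnion₂.1 (hcover hx)
  have hrb := (hr b (huA hb)).1
  have hfx := abs_le.1 ((Real.dist_eq _ _).symm.trans_le
    (hrosc b (huA hb) x hx (mem_closedBall.1 hxb)))
  obtain ⟨k, hk⟩ := exists_fin_mem_Icc_add_mul (n := 2 * N + 1) hrb
    (a := f b - N * r b) (y := f x) (by linarith [hfx.1]) (by push_cast; linarith [hfx.2])
  exact mem_iUnion.2 ⟨(⟨b, hb⟩, k), hxb, hk⟩

theorem hausdorffMeasure_graph_le {A : Set (ι → ℝ)} (hA : A ⊆ Icc 0 1) {f : (ι → ℝ) → ℝ}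
    {N : ℕ} (hosc : ∀ x ∈ A, ∀ δ > 0,
      ∃ r ∈ Ioo 0 δ, ∀ y ∈ A, dist y x ≤ r → dist (f y) (f x) ≤ N * r) :
    μH[Fintype.card ι] ((fun x => (x, f x)) '' A) ≤ (2 * N + 1) * 12 ^ Fintype.card ι := by
  set d := Fintype.card ι
  have hscale (n : ℕ) : (0 : ℝ) < 1 / (n + 1) ∧ 1 / ((n : ℝ) + 1) ≤ 4 :=
    ⟨Nat.one_div_pos_of_nat, Nat.one_div_le_one_div (Nat.zero_le n) |>.trans (by norm_num)⟩
  choose u huA r hu hr hcover hsum using fun n : ℕ =>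
    exists_countable_graph_cover hA (hscale n).2 fun x hx => hosc x hx _ (hscale n).1
  have := fun n => (hu n).to_subtype
  let t (n : ℕ) (p : u n × Fin (2 * N + 1)) : Set ((ι → ℝ) × ℝ) :=
    columnCell (p.1 : ι → ℝ) (r n p.1) (f p.1 - N * r n p.1) p.2
  have hdiam (n : ℕ) (p : u n × Fin (2 * N + 1)) :
      ediam (t n p) ≤ ENNReal.ofReal (2 * r n p.1) :=
    ediam_columnCell_le _ (hr n p.1 p.1.2).1.le _ _
  have hbound (n : ℕ) : ∑' p, ediam (t n p) ^ (d : ℝ) ≤ (2 * N + 1) * 12 ^ d :=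
    calc ∑' p, ediam (t n p) ^ (d : ℝ)
        ≤ ∑' p : u n × Fin (2 * N + 1), 2 ^ d * ENNReal.ofReal (r n p.1) ^ d := by
          refine ENNReal.tsum_le_tsum fun p => ?_
          rw [ENNReal.rpow_natCast, ← mul_pow, ← ENNReal.ofReal_ofNat 2,
            ← ENNReal.ofReal_mul zero_le_two]
          gcongr
          exact hdiam n p
      _ = (2 * N + 1) * 2 ^ d * ∑' b : u n, ENNReal.ofReal (r n b) ^ d := by
          rw [ENNReal.tsum_prod', ← ENNReal.tsum_mul_left]
          refine tsum_congr fun b => ?_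
          simp [tsum_fintype, mul_assoc]
      _ ≤ (2 * N + 1) * 2 ^ d * 6 ^ d := by gcongr; exact hsum n
      _ = (2 * N + 1) * 12 ^ d := by
          rw [mul_assoc, ← mul_pow]
          norm_num
  have hlim : Tendsto (fun n : ℕ => ENNReal.ofReal (2 * (1 / (n + 1)))) atTop (𝓝 0) := by
    simpa using ENNReal.tendsto_ofReal (tendsto_one_div_add_atTop_nhds_zero_nat.const_mul 2)
  refine (Measure.hausdorffMeasure_le_liminf_tsum _ _ _ hlim t
    (Eventually.of_forall fun n p => (hdiam n p).trans ?_)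
    (Eventually.of_forall hcover)).trans
    (liminf_le_of_frequently_le' (Frequently.of_forall hbound))
  gcongr
  exact (hr n p.1 p.1.2).2.le

end UnitCube

theorem stmt4_general (m : ℕ) (f : (Fin m → ℝ) → ℝ)
    (hl : ∀ x ∈ Set.Icc (0 : Fin m → ℝ) 1, lowerScaledOsc (Set.Icc 0 1) f x < ⊤) :
    ∃ s : ℕ → Set ((Fin m → ℝ) × ℝ),
      ((fun x => (x, f x)) '' Set.Icc (0 : Fin m → ℝ) 1 ⊆ ⋃ n, s n) ∧
      (∀ n, μH[(m : ℝ)] (s n) < ⊤) := by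
  set S : ℕ → Set (Fin m → ℝ) := fun n => {x ∈ Icc 0 1 | lowerScaledOsc (Icc 0 1) f x < n}
  refine ⟨fun n => (fun x => (x, f x)) '' S n, ?_, fun n => ?_⟩
  · rintro _ ⟨x, hx, rfl⟩
    obtain ⟨n, hn⟩ := ENNReal.exists_nat_gt (hl x hx).ne
    exact mem_iUnion.2 ⟨n, x, ⟨hx, hn⟩, rfl⟩
  · have hosc (x : Fin m → ℝ) (hx : x ∈ S n) (δ : ℝ) (hδ : δ > 0) :
        ∃ r ∈ Ioo 0 δ, ∀ y ∈ S n, dist y x ≤ r → dist (f y) (f x) ≤ n * r := by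
      obtain ⟨r, hr, hr_osc⟩ :=
        exists_dist_le_of_lowerScaledOsc_lt (c := n) (by simpa using hx.2) hδ
      exact ⟨r, hr, fun y hy => by simpa using hr_osc y hy.1⟩
    have hH := hausdorffMeasure_graph_le (sep_subset _ _) hosc
    rw [Fintype.card_fin] at hH
    exact hH.trans_lt (by finiteness)

/-- If `f : [0,1]^m → ℝ` is continuous with finite lower-scaled oscillation at every
point, then the graph of `f` on `[0,1]^m` has σ-finite `H^m` measure in `ℝ^{m+1}`. -/
theorem stmt4 (m : ℕ) (f : (Fin m → ℝ) → ℝ)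
    (hf : ContinuousOn f (Set.Icc 0 1))
    (hl : ∀ x ∈ Set.Icc (0 : Fin m → ℝ) 1, lowerScaledOsc (Set.Icc 0 1) f x < ⊤) :
    ∃ s : ℕ → Set ((Fin m → ℝ) × ℝ),
      ((fun x => (x, f x)) '' Set.Icc (0 : Fin m → ℝ) 1 ⊆ ⋃ n, s n) ∧
      (∀ n, μH[(m : ℝ)] (s n) < ⊤) :=
  stmt4_general m f hl
end

section
/- Let f : [0,1]^m → ℝ be a continuous function such that the lower-scaled oscillation l_f(x) is finite for every x ∈ [0,1]^m. Then for every set H ⊂ [0,1]^m with H^m(H) = 0, the graph G_f(H) = {(x, f(x)) : x ∈ H} satisfies H^m(G_f(H)) = 0. -/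
/-!
Split `H` according to an integer bound `n > l_f(x)`. At a point of such a piece, there are
arbitrarily small radii `r` for which the graph over the `r`-ball has diameter at most
`2 max(1, n) r`, a bounded multiple of the `m`-th root of the volume of the ball. Since the piece
is Lebesgue-null, the Besicovitch covering theorem covers it by such balls, as small as we like,
of total volume at most `ε`; their graph images then witness `H^m(graph) ≤ (2 max(1, n))^m ε`.
-/

open Set MeasureTheory Metric Filter
open scoped ENNReal NNReal Topology

section GraphOscillation

variable {E F : Type*} [PseudoMetricSpace E] [PseudoMetricSpace F] {A s : Set E} {f : E → F}
  {x : E} {c : ℝ≥0∞}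

theorem frequently_iSup_edist_le_of_lowerScaledOsc_lt (h : lowerScaledOsc A f x < c) :
    ∃ᶠ r in 𝓝[>] (0 : ℝ),
      (⨆ (y : E) (_ : y ∈ A) (_ : dist y x ≤ r), ENNReal.ofReal (dist (f y) (f x))) ≤
        c * ENNReal.ofReal r := by
  refine ((frequently_lt_of_liminf_lt (by isBoundedDefault) h).and_eventually
    self_mem_nhdsWithin).mono fun r ⟨hlt, hr⟩ => ?_
  have hr : ENNReal.ofReal r ≠ 0 := by simpa using hr
  exact ((ENNReal.div_lt_iff (.inl hr) (.inl ENNReal.ofReal_ne_top)).1 hlt).le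

theorem ediam_graph_image_le (hs : s ⊆ A) {r : ℝ}
    (h : (⨆ (y : E) (_ : y ∈ A) (_ : dist y x ≤ r), ENNReal.ofReal (dist (f y) (f x))) ≤
      c * ENNReal.ofReal r) :
    ediam ((fun y => (y, f y)) '' (s ∩ closedBall x r)) ≤ 2 * max 1 c * ENNReal.ofReal r := by
  have hf : ∀ y ∈ s ∩ closedBall x r, edist (f y) (f x) ≤ c * ENNReal.ofReal r := fun y hy =>
    (edist_dist _ _).trans_le <| le_trans
      (le_iSup₂_of_le y (hs hy.1) (le_iSup_of_le (α := ℝ≥0∞) (mem_closedBall.1 hy.2) le_rfl)) h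
  have hx : ∀ y ∈ closedBall x r, edist y x ≤ ENNReal.ofReal r := fun y hy =>
    (edist_dist _ _).trans_le (ENNReal.ofReal_le_ofReal (mem_closedBall.1 hy))
  refine ediam_image_le_iff.2 fun y hy z hz => ?_
  rw [Prod.edist_eq, mul_assoc, two_mul]
  refine max_le ?_ ?_
  · calc edist y z ≤ edist y x + edist z x := edist_triangle_right _ _ _
      _ ≤ ENNReal.ofReal r + ENNReal.ofReal r := add_le_add (hx y hy.2) (hx z hz.2)
      _ ≤ _ := by gcongr <;> exact le_mul_of_one_le_left' (le_max_left _ _)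
  · calc edist (f y) (f z) ≤ edist (f y) (f x) + edist (f z) (f x) := edist_triangle_right _ _ _
      _ ≤ c * ENNReal.ofReal r + c * ENNReal.ofReal r := add_le_add (hf y hy) (hf z hz)
      _ ≤ _ := by gcongr <;> exact le_max_right _ _

theorem frequently_ediam_graph_image_le_of_lowerScaledOsc_lt (hs : s ⊆ A)
    (h : lowerScaledOsc A f x < c) :
    ∃ᶠ r in 𝓝[>] (0 : ℝ),
      ediam ((fun y => (y, f y)) '' (s ∩ closedBall x r)) ≤ 2 * max 1 c * ENNReal.ofReal r :=
  (frequently_iSup_edist_le_of_lowerScaledOsc_lt h).mono fun _ => ediam_graph_image_le hs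

end GraphOscillation

section BesicovitchCovering

variable {α X : Type*} [MetricSpace α] [SecondCountableTopology α] [MeasurableSpace α]
  [OpensMeasurableSpace α] [HasBesicovitchCovering α] [EMetricSpace X]
  (μ : Measure α) [SFinite μ] [μ.OuterRegular] {d : ℝ} {g : α → X} {s : Set α} {C : ℝ≥0∞}

theorem exists_countable_cover_image_tsum_ediam_rpow_le (hd : 0 ≤ d)
    (hμ : ∀ x r, 0 < r → ENNReal.ofReal r ^ d ≤ μ (closedBall x r)) (hs : μ s = 0)
    (hg : ∀ x ∈ s, ∃ᶠ r in 𝓝[>] 0, ediam (g '' (s ∩ closedBall x r)) ≤ C * ENNReal.ofReal r)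
    {δ : ℝ} (hδ : 0 < δ) :
    ∃ (t : Set α) (r : α → ℝ), t.Countable ∧ g '' s ⊆ ⋃ x ∈ t, g '' (s ∩ closedBall x (r x)) ∧
      (∀ x ∈ t, ediam (g '' (s ∩ closedBall x (r x))) ≤ C * ENNReal.ofReal δ) ∧
      ∑' x : t, ediam (g '' (s ∩ closedBall x (r x))) ^ d ≤ C ^ d * ENNReal.ofReal δ := by
  have hadm : ∀ x ∈ s, ∀ ε > 0, ((Ioo 0 δ ∩ {r | ediam (g '' (s ∩ closedBall x r)) ≤
      C * ENNReal.ofReal r}) ∩ Ioo 0 ε).Nonempty := fun x hx ε hε =>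
    ((hg x hx).and_eventually (Ioo_mem_nhdsGT (lt_min hε hδ))).exists.imp
      fun r ⟨hr, hr0, hrε⟩ => ⟨⟨⟨hr0, hrε.trans_le (min_le_right _ _)⟩, hr⟩, hr0,
        hrε.trans_le (min_le_left _ _)⟩
  obtain ⟨t, r, ht, -, htr, hcover, hsum⟩ :=
    Besicovitch.exists_closedBall_covering_tsum_measure_le μ (ENNReal.ofReal_pos.2 hδ).ne' _ s hadm
  have hdiam : ∀ x ∈ t, ediam (g '' (s ∩ closedBall x (r x))) ≤ C * ENNReal.ofReal (r x) :=
    fun x hx => (htr x hx).2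
  refine ⟨t, r, ht, ?_, fun x hx => (hdiam x hx).trans ?_, ?_⟩
  · rw [← image_iUnion₂, ← inter_iUnion₂]
    exact image_mono (subset_inter subset_rfl hcover)
  · exact mul_le_mul_right (ENNReal.ofReal_le_ofReal (htr x hx).1.2.le) C
  · calc ∑' x : t, ediam (g '' (s ∩ closedBall x (r x))) ^ d
        ≤ ∑' x : t, C ^ d * μ (closedBall x (r x)) := ENNReal.tsum_le_tsum fun x => ?_
      _ = C ^ d * ∑' x : t, μ (closedBall x (r x)) := ENNReal.tsum_mul_left
      _ ≤ C ^ d * ENNReal.ofReal δ := by grw [hsum, hs, zero_add]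
    grw [hdiam x x.2, ENNReal.mul_rpow_of_nonneg _ _ hd, hμ x (r x) (htr x x.2).1.1]

theorem hausdorffMeasure_image_eq_zero_of_frequently_ediam_le [MeasurableSpace X] [BorelSpace X]
    (hd : 0 ≤ d)
    (hμ : ∀ x r, 0 < r → ENNReal.ofReal r ^ d ≤ μ (closedBall x r)) (hs : μ s = 0) (hC : C ≠ ⊤)
    (hg : ∀ x ∈ s, ∃ᶠ r in 𝓝[>] 0, ediam (g '' (s ∩ closedBall x r)) ≤ C * ENNReal.ofReal r) :
    μH[d] (g '' s) = 0 := by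
  have hδ : ∀ k : ℕ, (0 : ℝ) < 1 / (k + 1) := fun k => by positivity
  choose t r ht hcover hdiam hsum using fun k =>
    exists_countable_cover_image_tsum_ediam_rpow_le μ hd hμ hs hg (hδ k)
  have : ∀ k, Countable (t k) := fun k => (ht k).to_subtype
  have hδ_lim : Tendsto (fun k : ℕ => ENNReal.ofReal (1 / (k + 1))) atTop (𝓝 0) := by
    simpa using ENNReal.tendsto_ofReal tendsto_one_div_add_atTop_nhds_zero_nat
  refine le_antisymm ?_ zero_le
  calc μH[d] (g '' s)
      ≤ liminf (fun k => ∑' x : t k, ediam (g '' (s ∩ closedBall x (r k x))) ^ d) atTop :=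
        Measure.hausdorffMeasure_le_liminf_tsum d _ _
          (by simpa using ENNReal.Tendsto.const_mul hδ_lim (.inr hC)) _
          (.of_forall fun k x => hdiam k x x.2) (.of_forall fun k => by simpa using hcover k)
    _ ≤ liminf (fun k : ℕ => C ^ d * ENNReal.ofReal (1 / (k + 1))) atTop :=
        liminf_le_liminf (.of_forall hsum)
    _ = 0 := by
        simpa using (ENNReal.Tendsto.const_mul hδ_lim
          (.inr (ENNReal.rpow_ne_top_of_nonneg hd hC))).liminf_eq

end BesicovitchCovering

theorem ofReal_rpow_card_le_volume_closedBall {ι : Type*} [Fintype ι] (x : ι → ℝ) {r : ℝ}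
    (hr : 0 < r) : ENNReal.ofReal r ^ (Fintype.card ι : ℝ) ≤ volume (closedBall x r) := by
  rw [Real.volume_pi_closedBall x hr.le, ENNReal.rpow_natCast, ← ENNReal.ofReal_pow hr.le]
  gcongr
  linarith

theorem stmt5_general (m : ℕ) (f : (Fin m → ℝ) → ℝ)
    (hl : ∀ x ∈ Set.Icc (0 : Fin m → ℝ) 1, lowerScaledOsc (Set.Icc 0 1) f x < ⊤) :
    ∀ H : Set (Fin m → ℝ), H ⊆ Set.Icc 0 1 → μH[(m : ℝ)] H = 0 →
      μH[(m : ℝ)] ((fun x => (x, f x)) '' H : Set ((Fin m → ℝ) × ℝ)) = 0 := by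
  intro H hH hH0
  have hμH : (μH[(m : ℝ)] : Measure (Fin m → ℝ)) = volume := by
    simpa using hausdorffMeasure_pi_real (ι := Fin m)
  rw [hμH] at hH0
  set level : ℕ → Set (Fin m → ℝ) := fun n => {x ∈ H | lowerScaledOsc (Icc 0 1) f x < n}
  have hH_eq : H = ⋃ n, level n := Subset.antisymm
    (fun x hx => mem_iUnion.2 ((ENNReal.exists_nat_gt (hl x (hH hx)).ne).imp fun _ => .intro hx))
    (iUnion_subset fun _ _ hx => hx.1)
  rw [hH_eq, image_iUnion]
  refine measure_iUnion_null fun n => ?_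
  refine hausdorffMeasure_image_eq_zero_of_frequently_ediam_le volume m.cast_nonneg
    (by simpa using ofReal_rpow_card_le_volume_closedBall (ι := Fin m))
    (measure_mono_null (fun x hx => hx.1) hH0) (C := 2 * max 1 (n : ℝ≥0∞)) (by finiteness)
    fun x hx => ?_
  exact frequently_ediam_graph_image_le_of_lowerScaledOsc_lt (fun y hy => hH hy.1) hx.2

/-- If `f : [0,1]^m → ℝ` is continuous with finite lower-scaled oscillation at every
point, then the graph of `f` over any `H^m`-null set `H ⊆ [0,1]^m` is `H^m`-null. -/
theorem stmt5 (m : ℕ) (f : (Fin m → ℝ) → ℝ)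
    (hf : ContinuousOn f (Set.Icc 0 1))
    (hl : ∀ x ∈ Set.Icc (0 : Fin m → ℝ) 1, lowerScaledOsc (Set.Icc 0 1) f x < ⊤) :
    ∀ H : Set (Fin m → ℝ), H ⊆ Set.Icc 0 1 → μH[(m : ℝ)] H = 0 →
      μH[(m : ℝ)] ((fun x => (x, f x)) '' H : Set ((Fin m → ℝ) × ℝ)) = 0 :=
  stmt5_general m f hl
end

section
/- Let m ≥ 1 and let f : [0,1]^m → ℝ be a continuous function such that the lower-scaled oscillation l_f(x) is finite for every x ∈ [0,1]^m. Then for Lebesgue-almost every y ∈ ℝ, the level set f⁻¹(y) has σ-finite (m−1)-dimensional Hausdorff measure. -/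
open Set MeasureTheory Metric Filter
open scoped ENNReal NNReal Topology

section Oscillation

variable {E F : Type*} [PseudoMetricSpace E] [PseudoMetricSpace F]

def oscLeSet (A : Set E) (f : E → F) (k : ℝ) : Set E :=
  {x ∈ A | ∃ᶠ r in 𝓝[>] 0, ∀ y ∈ A, dist y x ≤ r → dist (f y) (f x) ≤ k * r}

theorem exists_nat_mem_oscLeSet {A : Set E} {f : E → F} {x : E} (hx : x ∈ A)
    (h : lowerScaledOsc A f x < ⊤) :
    ∃ k : ℕ, x ∈ oscLeSet A f k := by
  obtain ⟨k, hk⟩ := ENNReal.exists_nat_gt h.ne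
  refine ⟨k, hx, ?_⟩
  refine ((frequently_lt_of_liminf_lt (by isBoundedDefault) hk).and_eventually
    self_mem_nhdsWithin).mono fun r ⟨hlt, hr⟩ y hy hyx => ?_
  rw [ENNReal.div_lt_iff (Or.inl (ENNReal.ofReal_pos.2 hr).ne')
    (Or.inl ENNReal.ofReal_ne_top)] at hlt
  have hy_lt := (le_iSup₂_of_le (f := fun y _ => ⨆ (_ : dist y x ≤ r),
    ENNReal.ofReal (dist (f y) (f x))) y hy (le_iSup_of_le hyx le_rfl)).trans_lt hlt
  rw [← ENNReal.ofReal_natCast, ← ENNReal.ofReal_mul (Nat.cast_nonneg k),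
    ENNReal.ofReal_lt_ofReal_iff'] at hy_lt
  exact hy_lt.1.le

theorem exists_disjoint_closedBall_cover_oscLeSet [TopologicalSpace.SeparableSpace E]
    (A : Set E) (f : E → F) (k : ℝ) {δ : ℝ} (hδ : 0 < δ) :
    ∃ (U : Set E) (r : E → ℝ), U.Countable ∧ U ⊆ A ∧ (∀ x ∈ U, 0 < r x ∧ r x ≤ δ) ∧
      U.PairwiseDisjoint (fun x => closedBall x (r x)) ∧
      oscLeSet A f k ⊆ ⋃ x ∈ U, closedBall x (5 * r x) ∧
      ∀ x ∈ U, ∀ y ∈ A, dist y x ≤ 5 * r x → dist (f y) (f x) ≤ k * (5 * r x) := by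
  have hR : ∀ x, ∃ R, x ∈ oscLeSet A f k → R ∈ Ioc 0 (5 * δ) ∧
      ∀ y ∈ A, dist y x ≤ R → dist (f y) (f x) ≤ k * R := by
    intro x
    by_cases hx : x ∈ oscLeSet A f k
    · obtain ⟨R, hR, hRδ⟩ :=
        (hx.2.and_eventually (Ioc_mem_nhdsGT (by positivity : (0 : ℝ) < 5 * δ))).exists
      exact ⟨R, fun _ => ⟨hRδ, hR⟩⟩
    · exact ⟨0, fun h => absurd h hx⟩
  choose R hR using hR
  -- `R x` is the radius of the fivefold enlarged Vitali ball, where the oscillation bound holds.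
  obtain ⟨U, hUS, hdisj, hcov⟩ :=
    Vitali.exists_disjoint_subfamily_covering_enlargement_closedBall (oscLeSet A f k) id
      (fun x => R x / 5) δ (fun x hx => by linarith [(hR x hx).1.2]) 5 (by norm_num)
  have hpos : ∀ x ∈ oscLeSet A f k, 0 < R x / 5 := fun x hx => by linarith [(hR x hx).1.1]
  refine ⟨U, fun x => R x / 5,
    hdisj.countable_of_nonempty_interior fun x hx =>
      ⟨x, mem_interior_iff_mem_nhds.2 (closedBall_mem_nhds x (hpos x (hUS hx)))⟩,
    fun x hx => (hUS hx).1, fun x hx => ⟨hpos x (hUS hx), by linarith [(hR x (hUS hx)).1.2]⟩,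
    hdisj, fun x hx => ?_, fun x hx => ?_⟩
  · obtain ⟨b, hb, hsub⟩ := hcov x hx
    exact mem_biUnion hb (hsub (mem_closedBall_self (hpos x hx).le))
  · simpa only [mul_div_cancel₀ (R x) (by norm_num : (5 : ℝ) ≠ 0)] using (hR x (hUS hx)).2

end Oscillation

theorem ediam_closedBall_le_ofReal {E : Type*} [PseudoMetricSpace E] (x : E) (R : ℝ) :
    ediam (closedBall x R) ≤ ENNReal.ofReal (2 * R) :=
  ediam_le_of_forall_dist_le fun a ha b hb => by
    linarith [dist_triangle_right a b x, mem_closedBall.1 ha, mem_closedBall.1 hb]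

/-- `(10 r)^d` bounds `diam B(x, 5r) ^ d`, and the sum runs over the `x ∈ U` whose enlarged ball
`B(x, 5r)` can meet `f⁻¹(y)` when `f` oscillates by at most `k * 5r` on it. -/
noncomputable def levelSetCoverSum {E : Type*} (U : Set E) (r : E → ℝ) (f : E → ℝ) (k : ℝ)
    (d : ℕ) (y : ℝ) : ℝ≥0∞ :=
  ∑' x : U, (Icc (f x - k * (5 * r x)) (f x + k * (5 * r x))).indicator
    (fun _ => ENNReal.ofReal (10 * r x) ^ d) y

theorem measurable_levelSetCoverSum {E : Type*} {U : Set E} [Countable U] (r : E → ℝ)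
    (f : E → ℝ) (k : ℝ) (d : ℕ) : Measurable (levelSetCoverSum U r f k d) :=
  Measurable.tsum fun _ => measurable_const.indicator measurableSet_Icc

theorem hausdorffMeasure_inter_preimage_le_liminf {E : Type*} [MetricSpace E]
    [MeasurableSpace E] [BorelSpace E] (d : ℕ) {S : Set E} {f : E → ℝ} {k : ℝ} {U : ℕ → Set E}
    [∀ n, Countable (U n)] {r : ℕ → E → ℝ} {δ : ℕ → ℝ} (hδ : Tendsto δ atTop (𝓝 0))
    (hr : ∀ n, ∀ x ∈ U n, r n x ≤ δ n) (hcov : ∀ n, S ⊆ ⋃ x ∈ U n, closedBall x (5 * r n x))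
    (hosc : ∀ n, ∀ x ∈ U n, ∀ y ∈ S, dist y x ≤ 5 * r n x → dist (f y) (f x) ≤ k * (5 * r n x))
    (y : ℝ) :
    μH[d] (S ∩ f ⁻¹' {y}) ≤ liminf (fun n => levelSetCoverSum (U n) (r n) f k d y) atTop := by
  set I : ℕ → E → Set ℝ := fun n x => Icc (f x - k * (5 * r n x)) (f x + k * (5 * r n x))
  have hdiam : ∀ n x, ediam (closedBall x (5 * r n x)) ≤ ENNReal.ofReal (10 * r n x) :=
    fun n x => (ediam_closedBall_le_ofReal x _).trans_eq (by ring_nf)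
  have hδ' : Tendsto (fun n => ENNReal.ofReal (10 * δ n)) atTop (𝓝 0) := by
    simpa using ENNReal.tendsto_ofReal (hδ.const_mul 10)
  have hcover : ∀ n, S ∩ f ⁻¹' {y} ⊆
      ⋃ i : {x : U n // y ∈ I n x}, closedBall i.1.1 (5 * r n i.1) := by
    intro n x hx
    obtain ⟨c, hc, hxc⟩ := mem_iUnion₂.1 (hcov n hx.1)
    have hfc := abs_sub_le_iff.1 (hosc n c hc x hx.1 hxc)
    rw [← hx.2]
    refine mem_iUnion.2 ⟨⟨⟨c, hc⟩, ?_⟩, hxc⟩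
    constructor <;> linarith
  have hH := Measure.hausdorffMeasure_le_liminf_tsum (ι := fun n => {x : U n // y ∈ I n x}) d
    (S ∩ f ⁻¹' {y}) _ hδ'
    (fun n i => closedBall i.1 (5 * r n i.1))
    (Eventually.of_forall fun n i => (hdiam n i.1).trans
      (ENNReal.ofReal_le_ofReal (by linarith [hr n i.1 i.1.2]))) (Eventually.of_forall hcover)
  refine hH.trans (liminf_le_liminf (Eventually.of_forall fun n => ?_))
  calc ∑' i : {x : U n // y ∈ I n x}, ediam (closedBall i.1.1 (5 * r n i.1)) ^ (d : ℝ)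
        ≤ ∑' i : {x : U n // y ∈ I n x},
            (I n i.1).indicator (fun _ => ENNReal.ofReal (10 * r n i.1) ^ d) y :=
          ENNReal.tsum_le_tsum fun i => by
            rw [indicator_of_mem i.2, ENNReal.rpow_natCast]
            exact pow_le_pow_left' (hdiam n i.1) d
      _ ≤ levelSetCoverSum (U n) (r n) f k d y :=
          ENNReal.tsum_comp_le_tsum_of_injective Subtype.val_injective
            (fun x : U n => (I n x).indicator (fun _ => ENNReal.ofReal (10 * r n x) ^ d) y)

theorem lintegral_levelSetCoverSum {d : ℕ} {U : Set (Fin (d + 1) → ℝ)} (hU : U.Countable)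
    {r : (Fin (d + 1) → ℝ) → ℝ} (hr : ∀ x ∈ U, 0 ≤ r x)
    (hdisj : U.PairwiseDisjoint fun x => closedBall x (r x)) (f : (Fin (d + 1) → ℝ) → ℝ) {k : ℝ}
    (hk : 0 ≤ k) :
    ∫⁻ y, levelSetCoverSum U r f k d y =
      ENNReal.ofReal (5 ^ (d + 1) * k) * volume (⋃ x ∈ U, closedBall x (r x)) := by
  have := hU.to_subtype
  unfold levelSetCoverSum
  rw [lintegral_tsum fun x => (measurable_const.indicator measurableSet_Icc).aemeasurable,
    measure_biUnion hU hdisj fun _ _ => measurableSet_closedBall, ← ENNReal.tsum_mul_left]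
  refine tsum_congr fun x => ?_
  have hx := hr x x.2
  rw [lintegral_indicator_const measurableSet_Icc, Real.volume_Icc,
    Real.volume_pi_closedBall _ hx, Fintype.card_fin, ← ENNReal.ofReal_pow (by positivity),
    ← ENNReal.ofReal_mul (by positivity), ← ENNReal.ofReal_mul (by positivity)]
  congr 1
  rw [show (10 : ℝ) * r x = 5 * (2 * r x) by ring, mul_pow, pow_succ, pow_succ]
  ring

theorem ae_lt_top_of_le_liminf_of_lintegral_le {α : Type*} [MeasurableSpace α] {μ : Measure α}
    {Φ : α → ℝ≥0∞} {g : ℕ → α → ℝ≥0∞} {M : ℝ≥0∞} (hg : ∀ n, Measurable (g n))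
    (hΦ : ∀ a, Φ a ≤ liminf (fun n => g n a) atTop) (hint : ∀ n, ∫⁻ a, g n a ∂μ ≤ M)
    (hM : M ≠ ⊤) : ∀ᵐ a ∂μ, Φ a < ⊤ := by
  have hfatou : ∫⁻ a, liminf (fun n => g n a) atTop ∂μ ≤ M :=
    (lintegral_liminf_le hg).trans
      ((liminf_le_liminf (Eventually.of_forall hint)).trans_eq (liminf_const M))
  filter_upwards [ae_lt_top (Measurable.liminf hg) (hfatou.trans_lt hM.lt_top).ne] with a ha
  exact (hΦ a).trans_lt ha

theorem ae_hausdorffMeasure_oscLeSet_inter_preimage_lt_top {d : ℕ} {A : Set (Fin (d + 1) → ℝ)}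
    (hA : Bornology.IsBounded A) (f : (Fin (d + 1) → ℝ) → ℝ) {k : ℝ} (hk : 0 ≤ k) :
    ∀ᵐ y, μH[d] (oscLeSet A f k ∩ f ⁻¹' {y}) < ⊤ := by
  choose U r hU hUA hr hdisj hcov hosc using fun n : ℕ =>
    exists_disjoint_closedBall_cover_oscLeSet A f k (Nat.one_div_pos_of_nat (n := n))
  have := fun n => (hU n).to_subtype
  have hvol : ∀ n, volume (⋃ x ∈ U n, closedBall x (r n x)) ≤ volume (cthickening 1 A) :=
    fun n => measure_mono <| iUnion₂_subset fun x hx =>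
      (closedBall_subset_cthickening (hUA n hx) _).trans <| cthickening_mono
        ((hr n x hx).2.trans (Nat.one_div_le_one_div (Nat.zero_le n) |>.trans_eq (by simp))) A
  refine ae_lt_top_of_le_liminf_of_lintegral_le
    (fun n => measurable_levelSetCoverSum (r n) f k d)
    (hausdorffMeasure_inter_preimage_le_liminf d tendsto_one_div_add_atTop_nhds_zero_nat
      (fun n x hx => (hr n x hx).2) hcov fun n x hx y hy => hosc n x hx y hy.1)
    (fun n => (lintegral_levelSetCoverSum (hU n) (fun x hx => (hr n x hx).1.le) (hdisj n) f
      hk).trans_le (mul_le_mul_right (hvol n) _))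
    (ENNReal.mul_ne_top ENNReal.ofReal_ne_top hA.cthickening.measure_lt_top.ne)

theorem stmt6_general (m : ℕ) (hm : 1 ≤ m) (f : (Fin m → ℝ) → ℝ)
    (hl : ∀ x ∈ Set.Icc (0 : Fin m → ℝ) 1, lowerScaledOsc (Set.Icc 0 1) f x < ⊤) :
    ∀ᵐ y ∂(volume : Measure ℝ),
      ∃ s : ℕ → Set (Fin m → ℝ),
        (Set.Icc (0 : Fin m → ℝ) 1 ∩ f ⁻¹' {y} ⊆ ⋃ n, s n) ∧
        (∀ n, μH[(m : ℝ) - 1] (s n) < ⊤) := by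
  obtain ⟨d, rfl⟩ : ∃ d, m = d + 1 := ⟨m - 1, by omega⟩
  rw [show ((d + 1 : ℕ) : ℝ) - 1 = d by push_cast; ring]
  filter_upwards [ae_all_iff.2 fun k : ℕ =>
    ae_hausdorffMeasure_oscLeSet_inter_preimage_lt_top (isBounded_Icc 0 1) f
      k.cast_nonneg] with y hy
  refine ⟨fun k => oscLeSet (Icc 0 1) f k ∩ f ⁻¹' {y}, fun x hx => ?_, hy⟩
  obtain ⟨k, hk⟩ := exists_nat_mem_oscLeSet hx.1 (hl x hx.1)
  exact mem_iUnion.2 ⟨k, hk, hx.2⟩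

/-- If `m ≥ 1` and `f : [0,1]^m → ℝ` is continuous with finite lower-scaled
oscillation at every point, then for Lebesgue-a.e. `y ∈ ℝ` the level set `f⁻¹(y)`
has σ-finite `H^{m-1}` measure. -/
theorem stmt6 (m : ℕ) (hm : 1 ≤ m) (f : (Fin m → ℝ) → ℝ)
    (hf : ContinuousOn f (Set.Icc 0 1))
    (hl : ∀ x ∈ Set.Icc (0 : Fin m → ℝ) 1, lowerScaledOsc (Set.Icc 0 1) f x < ⊤) :
    ∀ᵐ y ∂(volume : Measure ℝ),
      ∃ s : ℕ → Set (Fin m → ℝ),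
        (Set.Icc (0 : Fin m → ℝ) 1 ∩ f ⁻¹' {y} ⊆ ⋃ n, s n) ∧
        (∀ n, μH[(m : ℝ) - 1] (s n) < ⊤) :=
  stmt6_general m hm f hl
end

section
/- Let f : [0,1] → ℝ be a continuous function such that the upper-scaled oscillation L_f(x) is finite for all except countably many x ∈ [0,1]. Then for Lebesgue-almost every y ∈ ℝ, the level set f⁻¹(y) is finite. -/
/-!
On the closed set `D_m = coneSet [0,1] f (m+1)⁻¹ (m+1)` of points of `[0,1]` towards which
`f` is `(m+1)`-Lipschitz within distance `1/(m+1)`, `f` is Lipschitz, so by Rademacher's theorem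
almost every level set meets `D_m` in a finite set. An infinite level set `{f = y}` has an
accumulation point `x`, which for `y ∉ f(C)` lies in some `D_m`; by symmetry the level set
accumulates at `x` from the right. Its points just right of `x` and outside `D_m` lie in gaps of
`D_m`, and the Lipschitz bound at the left endpoint `s` of such a gap puts `y` within `(m+1)`
times the gap length of `f(s)`. The gaps are disjoint, so by Borel–Cantelli almost every `y`
lies in only finitely many of these intervals; this forces `x` itself to be the left endpoint of
a gap, and the countably many such endpoints have a null image.
-/

open Set MeasureTheory Metric Filter
open scoped ENNReal NNReal Topology

theorem deriv_eq_zero_of_accPt_preimage {G : ℝ → ℝ} {x : ℝ}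
    (hacc : AccPt x (𝓟 (G ⁻¹' {G x}))) (hG : DifferentiableAt ℝ G x) : deriv G x = 0 := by
  refine tendsto_nhds_unique_of_frequently_eq
    (hasDerivAt_iff_tendsto_slope.1 hG.hasDerivAt) tendsto_const_nhds ?_
  exact (accPt_iff_frequently_nhdsNE.1 hacc).mono fun z hz => by
    simp [slope_def_field, show G z = G x from hz]

theorem LipschitzWith.volume_image_setOf_deriv_eq_zero {K : ℝ≥0} {G : ℝ → ℝ}
    (hG : LipschitzWith K G) :
    volume (G '' {x | DifferentiableAt ℝ G x → deriv G x = 0}) = 0 := by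
  have hsub : {x | DifferentiableAt ℝ G x → deriv G x = 0} ⊆
      {x | ¬ DifferentiableAt ℝ G x} ∪ {x | HasDerivAt G 0 x} := fun x hx => by
    by_cases hd : DifferentiableAt ℝ G x
    · exact Or.inr (hx hd ▸ hd.hasDerivAt)
    · exact Or.inl hd
  refine measure_mono_null (image_mono hsub) ?_
  rw [image_union]
  refine measure_union_null ?_ ?_
  · have hnull : volume {x | ¬ DifferentiableAt ℝ G x} = 0 :=
      ae_iff.1 hG.ae_differentiableAt_of_real
    have := hG.hausdorffMeasure_image_le zero_le_one {x | ¬ DifferentiableAt ℝ G x}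
    rw [hausdorffMeasure_real, hnull, mul_zero] at this
    exact le_antisymm this bot_le
  · refine addHaar_image_eq_zero_of_det_fderivWithin_eq_zero volume (f' := fun _ => 0)
      (fun x hx => (hx : HasDerivAt G 0 x).hasFDerivAt.hasFDerivWithinAt.congr_fderiv ?_)
      fun _ _ => by simp [ContinuousLinearMap.det]
    ext; simp

theorem LipschitzOnWith.ae_finite_inter_preimage {L : ℝ≥0} {g : ℝ → ℝ} {K : Set ℝ}
    (hK : IsCompact K) (hg : LipschitzOnWith L g K) :
    ∀ᵐ y, (K ∩ g ⁻¹' {y}).Finite := by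
  obtain ⟨G, hGL, hgG⟩ := hg.extend_real
  refine ae_iff.2 (measure_mono_null (fun y hy => ?_) hGL.volume_image_setOf_deriv_eq_zero)
  have hlevel : K ∩ g ⁻¹' {y} = K ∩ G ⁻¹' {y} := by
    ext x; simp +contextual [hgG _]
  have hclosed : IsClosed (K ∩ G ⁻¹' {y}) :=
    hK.isClosed.inter (isClosed_singleton.preimage hGL.continuous)
  change (K ∩ g ⁻¹' {y}).Infinite at hy
  rw [hlevel] at hy
  obtain ⟨x, hx, hacc⟩ := hy.exists_accPt_of_subset_isCompact
    (hK.of_isClosed_subset hclosed inter_subset_left) Subset.rfl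
  have hGx : G x = y := hx.2
  refine ⟨x, fun hd => deriv_eq_zero_of_accPt_preimage ?_ hd, hGx⟩
  exact hacc.mono (principal_mono.2 fun z hz => hz.2.trans hGx.symm)

theorem exists_dist_le_mul_of_upperScaledOsc_lt_top {E F : Type*} [PseudoMetricSpace E]
    [PseudoMetricSpace F] {A : Set E} {f : E → F} {x : E} (h : upperScaledOsc A f x < ⊤) :
    ∃ M δ : ℝ, 0 < δ ∧ ∀ z ∈ A, dist z x < δ → dist (f z) (f x) ≤ M * dist z x := by
  obtain ⟨M, hLM, -⟩ := ENNReal.lt_iff_exists_nnreal_btwn.1 h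
  obtain ⟨δ, hδ, hδsub⟩ := mem_nhdsGT_iff_exists_Ioo_subset.1 (eventually_lt_of_limsup_lt hLM)
  refine ⟨M, δ, hδ, fun z hz hzδ => ?_⟩
  have hlt : ∀ r ∈ Ioo (dist z x) δ, dist (f z) (f x) ≤ M * r := by
    intro r hr
    have hr0 : 0 < r := dist_nonneg.trans_lt hr.1
    have hsup := hδsub ⟨hr0, hr.2⟩
    rw [mem_ofPred_eq, ENNReal.div_lt_iff (Or.inl (ENNReal.ofReal_pos.2 hr0).ne')
      (Or.inl ENNReal.ofReal_ne_top), ← ENNReal.ofReal_coe_nnreal,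
      ← ENNReal.ofReal_mul M.coe_nonneg] at hsup
    have hz : ENNReal.ofReal (dist (f z) (f x)) < ENNReal.ofReal (M * r) :=
      (le_iSup₂_of_le z hz (le_iSup_of_le (α := ℝ≥0∞) hr.1.le le_rfl)).trans_lt hsup
    exact (ENNReal.ofReal_lt_ofReal_iff'.1 hz).1.le
  exact ge_of_tendsto ((continuous_const_mul (M : ℝ)).continuousAt.tendsto.mono_left
    nhdsWithin_le_nhds) (mem_of_superset (Ioo_mem_nhdsGT hzδ) hlt)

def coneSet {E F : Type*} [PseudoMetricSpace E] [PseudoMetricSpace F]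
    (A : Set E) (g : E → F) (δ M : ℝ) : Set E :=
  {x ∈ A | ∀ z ∈ A, dist z x < δ → dist (g z) (g x) ≤ M * dist z x}

section coneSet

variable {E F : Type*} [PseudoMetricSpace E] [PseudoMetricSpace F] {A : Set E} {g : E → F}
  {δ M : ℝ}

theorem isClosed_coneSet (hA : IsClosed A) (hg : ContinuousOn g A) :
    IsClosed (coneSet A g δ M) := by
  refine isClosed_of_closure_subset fun x hx => ?_
  have hxA : x ∈ A := hA.closure_subset (closure_mono (sep_subset _ _) hx)
  refine ⟨hxA, fun z hz hzx => ?_⟩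
  have hx' : x ∈ closure (ball z δ ∩ coneSet A g δ M) :=
    isOpen_ball.inter_closure ⟨mem_ball'.2 hzx, hx⟩
  refine ContinuousWithinAt.closure_le hx' ?_ ?_
    fun w hw => hw.2.2 z hz (mem_ball'.1 hw.1)
  · exact continuousWithinAt_const.dist ((hg x hxA).mono fun w hw => hw.2.1)
  · exact (continuous_const.mul (continuous_const.dist continuous_id)).continuousWithinAt

theorem exists_lipschitzOnWith_coneSet (hδ : 0 < δ) (hg : Bornology.IsBounded (g '' A)) :
    ∃ K, LipschitzOnWith K g (coneSet A g δ M) := by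
  obtain ⟨C, hC⟩ := isBounded_iff.1 hg
  refine ⟨_, LipschitzOnWith.of_dist_le' (K := max M (C / δ)) fun a ha b hb => ?_⟩
  rcases lt_or_ge (dist a b) δ with hab | hab
  · exact (hb.2 a ha.1 hab).trans (by gcongr; exact le_max_left _ _)
  · have hgab : dist (g a) (g b) ≤ C :=
      hC (mem_image_of_mem g ha.1) (mem_image_of_mem g hb.1)
    have hC0 : 0 ≤ C := dist_nonneg.trans hgab
    calc dist (g a) (g b) ≤ C := hgab
      _ = C / δ * δ := (div_mul_cancel₀ C hδ.ne').symm
      _ ≤ C / δ * dist a b := by gcongr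
      _ ≤ max M (C / δ) * dist a b := by gcongr; exact le_max_right _ _

end coneSet

/-- The length of the gap of `F` to the right of `s`; inserting `s + 1` caps it at `1`, also when
`F` has no point to the right of `s`. -/
noncomputable def rightGap (F : Set ℝ) (s : ℝ) : ℝ :=
  sInf (insert (s + 1) (F ∩ Ioi s)) - s

section rightGap

variable {F : Set ℝ} {s z : ℝ}

theorem bddBelow_insert_inter_Ioi : BddBelow (insert (s + 1) (F ∩ Ioi s)) :=
  ⟨s, forall_mem_insert.2 ⟨by linarith, fun _ hw => hw.2.le⟩⟩

theorem rightGap_le_one : rightGap F s ≤ 1 := by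
  have := csInf_le bddBelow_insert_inter_Ioi (mem_insert (s + 1) (F ∩ Ioi s))
  rw [rightGap]; linarith

theorem add_rightGap_le (hz : z ∈ F) (hsz : s < z) : s + rightGap F s ≤ z := by
  have := csInf_le bddBelow_insert_inter_Ioi (mem_insert_of_mem (s + 1) ⟨hz, hsz⟩)
  rw [rightGap]; linarith

theorem min_le_rightGap (h : Disjoint (Ioc s z) F) : min 1 (z - s) ≤ rightGap F s := by
  have : min 1 (z - s) + s ≤ sInf (insert (s + 1) (F ∩ Ioi s)) := by
    refine le_csInf (insert_nonempty _ _)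
      (forall_mem_insert.2 ⟨by linarith [min_le_left 1 (z - s)], fun w hw => ?_⟩)
    have hzw : z < w := not_le.1 fun hwz => disjoint_left.1 h.symm hw.1 ⟨hw.2, hwz⟩
    linarith [min_le_right 1 (z - s)]
  rw [rightGap]; linarith

theorem countable_setOf_rightGap_pos : {s ∈ F | 0 < rightGap F s}.Countable := by
  refine (countable_setOfPred_isolated_right_within (s := F)).mono fun s hs => ?_
  show s ∈ F ∧ 𝓝[F ∩ Ioi s] s = ⊥
  refine ⟨hs.1, ?_⟩
  rw [← empty_mem_iff_bot, mem_nhdsWithin]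
  refine ⟨Iio (s + rightGap F s), isOpen_Iio, lt_add_of_pos_right s hs.2, fun w hw => ?_⟩
  exact absurd (add_rightGap_le hw.2.1 hw.2.2) (not_le.2 hw.1)

theorem pairwiseDisjoint_Ioo_rightGap :
    F.PairwiseDisjoint fun s => Ioo s (s + rightGap F s) := by
  have key : ∀ s t, t ∈ F → s < t →
      Disjoint (Ioo s (s + rightGap F s)) (Ioo t (t + rightGap F t)) :=
    fun s t ht hst => disjoint_left.2 fun w hws hwt => by
      linarith [add_rightGap_le ht hst, hws.2, hwt.1]
  intro s hs t ht hst
  rcases lt_or_gt_of_ne hst with h | h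
  · exact key s t ht h
  · exact (key t s hs h).symm

theorem ae_finite_setOf_mem_closedBall_rightGap (hF : Bornology.IsBounded F) (g : ℝ → ℝ)
    (M : ℝ) :
    ∀ᵐ y, {s ∈ F | 0 < rightGap F s ∧ y ∈ closedBall (g s) (M * rightGap F s)}.Finite := by
  set R := {s ∈ F | 0 < rightGap F s}
  have : Countable R := countable_setOf_rightGap_pos.to_subtype
  have hgaps : ∑' s : R, volume (Ioo (s : ℝ) (s + rightGap F s)) < ⊤ := by
    rw [← measure_biUnion countable_setOf_rightGap_pos
      (pairwiseDisjoint_Ioo_rightGap.subset (sep_subset _ _)) fun _ _ => measurableSet_Ioo]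
    refine (measure_mono (iUnion₂_subset fun s hs w hw =>
      mem_thickening_iff.2 ⟨s, hs.1, ?_⟩)).trans_lt (hF.thickening (δ := 1)).measure_lt_top
    rw [Real.dist_eq, abs_of_pos (sub_pos.2 hw.1)]
    linarith [hw.2, rightGap_le_one (F := F) (s := s)]
  have hsum : ∑' s : R, volume (closedBall (g s) (M * rightGap F s)) ≠ ⊤ := by
    have hball : ∀ s : R, volume (closedBall (g s) (M * rightGap F s)) =
        ENNReal.ofReal (2 * M) * volume (Ioo (s : ℝ) (s + rightGap F s)) := fun s => by
      rw [Real.volume_closedBall, Real.volume_Ioo, add_sub_cancel_left, ← mul_assoc,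
        ENNReal.ofReal_mul' s.2.2.le]
    rw [tsum_congr hball, ENNReal.tsum_mul_left]
    exact ENNReal.mul_ne_top ENNReal.ofReal_ne_top hgaps.ne
  filter_upwards [ae_finite_setOfPred_mem hsum] with y hy
  exact (hy.image Subtype.val).subset fun s hs => ⟨⟨s, hs.1, hs.2.1⟩, hs.2.2, rfl⟩

end rightGap

section gaps

variable {A F : Set ℝ} {g : ℝ → ℝ} {δ M : ℝ}

theorem exists_mem_closedBall_rightGap (hF : IsClosed F) (hFA : F ⊆ coneSet A g δ M)
    {x z : ℝ} (hx : x ∈ F) (hzA : z ∈ A) (hzF : z ∉ F) (hxz : x < z)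
    (hzδ : z - x < min δ 1) :
    ∃ s ∈ F ∩ Icc x z, 0 < rightGap F s ∧ g z ∈ closedBall (g s) (M * rightGap F s) := by
  set S := F ∩ Icc x z
  have hSbdd : BddAbove S := ⟨z, fun w hw => hw.2.2⟩
  have hs : sSup S ∈ S := (hF.inter isClosed_Icc).csSup_mem ⟨x, hx, le_rfl, hxz.le⟩ hSbdd
  set s := sSup S
  have hsz : s < z := lt_of_le_of_ne hs.2.2 fun h => hzF (h ▸ hs.1)
  have hdist : dist z s = z - s := by rw [Real.dist_eq, abs_of_pos (sub_pos.2 hsz)]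
  have hgap : Disjoint (Ioc s z) F := disjoint_left.2 fun w hw hwF =>
    not_le.2 hw.1 (le_csSup hSbdd ⟨hwF, hs.2.1.trans hw.1.le, hw.2⟩)
  have hzs : z - s ≤ rightGap F s := by
    have := min_le_rightGap hgap
    rwa [min_eq_right (by linarith [hs.2.1, min_le_right δ 1])] at this
  have hcone : dist (g z) (g s) ≤ M * (z - s) := by
    rw [← hdist]
    exact (hFA hs.1).2 z hzA (by linarith [hs.2.1, min_le_left δ 1])
  have hM : 0 ≤ M := nonneg_of_mul_nonneg_left (dist_nonneg.trans hcone) (sub_pos.2 hsz)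
  refine ⟨s, hs, (sub_pos.2 hsz).trans_le hzs, mem_closedBall.2 (hcone.trans ?_)⟩
  gcongr

theorem rightGap_pos_of_frequently_nhdsGT (hF : IsClosed F) (hFA : F ⊆ coneSet A g δ M)
    (hδ : 0 < δ) {x y : ℝ} (hx : x ∈ F) (hlevel : (F ∩ g ⁻¹' {y}).Finite)
    (hballs : {s ∈ F | 0 < rightGap F s ∧ y ∈ closedBall (g s) (M * rightGap F s)}.Finite)
    (hfreq : ∃ᶠ z in 𝓝[>] x, z ∈ A ∧ g z = y) : 0 < rightGap F x := by
  have hnear : ∀ᶠ w in 𝓝[>] x, w ∉ (F ∩ g ⁻¹' {y}) ∪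
      {s ∈ F | 0 < rightGap F s ∧ y ∈ closedBall (g s) (M * rightGap F s)} := by
    have := ((hlevel.union hballs).sdiff (t := {x})).isClosed.compl_mem_nhds fun h => h.2 rfl
    filter_upwards [nhdsWithin_le_nhds this, self_mem_nhdsWithin] with w hw hxw
    exact fun hwT => hw ⟨hwT, ne_of_gt hxw⟩
  obtain ⟨u, hxu, hu⟩ := mem_nhdsGT_iff_exists_Ioo_subset.1 hnear
  have hxu' : x < min u (x + min δ 1) := lt_min hxu (by simp [hδ])
  obtain ⟨z, ⟨hzA, hzy⟩, hxz, hzu⟩ := (hfreq.and_eventually (Ioo_mem_nhdsGT hxu')).exists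
  have hzF : z ∉ F := fun hzF => hu ⟨hxz, hzu.trans_le (min_le_left _ _)⟩ (Or.inl ⟨hzF, hzy⟩)
  obtain ⟨s, hs, hpos, hball⟩ := exists_mem_closedBall_rightGap hF hFA hx hzA hzF hxz
    (by linarith [min_le_right u (x + min δ 1)])
  rcases hs.2.1.eq_or_lt with rfl | hxs
  · exact hpos
  · refine absurd (Or.inr ⟨hs.1, hpos, hzy ▸ hball⟩) (hu ⟨hxs, ?_⟩)
    linarith [hs.2.2, min_le_left u (x + min δ 1)]

end gaps

section compact

open scoped Pointwise

variable {A : Set ℝ} {g : ℝ → ℝ} {δ M : ℝ}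

theorem ae_not_frequently_nhdsGT_of_mem_coneSet (hA : IsCompact A) (hg : ContinuousOn g A)
    (hδ : 0 < δ) :
    ∀ᵐ y, ∀ x ∈ coneSet A g δ M, g x = y → ¬ ∃ᶠ z in 𝓝[>] x, z ∈ A ∧ g z = y := by
  set F := coneSet A g δ M
  have hF : IsClosed F := isClosed_coneSet hA.isClosed hg
  have hFb : Bornology.IsBounded F := hA.isBounded.subset (sep_subset _ _)
  obtain ⟨K, hK⟩ := exists_lipschitzOnWith_coneSet (M := M) hδ
    (hA.image_of_continuousOn hg).isBounded
  have hgaps : ∀ᵐ y, y ∉ g '' {s ∈ F | 0 < rightGap F s} :=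
    measure_eq_zero_iff_ae_notMem.1 ((countable_setOf_rightGap_pos.image g).measure_zero _)
  filter_upwards [hK.ae_finite_inter_preimage (isCompact_of_isClosed_isBounded hF hFb),
    ae_finite_setOf_mem_closedBall_rightGap hFb g M, hgaps]
    with y hlevel hballs hy x hx hxy hfreq
  exact hy ⟨x, ⟨hx, rightGap_pos_of_frequently_nhdsGT hF Subset.rfl hδ hx hlevel hballs hfreq⟩,
    hxy⟩

theorem neg_mem_coneSet {x : ℝ} (hx : x ∈ coneSet A g δ M) :
    -x ∈ coneSet (-A) (fun t => g (-t)) δ M := by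
  refine ⟨by simpa using hx.1, fun z hz hzx => ?_⟩
  rw [← dist_neg_neg, neg_neg] at hzx
  rw [← dist_neg_neg z, neg_neg]
  simpa only [neg_neg] using hx.2 (-z) hz hzx

theorem ae_not_accPt_of_mem_coneSet (hA : IsCompact A) (hg : ContinuousOn g A) (hδ : 0 < δ) :
    ∀ᵐ y, ∀ x ∈ coneSet A g δ M, g x = y → ¬ AccPt x (𝓟 (A ∩ g ⁻¹' {y})) := by
  have hg' : ContinuousOn (fun t => g (-t)) (-A) := hg.comp continuousOn_neg fun _ ht => ht
  filter_upwards [ae_not_frequently_nhdsGT_of_mem_coneSet (M := M) hA hg hδ,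
    ae_not_frequently_nhdsGT_of_mem_coneSet (M := M) hA.neg hg' hδ]
    with y hright hleft x hx hxy hacc
  rw [accPt_iff_frequently_nhdsNE, ← nhdsLT_sup_nhdsGT, frequently_sup] at hacc
  rcases hacc with hacc | hacc
  · refine hleft (-x) (neg_mem_coneSet hx) (by simpa using hxy) ?_
    exact tendsto_neg_nhdsLT.frequently_map _
      (fun z hz => ⟨by simpa using hz.1, by simpa using hz.2⟩) hacc
  · exact hright x hx hxy hacc

end compact

theorem exists_nat_mem_coneSet_of_upperScaledOsc_lt_top {E F : Type*} [PseudoMetricSpace E]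
    [PseudoMetricSpace F] {A : Set E} {g : E → F} {x : E} (hx : x ∈ A)
    (h : upperScaledOsc A g x < ⊤) : ∃ m : ℕ, x ∈ coneSet A g (m + 1)⁻¹ (m + 1) := by
  obtain ⟨M, δ, hδ, hM⟩ := exists_dist_le_mul_of_upperScaledOsc_lt_top h
  obtain ⟨m, hm⟩ := exists_nat_gt (max M δ⁻¹)
  refine ⟨m, hx, fun z hz hzx => (hM z hz (hzx.trans ?_)).trans ?_⟩
  · exact inv_lt_of_inv_lt₀ hδ (by linarith [le_max_right M δ⁻¹])
  · gcongr; linarith [le_max_left M δ⁻¹]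

/-- If `f : [0,1] → ℝ` is continuous and its upper-scaled oscillation is finite at
all but countably many points, then Lebesgue-a.e. level set of `f` is finite. -/
theorem stmt7 (f : ℝ → ℝ) (hf : ContinuousOn f (Set.Icc 0 1))
    (C : Set ℝ) (hC : C.Countable)
    (hL : ∀ x ∈ Set.Icc (0:ℝ) 1 \ C, upperScaledOsc (Set.Icc 0 1) f x < ⊤) :
    ∀ᵐ y ∂(volume : Measure ℝ), (Set.Icc (0:ℝ) 1 ∩ f ⁻¹' {y}).Finite := by
  have hfC : ∀ᵐ y, y ∉ f '' C :=
    measure_eq_zero_iff_ae_notMem.1 ((hC.image f).measure_zero _)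
  have hcone : ∀ᵐ y, ∀ m : ℕ, ∀ x ∈ coneSet (Icc 0 1) f (m + 1)⁻¹ (m + 1), f x = y →
      ¬ AccPt x (𝓟 (Icc 0 1 ∩ f ⁻¹' {y})) :=
    ae_all_iff.2 fun m => ae_not_accPt_of_mem_coneSet isCompact_Icc hf (by positivity)
  filter_upwards [hfC, hcone] with y hyC hy
  by_contra hinf
  have hclosed := hf.preimage_isClosed_of_isClosed isClosed_Icc (isClosed_singleton (x := y))
  obtain ⟨x, ⟨hx, hxy⟩, hacc⟩ := Set.Infinite.exists_accPt_of_subset_isCompact hinf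
    (isCompact_Icc.of_isClosed_subset hclosed inter_subset_left) Subset.rfl
  obtain ⟨m, hm⟩ := exists_nat_mem_coneSet_of_upperScaledOsc_lt_top hx
    (hL x ⟨hx, fun hxC => hyC ⟨x, hxC, hxy⟩⟩)
  exact hy m x hm hxy hacc
end

section
/- Let E ⊂ [0,1] be an uncountable Borel set. Then there exists a continuous function f : [0,1] → [0,1] such that the upper-scaled oscillation L_f(x) is finite for every x ∈ [0,1] \ E, and for every y ∈ [0,1] the level set f⁻¹(y) is infinite. -/
open Set MeasureTheory Metric Filter
open scoped ENNReal NNReal Topology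

/-!
By the perfect set theorem `E` contains a Cantor set `h : (ℕ → Bool) → E`. On it, `f` reads off
the even-indexed bits as a binary expansion, `f (h b) = ∑ b (2k) 2⁻⁽ᵏ⁺¹⁾`; the odd-indexed bits
are free, so every `y ∈ [0, 1]` has infinitely many preimages. Off the Cantor set, `f` is the
series `∑ 2⁻⁽ᵏ⁺¹⁾ uₖ`, where `uₖ = d(·, Sₖ) / (d(·, Sₖ) + d(·, Tₖ))` separates the two cylinders
`Sₖ, Tₖ` on which bit `2k` is `0`, resp. `1`. Each `uₖ` is `r⁻¹`-Lipschitz where the distance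
to the Cantor set is at least `r`, hence so is `f`, and its scaled oscillation is finite off `E`.
-/

theorem upperScaledOsc_lt_top_of_lipschitzOnWith {E F : Type*} [PseudoMetricSpace E]
    [PseudoMetricSpace F] {A s : Set E} {f : E → F} {x : E} {K : ℝ≥0}
    (hs : s ∈ 𝓝 x) (hf : LipschitzOnWith K f s) : upperScaledOsc A f x < ⊤ := by
  obtain ⟨ε, hε, hball⟩ := Metric.mem_nhds_iff.1 hs
  refine (limsup_le_of_le (a := (K : ℝ≥0∞)) ?_ ?_).trans_lt ENNReal.coe_lt_top
  · isBoundedDefault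
  filter_upwards [Ioo_mem_nhdsGT hε] with r ⟨hr, hrε⟩
  have hsup : (⨆ (y : E) (_ : y ∈ A) (_ : dist y x ≤ r), ENNReal.ofReal (dist (f y) (f x)))
      ≤ ENNReal.ofReal (K * r) := by
    refine iSup₂_le fun y _ => iSup_le fun hyx => ENNReal.ofReal_le_ofReal ?_
    have hy : y ∈ s := hball (mem_ball.2 (hyx.trans_lt hrε))
    calc dist (f y) (f x) ≤ K * dist y x := hf.dist_le_mul y hy x (mem_of_mem_nhds hs)
      _ ≤ K * r := by gcongr
  calc _ ≤ ENNReal.ofReal (K * r) / ENNReal.ofReal r := ENNReal.div_le_div_right hsup _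
    _ = K := by
      rw [ENNReal.ofReal_mul K.coe_nonneg, ENNReal.ofReal_coe_nnreal,
        ENNReal.mul_div_cancel_right (by simpa using hr) ENNReal.ofReal_ne_top]

section UrysohnRatio

variable {X : Type*} [PseudoMetricSpace X] {s t : Set X}

noncomputable def urysohnRatio (s t : Set X) (x : X) : ℝ :=
  infDist x s / (infDist x s + infDist x t)

theorem abs_div_add_sub_div_add_le {a b c d ε : ℝ} (ha : 0 ≤ a) (hb : 0 ≤ b) (hab : 0 < a + b)
    (hcd : 0 < c + d) (hac : |a - c| ≤ ε) (hbd : |b - d| ≤ ε) :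
    |a / (a + b) - c / (c + d)| ≤ ε / (c + d) := by
  have hnum : |a * (c + d) - (a + b) * c| ≤ (a + b) * ε :=
    calc |a * (c + d) - (a + b) * c| = |a * (d - b) + b * (a - c)| := by ring_nf
      _ ≤ a * |d - b| + b * |a - c| := by
        grw [abs_add_le, abs_mul, abs_mul, abs_of_nonneg ha, abs_of_nonneg hb]
      _ ≤ (a + b) * ε := by rw [abs_sub_comm] at hbd; nlinarith
  rw [div_sub_div _ _ hab.ne' hcd.ne', abs_div, abs_of_pos (mul_pos hab hcd)]
  calc _ ≤ (a + b) * ε / ((a + b) * (c + d)) := by gcongr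
    _ = ε / (c + d) := mul_div_mul_left _ _ hab.ne'

theorem urysohnRatio_mem_Icc (x : X) : urysohnRatio s t x ∈ Icc 0 1 := by
  have hD : 0 ≤ infDist x s + infDist x t := add_nonneg infDist_nonneg infDist_nonneg
  exact ⟨div_nonneg infDist_nonneg hD, div_le_one_of_le₀ (le_add_of_nonneg_right infDist_nonneg) hD⟩

theorem urysohnRatio_of_mem_left {x : X} (hx : x ∈ s) : urysohnRatio s t x = 0 := by
  simp [urysohnRatio, infDist_zero_of_mem hx]

theorem urysohnRatio_of_mem_right {x : X} (hs : IsClosed s) (hs' : s.Nonempty)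
    (hst : Disjoint s t) (hx : x ∈ t) : urysohnRatio s t x = 1 := by
  have hxs : 0 < infDist x s := (hs.notMem_iff_infDist_pos hs').1 (hst.notMem_of_mem_right hx)
  simp [urysohnRatio, infDist_zero_of_mem hx, hxs.ne']

theorem infDist_add_infDist_pos (hs : IsClosed s) (ht : IsClosed t) (hs' : s.Nonempty)
    (ht' : t.Nonempty) (hst : Disjoint s t) (x : X) : 0 < infDist x s + infDist x t := by
  by_cases hx : x ∈ s
  · exact add_pos_of_nonneg_of_pos infDist_nonneg
      ((ht.notMem_iff_infDist_pos ht').1 (hst.notMem_of_mem_left hx))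
  · exact add_pos_of_pos_of_nonneg ((hs.notMem_iff_infDist_pos hs').1 hx) infDist_nonneg

theorem continuous_urysohnRatio (hs : IsClosed s) (ht : IsClosed t) (hs' : s.Nonempty)
    (ht' : t.Nonempty) (hst : Disjoint s t) : Continuous (urysohnRatio s t) :=
  (continuous_infDist_pt s).div ((continuous_infDist_pt s).add (continuous_infDist_pt t))
    fun x => (infDist_add_infDist_pos hs ht hs' ht' hst x).ne'

theorem lipschitzOnWith_urysohnRatio {r : ℝ≥0} (hr : 0 < r) :
    LipschitzOnWith r⁻¹ (urysohnRatio s t) {x | r ≤ infDist x s + infDist x t} := by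
  refine LipschitzOnWith.of_dist_le_mul fun x hx z hz => ?_
  have hdist (u : Set X) : |infDist x u - infDist z u| ≤ dist x z := by
    simpa [Real.dist_eq] using (lipschitz_infDist_pt u).dist_le_mul x z
  have hr' : (0 : ℝ) < r := hr
  calc dist (urysohnRatio s t x) (urysohnRatio s t z)
      ≤ dist x z / (infDist z s + infDist z t) :=
        abs_div_add_sub_div_add_le infDist_nonneg infDist_nonneg (hr'.trans_le hx)
          (hr'.trans_le hz) (hdist s) (hdist t)
    _ ≤ dist x z / r := div_le_div_of_nonneg_left dist_nonneg hr' hz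
    _ = (r⁻¹ : ℝ≥0) * dist x z := by rw [NNReal.coe_inv, div_eq_inv_mul]

end UrysohnRatio

section BinarySeries

variable {X : Type*} {u : ℕ → X → ℝ}

noncomputable def binarySeries (u : ℕ → X → ℝ) (x : X) : ℝ :=
  ∑' k, u k x * ((2 : ℝ) ^ (k + 1))⁻¹

theorem hasSum_inv_two_pow_succ : HasSum (fun k : ℕ => ((2 : ℝ) ^ (k + 1))⁻¹) 1 := by
  convert hasSum_geometric_two' 1 using 2 with k
  rw [pow_succ]
  field_simp

theorem norm_mul_inv_two_pow_succ_le {a : ℝ} (ha : a ∈ Icc 0 1) (k : ℕ) :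
    ‖a * ((2 : ℝ) ^ (k + 1))⁻¹‖ ≤ ((2 : ℝ) ^ (k + 1))⁻¹ := by
  rw [Real.norm_of_nonneg (mul_nonneg ha.1 (by positivity))]
  exact mul_le_of_le_one_left (by positivity) ha.2

theorem binarySeries_mem_Icc (hu : ∀ k x, u k x ∈ Icc 0 1) (x : X) :
    binarySeries u x ∈ Icc 0 1 :=
  ⟨tsum_nonneg fun k => mul_nonneg (hu k x).1 (by positivity),
    (le_abs_self _).trans <| tsum_of_norm_bounded hasSum_inv_two_pow_succ fun k =>
      norm_mul_inv_two_pow_succ_le (hu k x) k⟩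

theorem continuous_binarySeries [TopologicalSpace X] (hu : ∀ k x, u k x ∈ Icc 0 1)
    (hc : ∀ k, Continuous (u k)) : Continuous (binarySeries u) :=
  continuous_tsum (fun k => (hc k).mul continuous_const) hasSum_inv_two_pow_succ.summable
    fun k x => norm_mul_inv_two_pow_succ_le (hu k x) k

theorem lipschitzOnWith_binarySeries [PseudoMetricSpace X] {K : ℝ≥0} {s : Set X}
    (hu : ∀ k x, u k x ∈ Icc 0 1) (hL : ∀ k, LipschitzOnWith K (u k) s) :
    LipschitzOnWith K (binarySeries u) s := by
  refine LipschitzOnWith.of_dist_le_mul fun x hx z hz => ?_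
  have hsummable (y : X) : Summable fun k => u k y * ((2 : ℝ) ^ (k + 1))⁻¹ :=
    hasSum_inv_two_pow_succ.summable.of_norm_bounded fun k =>
      norm_mul_inv_two_pow_succ_le (hu k y) k
  rw [dist_eq_norm, binarySeries, binarySeries, ← (hsummable x).tsum_sub (hsummable z)]
  refine tsum_of_norm_bounded (by simpa using hasSum_inv_two_pow_succ.mul_left (K * dist x z))
    fun k => ?_
  rw [← sub_mul, norm_mul, Real.norm_of_nonneg (by positivity : (0 : ℝ) ≤ ((2 : ℝ) ^ (k + 1))⁻¹),
    ← dist_eq_norm]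
  exact mul_le_mul_of_nonneg_right ((hL k).dist_le_mul x hx z hz) (by positivity)

theorem binarySeries_eq_ofDigits {x : X} {d : ℕ → Fin 2} (hd : ∀ k, u k x = d k) :
    binarySeries u x = Real.ofDigits d :=
  tsum_congr fun k => by simp [Real.ofDigitsTerm, hd]

end BinarySeries

theorem MeasurableSet.exists_nat_bool_injection_of_not_countable {α : Type*}
    [TopologicalSpace α] [PolishSpace α] [MeasurableSpace α] [BorelSpace α] {E : Set α}
    (hE : MeasurableSet E) (hunc : ¬E.Countable) :
    ∃ h : (ℕ → Bool) → α, range h ⊆ E ∧ Continuous h ∧ Function.Injective h := by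
  obtain ⟨τ, hτ, hτPolish, hEclosed, -⟩ := hE.isClopenable
  obtain ⟨h, hrange, hcont, hinj⟩ :=
    @IsClosed.exists_nat_bool_injection_of_not_countable α τ hτPolish E hEclosed hunc
  exact ⟨h, hrange, continuous_le_rng hτ hcont, hinj⟩

section CantorCoding

def evenDigits (b : ℕ → Bool) (k : ℕ) : Fin 2 :=
  finTwoEquiv.symm (b (2 * k))

theorem infinite_setOf_ofDigits_evenDigits_eq {y : ℝ} (hy : y ∈ Icc 0 1) :
    {b : ℕ → Bool | Real.ofDigits (evenDigits b) = y}.Infinite := by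
  obtain ⟨d, -, hd⟩ := Real.ofDigits_SurjOn one_lt_two hy
  let interleave (o : ℕ → Bool) (n : ℕ) : Bool :=
    if n % 2 = 0 then finTwoEquiv (d (n / 2)) else o (n / 2)
  refine Set.infinite_of_injective_forall_mem (f := interleave) (fun o o' heq => ?_) fun o => ?_
  · funext m
    simpa [interleave, Nat.add_mod, Nat.add_div] using congrFun heq (2 * m + 1)
  · rw [mem_ofPred_eq, ← hd]
    congr 1
    funext k
    simp [evenDigits, interleave]

variable {X : Type*} {h : (ℕ → Bool) → X}

def evenCylinder (h : (ℕ → Bool) → X) (k : ℕ) (β : Bool) : Set X :=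
  h '' {b | b (2 * k) = β}

theorem evenCylinder_nonempty (k : ℕ) (β : Bool) : (evenCylinder h k β).Nonempty :=
  ⟨h fun _ => β, fun _ => β, rfl, rfl⟩

theorem disjoint_evenCylinder (hinj : Function.Injective h) (k : ℕ) :
    Disjoint (evenCylinder h k false) (evenCylinder h k true) :=
  (disjoint_image_iff hinj).2 <| disjoint_left.2 fun b hf ht => by simp_all

variable [MetricSpace X]

theorem isClosed_evenCylinder (hh : Continuous h) (k : ℕ) (β : Bool) :
    IsClosed (evenCylinder h k β) :=
  ((isClosed_eq (continuous_apply _) continuous_const).isCompact.image hh).isClosed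

noncomputable def evenDigitsExtension (h : (ℕ → Bool) → X) : X → ℝ :=
  binarySeries fun k => urysohnRatio (evenCylinder h k false) (evenCylinder h k true)

theorem evenDigitsExtension_mem_Icc (x : X) : evenDigitsExtension h x ∈ Icc 0 1 :=
  binarySeries_mem_Icc (fun _ _ => urysohnRatio_mem_Icc _) x

theorem continuous_evenDigitsExtension (hh : Continuous h) (hinj : Function.Injective h) :
    Continuous (evenDigitsExtension h) :=
  continuous_binarySeries (fun _ _ => urysohnRatio_mem_Icc _) fun k =>
    continuous_urysohnRatio (isClosed_evenCylinder hh k _) (isClosed_evenCylinder hh k _)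
      (evenCylinder_nonempty k _) (evenCylinder_nonempty k _) (disjoint_evenCylinder hinj k)

theorem evenDigitsExtension_apply (hh : Continuous h) (hinj : Function.Injective h)
    (b : ℕ → Bool) : evenDigitsExtension h (h b) = Real.ofDigits (evenDigits b) := by
  refine binarySeries_eq_ofDigits fun k => ?_
  have hmem : h b ∈ evenCylinder h k (b (2 * k)) := ⟨b, rfl, rfl⟩
  cases hb : b (2 * k) <;> rw [hb] at hmem
  · simp [urysohnRatio_of_mem_left hmem, evenDigits, finTwoEquiv, hb]
  · simp [urysohnRatio_of_mem_right (isClosed_evenCylinder hh k _) (evenCylinder_nonempty k _)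
      (disjoint_evenCylinder hinj k) ⟨b, hb, rfl⟩, evenDigits, finTwoEquiv, hb]

theorem lipschitzOnWith_evenDigitsExtension {r : ℝ≥0} (hr : 0 < r) :
    LipschitzOnWith r⁻¹ (evenDigitsExtension h) {x | r ≤ infDist x (range h)} :=
  lipschitzOnWith_binarySeries (fun _ _ => urysohnRatio_mem_Icc _) fun k =>
    (lipschitzOnWith_urysohnRatio hr).mono fun x (hx : (r : ℝ) ≤ infDist x (range h)) =>
      calc (r : ℝ) ≤ infDist x (range h) := hx
        _ ≤ infDist x (evenCylinder h k false) :=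
          infDist_le_infDist_of_subset (image_subset_range _ _) (evenCylinder_nonempty k _)
        _ ≤ _ := le_add_of_nonneg_right infDist_nonneg

end CantorCoding

/-- For every uncountable Borel set `E ⊆ [0,1]` there is a continuous
`f : [0,1] → [0,1]` whose upper-scaled oscillation is finite at every point of
`[0,1] \ E`, all of whose level sets are infinite. -/
theorem stmt8 (E : Set ℝ) (hE : E ⊆ Set.Icc 0 1) (hBorel : MeasurableSet E)
    (hunc : ¬ E.Countable) :
    ∃ f : ℝ → ℝ,
      ContinuousOn f (Set.Icc 0 1) ∧
      Set.MapsTo f (Set.Icc 0 1) (Set.Icc 0 1) ∧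
      (∀ x ∈ Set.Icc (0:ℝ) 1 \ E, upperScaledOsc (Set.Icc 0 1) f x < ⊤) ∧
      (∀ y ∈ Set.Icc (0:ℝ) 1, (Set.Icc (0:ℝ) 1 ∩ f ⁻¹' {y}).Infinite) := by
  obtain ⟨h, hhE, hh, hinj⟩ := hBorel.exists_nat_bool_injection_of_not_countable hunc
  refine ⟨evenDigitsExtension h, (continuous_evenDigitsExtension hh hinj).continuousOn,
    fun x _ => evenDigitsExtension_mem_Icc x, fun x hx => ?_, fun y hy => ?_⟩
  · have hpos : 0 < infDist x (range h) :=
      ((isCompact_range hh).isClosed.notMem_iff_infDist_pos (range_nonempty h)).1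
        fun hxh => hx.2 (hhE hxh)
    obtain ⟨r, hr, hrx⟩ := exists_between (Real.toNNReal_pos.2 hpos)
    exact upperScaledOsc_lt_top_of_lipschitzOnWith
      ((continuous_infDist_pt _).continuousAt.preimage_mem_nhds
        (Ici_mem_nhds (Real.lt_toNNReal_iff_coe_lt.1 hrx)))
      (lipschitzOnWith_evenDigitsExtension hr)
  · refine ((infinite_setOf_ofDigits_evenDigits_eq hy).image hinj.injOn).mono ?_
    rintro _ ⟨b, hb, rfl⟩
    exact ⟨hE (hhE (mem_range_self b)), by simpa [evenDigitsExtension_apply hh hinj] using hb⟩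
end

section
/- For every integer m ≥ 2 there exists a continuous function f : [0,1]^m → [0,1] such that the upper-scaled oscillation L_f(x) is finite for every x ∈ [0,1]^m, and for every y ∈ [0,1] the level set f⁻¹(y) has infinite (m−1)-dimensional Hausdorff measure. -/
open Set MeasureTheory Metric Filter
open scoped ENNReal NNReal Topology

section ScaledOscAux

/-- staircase: continuous, 2-Lipschitz, |stairs u - u| ≤ 1/2, flat near integers. -/
noncomputable def stairs (u : ℝ) : ℝ := ⌊u⌋ + min 1 (max 0 (2 * Int.fract u - 1/2))

lemma stairs_flat {k : ℤ} {u : ℝ} (h1 : (k:ℝ) - 1/4 ≤ u) (h2 : u ≤ (k:ℝ) + 1/4) :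
    stairs u = k := by
  rcases le_or_gt (k:ℝ) u with h | h
  · have hf : ⌊u⌋ = k := by
      rw [Int.floor_eq_iff]
      constructor
      · exact_mod_cast h
      · push_cast; linarith
    have hfr : Int.fract u = u - k := by rw [Int.fract, hf]
    have : max 0 (2 * Int.fract u - 1/2) = 0 := by
      rw [max_eq_left]; rw [hfr]; linarith
    rw [stairs, this, hf]; simp
  · have hf : ⌊u⌋ = k - 1 := by
      rw [Int.floor_eq_iff]
      constructor
      · push_cast; linarith
      · push_cast; linarith
    have hfr : Int.fract u = u - (k - 1) := by rw [Int.fract, hf]; push_cast; ring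
    have h34 : (3:ℝ)/4 ≤ u - (k-1) := by linarith
    have : min 1 (max 0 (2 * Int.fract u - 1/2)) = 1 := by
      rw [min_eq_left]
      rw [hfr, le_max_iff]; right; linarith
    rw [stairs, this, hf]; push_cast; ring

lemma abs_stairs_sub (u : ℝ) : |stairs u - u| ≤ 1/2 := by
  have h0 : (0:ℝ) ≤ Int.fract u := Int.fract_nonneg u
  have h1 : Int.fract u < 1 := Int.fract_lt_one u
  set t := Int.fract u with ht
  have key : stairs u - u = min 1 (max 0 (2 * t - 1/2)) - t := by
    rw [stairs, ht, Int.fract]; ring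
  rw [key, abs_le]
  rcases le_total t (1/4) with h | h
  · have : max 0 (2*t - 1/2) = 0 := max_eq_left (by linarith)
    rw [this]; constructor
    · simp; linarith
    · simp; linarith
  · rcases le_total t (3/4) with h' | h'
    · have h3 : max 0 (2*t - 1/2) = 2*t - 1/2 := max_eq_right (by linarith)
      have h4 : min 1 (2*t-1/2) = 2*t - 1/2 := min_eq_right (by linarith)
      rw [h3, h4]; constructor <;> linarith
    · have hm : max 0 (2*t - 1/2) = 2*t - 1/2 := max_eq_right (by linarith)
      have : min 1 (max 0 (2*t-1/2)) = 1 := min_eq_left (by rw [hm]; linarith)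
      rw [this]; constructor <;> linarith
lemma stairs_mono : Monotone stairs := by
  intro u v huv
  rcases eq_or_lt_of_le (Int.floor_mono huv) with hf | hf
  · unfold stairs
    rw [← hf]
    have : Int.fract u ≤ Int.fract v := by
      rw [Int.fract, Int.fract, ← hf]; linarith
    have := min_le_min (le_refl (1:ℝ)) (max_le_max (le_refl (0:ℝ)) (by linarith : 2 * Int.fract u - 1/2 ≤ 2 * Int.fract v - 1/2))
    linarith
  · have h1 : stairs u ≤ ⌊u⌋ + 1 := by
      unfold stairs
      have := min_le_left (1:ℝ) (max 0 (2 * Int.fract u - 1/2))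
      linarith
    have h2 : (⌊v⌋:ℝ) ≤ stairs v := by
      unfold stairs
      have : (0:ℝ) ≤ min 1 (max 0 (2 * Int.fract v - 1/2)) := le_min (by norm_num) (le_max_left _ _)
      linarith
    have : (⌊u⌋:ℝ) + 1 ≤ (⌊v⌋:ℝ) := by exact_mod_cast hf
    linarith

noncomputable def cfun (t : ℝ) : ℝ := min 1 (max 0 (2 * t - 1/2)) - 2 * t

lemma cfun_anti : Antitone cfun := by
  have key : cfun = fun t => min (1 - 2*t) (max (-(2*t)) (-(1/2))) := by
    funext t
    rw [cfun]
    rcases le_total (1:ℝ) (max 0 (2*t-1/2)) with hc | hc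
    · rw [min_eq_left hc]
      rcases le_total (0:ℝ) (2*t-1/2) with hd | hd
      · rw [max_eq_right hd] at hc
        rw [min_eq_left (le_trans (by linarith : 1-2*t ≤ -(1/2)) (le_max_right _ _))]
      · rw [max_eq_left hd] at hc; linarith
    · rw [min_eq_right hc]
      rcases le_total (0:ℝ) (2*t-1/2) with hd | hd
      · rw [max_eq_right hd] at hc ⊢
        rw [min_eq_right (max_le (by linarith) (by linarith)),
            max_eq_right (by linarith : -(2*t) ≤ -(1/2))]
        ring
      · rw [max_eq_left hd] at hc ⊢
        rw [min_eq_right (max_le (by linarith) (by linarith)),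
            max_eq_left (by linarith : -(1/2) ≤ -(2*t))]
        ring
  rw [key]
  apply Antitone.min
  · intro a b hab; simp only; linarith
  · apply Antitone.max
    · intro a b hab; simp only; linarith
    · exact antitone_const

lemma cfun_nonpos {t : ℝ} (h : 0 ≤ t) : cfun t ≤ 0 := by
  have h1 : min 1 (max 0 (2*t-1/2)) ≤ max 0 (2*t-1/2) := min_le_right _ _
  have h2 : max (0:ℝ) (2*t-1/2) ≤ 2*t := max_le (by linarith) (by linarith)
  rw [cfun]; linarith

lemma cfun_gt {t : ℝ} (h : t < 1) : -1 < cfun t := by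
  rw [cfun]
  rcases le_total (1:ℝ) (max 0 (2*t-1/2)) with hc | hc
  · rw [min_eq_left hc]; linarith
  · rw [min_eq_right hc]
    have h4 := le_max_right (0:ℝ) (2*t-1/2)
    linarith

lemma stairs_eq_cfun (u : ℝ) : stairs u - 2 * u = -⌊u⌋ + cfun (Int.fract u) := by
  rw [stairs, cfun, Int.fract]; ring

lemma stairs_anti2 {u v : ℝ} (huv : u ≤ v) : stairs v - 2*v ≤ stairs u - 2*u := by
  rw [stairs_eq_cfun, stairs_eq_cfun]
  rcases eq_or_lt_of_le (Int.floor_mono huv) with hf | hf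
  · rw [← hf]
    have : Int.fract u ≤ Int.fract v := by
      rw [Int.fract, Int.fract, ← hf]; linarith
    have := cfun_anti this
    linarith
  · have h1 : cfun (Int.fract v) ≤ 0 := cfun_nonpos (Int.fract_nonneg v)
    have h2 : -1 < cfun (Int.fract u) := cfun_gt (Int.fract_lt_one u)
    have : (⌊u⌋:ℝ) + 1 ≤ (⌊v⌋:ℝ) := by exact_mod_cast hf
    linarith

lemma stairs_lip (u v : ℝ) : |stairs u - stairs v| ≤ 2 * |u - v| := by
  rcases le_total u v with h | h
  · have h1 : stairs u ≤ stairs v := stairs_mono h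
    have h2 := stairs_anti2 h
    have e1 : |stairs u - stairs v| = stairs v - stairs u := by
      rw [abs_sub_comm]; exact abs_of_nonneg (by linarith)
    have e2 : |u - v| = v - u := by
      rw [abs_sub_comm]; exact abs_of_nonneg (by linarith)
    rw [e1, e2]; linarith
  · have h1 : stairs v ≤ stairs u := stairs_mono h
    have h2 := stairs_anti2 h
    rw [abs_of_nonneg (by linarith : (0:ℝ) ≤ stairs u - stairs v),
        abs_of_nonneg (by linarith : (0:ℝ) ≤ u - v)]
    linarith

lemma stairs_nonneg {u : ℝ} (h : 0 ≤ u) : 0 ≤ stairs u := by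
  have h0 : stairs 0 = 0 := by
    have := stairs_flat (k := 0) (u := 0) (by norm_num) (by norm_num)
    simpa using this
  rw [← h0]; exact stairs_mono h

/-- The 2D building block. For `a ≠ 0`, `gg a b = a * stairs (b/a)`; `gg 0 b = b`. -/
noncomputable def gg (a b : ℝ) : ℝ := b + a * (stairs (b/a) - b/a)

lemma gg_zero (b : ℝ) : gg 0 b = b := by simp [gg]

lemma gg_of_ne {a : ℝ} (ha : a ≠ 0) (b : ℝ) : gg a b = a * stairs (b/a) := by
  rw [gg]; field_simp; ring

lemma gg_nonneg {a b : ℝ} (ha : 0 ≤ a) (hb : 0 ≤ b) : 0 ≤ gg a b := by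
  rcases eq_or_lt_of_le ha with h | h
  · rw [← h, gg_zero]; exact hb
  · rw [gg_of_ne (ne_of_gt h)]
    exact mul_nonneg (le_of_lt h) (stairs_nonneg (div_nonneg hb (le_of_lt h)))

lemma gg_near_edge {a : ℝ} (ha : 0 ≤ a) (b : ℝ) : |gg a b - b| ≤ a / 2 := by
  have : gg a b - b = a * (stairs (b/a) - b/a) := by rw [gg]; ring
  rw [this, abs_mul, abs_of_nonneg ha]
  have := abs_stairs_sub (b/a)
  nlinarith

lemma gg_lip {a b a₀ b₀ : ℝ} (ha0 : 0 < a₀) (haa : a₀/2 ≤ a)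
    (hb0 : 0 ≤ b₀) (hb1 : b₀ ≤ 1) :
    |gg a b - gg a₀ b₀| ≤ (8 + 6/a₀) * (|a - a₀| + |b - b₀|) := by
  have ha : 0 < a := lt_of_lt_of_le (by linarith) haa
  set u := b/a with hu
  set u₀ := b₀/a₀ with hu₀
  have hβu := abs_stairs_sub u
  have hβu₀ := abs_stairs_sub u₀
  have hlip := stairs_lip u u₀
  have hA := abs_nonneg (a - a₀)
  have hB := abs_nonneg (b - b₀)
  have hU := abs_nonneg (u - u₀)
  have h2 : |(stairs u - u) - (stairs u₀ - u₀)| ≤ 3 * |u - u₀| := by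
    have e : (stairs u - u) - (stairs u₀ - u₀) = (stairs u - stairs u₀) + (-(u - u₀)) := by
      ring
    rw [e]
    refine le_trans (abs_add_le _ _) ?_
    rw [abs_neg]
    linarith
  have t0 : |(a - a₀)*(stairs u - u) + a₀*((stairs u - u) - (stairs u₀ - u₀))|
      ≤ |a - a₀| * (1/2) + a₀ * (3 * |u - u₀|) := by
    refine le_trans (abs_add_le _ _) ?_
    rw [abs_mul, abs_mul, abs_of_pos ha0]
    have t1 : |a - a₀| * |stairs u - u| ≤ |a - a₀| * (1/2) :=
      mul_le_mul_of_nonneg_left hβu hA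
    have t2 : a₀ * |(stairs u - u) - (stairs u₀ - u₀)| ≤ a₀ * (3 * |u - u₀|) :=
      mul_le_mul_of_nonneg_left h2 (le_of_lt ha0)
    linarith
  have h1 : |gg a b - gg a₀ b₀| ≤
      |b - b₀| + (|a - a₀| * (1/2) + a₀ * (3 * |u - u₀|)) := by
    have e : gg a b - gg a₀ b₀ =
        (b - b₀) + ((a - a₀)*(stairs u - u) + a₀*((stairs u - u) - (stairs u₀ - u₀))) := by
      rw [gg, gg]; ring
    rw [e]
    exact le_trans (abs_add_le _ _) (by linarith)
  have hnum : |u - u₀| * (a * a₀) = |b*a₀ - b₀*a| := by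
    rw [← abs_of_pos (mul_pos ha ha0), ← abs_mul]
    congr 1
    rw [hu, hu₀]
    field_simp
  have hnum2 : |b*a₀ - b₀*a| ≤ |b - b₀| * a₀ + |a - a₀| := by
    have e : b*a₀ - b₀*a = (b - b₀)*a₀ + b₀*(a₀ - a) := by ring
    refine le_trans (le_of_eq (congrArg abs e)) (le_trans (abs_add_le _ _) ?_)
    rw [abs_mul, abs_mul, abs_of_pos ha0, abs_of_nonneg hb0, abs_sub_comm a₀ a]
    nlinarith
  have h3 : a₀ * |u - u₀| ≤ 2 * |b - b₀| + (2/a₀) * |a - a₀| := by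
    have hpos : (0:ℝ) < a * a₀ := mul_pos ha ha0
    have key : a₀ * |u - u₀| * (a * a₀) ≤ (2 * |b - b₀| + (2/a₀) * |a - a₀|) * (a * a₀) := by
      have e2 : (2/a₀) * |a - a₀| * (a*a₀) = 2 * |a - a₀| * a := by field_simp
      have lhs : a₀ * |u - u₀| * (a * a₀) = a₀ * |b*a₀ - b₀*a| := by
        rw [mul_assoc, hnum]
      rw [lhs]
      have expand : (2 * |b - b₀| + (2/a₀) * |a - a₀|) * (a * a₀)
          = 2 * |b - b₀| * (a*a₀) + 2 * |a - a₀| * a := by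
        rw [add_mul, e2]
      rw [expand]
      nlinarith [mul_le_mul_of_nonneg_left hnum2 (le_of_lt ha0),
        mul_nonneg hA (by linarith : (0:ℝ) ≤ 2*a - a₀),
        mul_nonneg (mul_nonneg hB (le_of_lt ha0)) (by linarith : (0:ℝ) ≤ 2*a - a₀)]
    exact le_of_mul_le_mul_right key hpos
  have hfrac : 0 ≤ 6/a₀ := by positivity
  have hc : (6:ℝ)/a₀ = 3*(2/a₀) := by ring
  nlinarith [mul_nonneg hfrac hB]

lemma gg_flat {c b y : ℝ} {k : ℤ} (hc : 0 < c) (hy : y = k * c) (hb : |b - y| ≤ c/4) :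
    gg c b = y := by
  rw [gg_of_ne (ne_of_gt hc)]
  have hb' := abs_le.1 hb
  have h1 : (k:ℝ) - 1/4 ≤ b/c := by
    rw [le_div_iff₀ hc]; nlinarith [hb'.1]
  have h2 : b/c ≤ (k:ℝ) + 1/4 := by
    rw [div_le_iff₀ hc]; nlinarith [hb'.2]
  rw [stairs_flat h1 h2, hy]; ring

lemma osc_lt_top {E F : Type*} [PseudoMetricSpace E] [PseudoMetricSpace F]
    {A : Set E} {f : E → F} {x : E}
    {C ε : ℝ} (hC : 0 ≤ C) (hε : 0 < ε)
    (hb : ∀ y ∈ A, dist y x ≤ ε → dist (f y) (f x) ≤ C * dist y x) :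
    upperScaledOsc A f x < ⊤ := by
  refine lt_of_le_of_lt (?_ : _ ≤ ENNReal.ofReal C) ENNReal.ofReal_lt_top
  apply Filter.limsup_le_of_le
  · isBoundedDefault
  filter_upwards [Ioc_mem_nhdsGT_of_mem (⟨le_refl (0:ℝ), hε⟩ : (0:ℝ) ∈ Ico (0:ℝ) ε)]
  intro r hr
  have hr0 : 0 < r := hr.1
  have hsup : (⨆ (y : E) (_ : y ∈ A) (_ : dist y x ≤ r), ENNReal.ofReal (dist (f y) (f x)))
      ≤ ENNReal.ofReal (C * r) := by
    refine iSup_le fun y => iSup_le fun hy => iSup_le fun hd => ?_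
    apply ENNReal.ofReal_le_ofReal
    calc dist (f y) (f x) ≤ C * dist y x := hb y hy (le_trans hd hr.2)
      _ ≤ C * r := mul_le_mul_of_nonneg_left hd hC
  calc (⨆ (y : E) (_ : y ∈ A) (_ : dist y x ≤ r), ENNReal.ofReal (dist (f y) (f x)))
        / ENNReal.ofReal r
      ≤ ENNReal.ofReal (C * r) / ENNReal.ofReal r := by
        exact ENNReal.div_le_div_right hsup _
    _ = ENNReal.ofReal C * (ENNReal.ofReal r / ENNReal.ofReal r) := by
        rw [ENNReal.ofReal_mul hC, mul_div_assoc]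
    _ = ENNReal.ofReal C := by
        rw [ENNReal.div_self (by simp [hr0]) ENNReal.ofReal_ne_top, mul_one]

lemma isometry_cons {n : ℕ} (c : ℝ) :
    Isometry (fun z : Fin n → ℝ => (Fin.cons c z : Fin (n+1) → ℝ)) := by
  intro z w
  rw [edist_pi_def, edist_pi_def]
  apply le_antisymm
  · apply Finset.sup_le
    intro i _
    induction i using Fin.cases with
    | zero => simp
    | succ j =>
      simp only [Fin.cons_succ]
      exact Finset.le_sup (f := fun b => edist (z b) (w b)) (Finset.mem_univ j)
  · apply Finset.sup_le
    intro j _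
    have h : edist (z j) (w j)
        = (fun i : Fin (n+1) => edist ((Fin.cons c z : Fin (n+1) → ℝ) i) ((Fin.cons c w : Fin (n+1) → ℝ) i)) (Fin.succ j) := by
      simp
    rw [h]
    exact Finset.le_sup
      (f := fun i : Fin (n+1) => edist ((Fin.cons c z : Fin (n+1) → ℝ) i) ((Fin.cons c w : Fin (n+1) → ℝ) i))
      (Finset.mem_univ (Fin.succ j))

lemma slice_measure {n : ℕ} (c : ℝ) (lo hi : Fin n → ℝ) :
    μH[(n:ℝ)] ((fun z : Fin n → ℝ => (Fin.cons c z : Fin (n+1) → ℝ)) '' (Icc lo hi))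
      = ∏ i, ENNReal.ofReal (hi i - lo i) := by
  rw [(isometry_cons c).hausdorffMeasure_image (Or.inl (Nat.cast_nonneg n))]
  have hcard : ((n:ℝ)) = ((Fintype.card (Fin n) : ℕ) : ℝ) := by simp
  rw [hcard, hausdorffMeasure_pi_real, Real.volume_Icc_pi]

lemma tsum_harmonic_top {t : ℝ} (ht : 0 < t) :
    ∑' n : ℕ, ENNReal.ofReal (t / (4*((n:ℝ)+1))) = ⊤ := by
  by_contra h
  have hsum : Summable (fun n : ℕ => (t / (4*((n:ℝ)+1))).toNNReal) :=
    ENNReal.tsum_coe_ne_top_iff_summable.1 h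
  have hsum2 : Summable (fun n : ℕ => t / (4*((n:ℝ)+1))) := by
    have := NNReal.summable_coe.2 hsum
    refine this.congr fun n => ?_
    exact Real.coe_toNNReal _ (by positivity)
  have hsum3 : Summable (fun n : ℕ => 1 / ((n:ℝ)+1)) := by
    have := hsum2.mul_left (4/t)
    refine this.congr fun n => ?_
    field_simp
  exact (mt (summable_nat_add_iff 1).1 Real.not_summable_one_div_natCast)
    (by exact_mod_cast hsum3)

lemma abs_min_one (x y : ℝ) : |min 1 x - min 1 y| ≤ |x - y| := by
  have h := abs_min_sub_min_le_max 1 x 1 y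
  rw [sub_self, abs_zero, max_eq_right (abs_nonneg _)] at h
  exact h

lemma cwa_of_bound {E : Type*} [PseudoMetricSpace E] {A : Set E} {f : E → ℝ} {p : E}
    {C ε : ℝ} (hC : 0 ≤ C) (hε : 0 < ε)
    (hb : ∀ y ∈ A, dist y p ≤ ε → |f y - f p| ≤ C * dist y p) :
    ContinuousWithinAt f A p := by
  rw [Metric.continuousWithinAt_iff]
  intro δ hδ
  refine ⟨min ε (δ/(C+1)), by positivity, fun {y} hy hdy => ?_⟩
  have h1 : dist y p ≤ ε := le_trans (le_of_lt hdy) (min_le_left _ _)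
  have h2 : dist y p < δ/(C+1) := lt_of_lt_of_le hdy (min_le_right _ _)
  have h3 : dist y p * (C+1) < (δ/(C+1)) * (C+1) :=
    mul_lt_mul_of_pos_right h2 (by linarith)
  rw [div_mul_cancel₀ _ (by linarith : C + 1 ≠ 0)] at h3
  have h4 := hb y hy h1
  have h5 := dist_nonneg (x := y) (y := p)
  rw [Real.dist_eq]
  nlinarith

end ScaledOscAux

/-- For every `m ≥ 2` there is a continuous `f : [0,1]^m → [0,1]` with finite
upper-scaled oscillation at every point, all of whose level sets have infinite
`H^{m-1}` measure. -/
theorem stmt9 (m : ℕ) (hm : 2 ≤ m) :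
    ∃ f : (Fin m → ℝ) → ℝ,
      ContinuousOn f (Set.Icc 0 1) ∧
      Set.MapsTo f (Set.Icc 0 1) (Set.Icc 0 1) ∧
      (∀ x ∈ Set.Icc (0 : Fin m → ℝ) 1, upperScaledOsc (Set.Icc 0 1) f x < ⊤) ∧
      (∀ y ∈ Set.Icc (0:ℝ) 1,
        μH[(m : ℝ) - 1] (Set.Icc (0 : Fin m → ℝ) 1 ∩ f ⁻¹' {y}) = ⊤) := by
  obtain ⟨n, rfl⟩ : ∃ n, m = n + 1 := ⟨m - 1, by omega⟩
  have hn : 1 ≤ n := by omega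
  haveI : NeZero n := ⟨by omega⟩
  set F : (Fin (n+1) → ℝ) → ℝ := fun x => min 1 (gg (x 0) (x 1)) with hFdef
  have coord : ∀ x : Fin (n+1) → ℝ, x ∈ Set.Icc 0 1 → ∀ i, 0 ≤ x i ∧ x i ≤ 1 := by
    intro x hx i
    exact ⟨by simpa using hx.1 i, by simpa using hx.2 i⟩
  -- the key pointwise Lipschitz bound
  have key : ∀ p ∈ Set.Icc (0 : Fin (n+1) → ℝ) 1, ∃ C ε : ℝ, 0 ≤ C ∧ 0 < ε ∧
      ∀ x ∈ Set.Icc (0 : Fin (n+1) → ℝ) 1, dist x p ≤ ε → |F x - F p| ≤ C * dist x p := by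
    intro p hp
    have hp0 := coord p hp 0
    have hp1 := coord p hp 1
    rcases eq_or_lt_of_le hp0.1 with h0 | h0
    · -- p 0 = 0 : edge case
      refine ⟨2, 1, by norm_num, one_pos, fun x hx _ => ?_⟩
      have hx0 := coord x hx 0
      have d0 : |x 0 - p 0| ≤ dist x p := by
        rw [← Real.dist_eq]; exact dist_le_pi_dist x p 0
      have d1 : |x 1 - p 1| ≤ dist x p := by
        rw [← Real.dist_eq]; exact dist_le_pi_dist x p 1
      have hFp : F p = min 1 (p 1) := by
        rw [hFdef]; simp only
        rw [← h0, gg_zero]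
      have step : |F x - F p| ≤ |gg (x 0) (x 1) - p 1| := by
        have hfx : F x = min 1 (gg (x 0) (x 1)) := rfl
        rw [hfx, hFp]
        exact abs_min_one _ _
      have hedge := gg_near_edge hx0.1 (x 1)
      have htri : |gg (x 0) (x 1) - p 1| ≤ |gg (x 0) (x 1) - x 1| + |x 1 - p 1| := by
        have e : gg (x 0) (x 1) - p 1 = (gg (x 0) (x 1) - x 1) + (x 1 - p 1) := by ring
        rw [e]; exact abs_add_le _ _
      have hx0d : x 0 ≤ dist x p := by
        have : |x 0 - p 0| = x 0 := by rw [← h0, sub_zero, abs_of_nonneg hx0.1]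
        linarith
      have hd := dist_nonneg (x := x) (y := p)
      calc |F x - F p| ≤ |gg (x 0) (x 1) - x 1| + |x 1 - p 1| := le_trans step htri
        _ ≤ x 0 / 2 + dist x p := by linarith
        _ ≤ 2 * dist x p := by linarith
    · -- interior case
      refine ⟨16 + 12/(p 0), (p 0)/2, by positivity, by positivity, fun x hx hdist => ?_⟩
      have d0 : |x 0 - p 0| ≤ dist x p := by
        rw [← Real.dist_eq]; exact dist_le_pi_dist x p 0
      have d1 : |x 1 - p 1| ≤ dist x p := by
        rw [← Real.dist_eq]; exact dist_le_pi_dist x p 1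
      have hxa : (p 0)/2 ≤ x 0 := by
        have := abs_le.1 (le_trans d0 hdist)
        linarith [this.1]
      have hgl := gg_lip (a := x 0) (b := x 1) h0 hxa hp1.1 hp1.2
      have hmin : |F x - F p| ≤ |gg (x 0) (x 1) - gg (p 0) (p 1)| := abs_min_one _ _
      have h8 : (0:ℝ) ≤ 8 + 6/(p 0) := by positivity
      have hsum2 : |x 0 - p 0| + |x 1 - p 1| ≤ 2 * dist x p := by linarith
      calc |F x - F p| ≤ (8 + 6/(p 0)) * (|x 0 - p 0| + |x 1 - p 1|) := le_trans hmin hgl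
        _ ≤ (8 + 6/(p 0)) * (2 * dist x p) := mul_le_mul_of_nonneg_left hsum2 h8
        _ = (16 + 12/(p 0)) * dist x p := by ring
  refine ⟨F, ?_, ?_, ?_, ?_⟩
  · -- continuity
    intro p hp
    obtain ⟨C, ε, hC, hε, hb⟩ := key p hp
    exact cwa_of_bound hC hε hb
  · -- maps to [0,1]
    intro x hx
    have hx0 := coord x hx 0
    have hx1 := coord x hx 1
    exact Set.mem_Icc.2 ⟨le_min zero_le_one (gg_nonneg hx0.1 hx1.1), min_le_left _ _⟩
  · -- finite upper scaled oscillation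
    intro x hx
    obtain ⟨C, ε, hC, hε, hb⟩ := key x hx
    refine osc_lt_top hC hε (fun z hz hd => ?_)
    rw [Real.dist_eq]
    exact hb z hz hd
  · -- level sets have infinite measure
    intro y hy
    rw [Set.mem_Icc] at hy
    have hcast : ((n+1 : ℕ) : ℝ) - 1 = (n:ℝ) := by push_cast; ring
    rw [hcast]
    set T : ℝ := if y = 0 then 1 else y with hT
    have hT0 : 0 < T := by
      rw [hT]; split_ifs with h
      · norm_num
      · exact lt_of_le_of_ne hy.1 (Ne.symm h)
    have hT1 : T ≤ 1 := by
      rw [hT]; split_ifs with h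
      · norm_num
      · exact hy.2
    set c : ℕ → ℝ := fun j => T / ((j:ℝ)+1) with hc
    have hc0 : ∀ j, 0 < c j := by
      intro j; simp only [hc]
      exact div_pos hT0 (by positivity)
    have hc1 : ∀ j, c j ≤ 1 := by
      intro j; simp only [hc]
      rw [div_le_one (by positivity)]
      have : (0:ℝ) ≤ (j:ℝ) := Nat.cast_nonneg j
      linarith
    set k : ℕ → ℤ := fun j => if y = 0 then 0 else ((j:ℤ)+1) with hk
    have hyk : ∀ j, y = (k j : ℝ) * c j := by
      intro j
      by_cases h : y = 0
      · simp [hk, h]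
      · simp only [hk, hc, hT, if_neg h]
        push_cast
        field_simp
    set lo1 : ℕ → ℝ := fun j => max (y - c j/4) 0 with hlo1
    set hi1 : ℕ → ℝ := fun j => min (y + c j/4) 1 with hhi1
    have hwin : ∀ j b, lo1 j ≤ b → b ≤ hi1 j → |b - y| ≤ c j / 4 := by
      intro j b h1 h2
      rw [hlo1] at h1; rw [hhi1] at h2
      have h3 : y - c j/4 ≤ b := le_trans (le_max_left _ _) h1
      have h4 : b ≤ y + c j/4 := le_trans h2 (min_le_left _ _)
      rw [abs_le]; constructor <;> linarith
    have hlo1nn : ∀ j, 0 ≤ lo1 j := fun j => le_max_right _ _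
    have hhi1le : ∀ j, hi1 j ≤ 1 := fun j => min_le_right _ _
    have hlen : ∀ j, c j/4 ≤ hi1 j - lo1 j := by
      intro j
      have h4 : c j / 4 ≤ 1/4 := by linarith [hc1 j]
      have hcj := hc0 j
      simp only [hlo1, hhi1]
      rcases le_total y (1/2) with hy2 | hy2
      · have e1 : min (y + c j/4) 1 = y + c j/4 := min_eq_left (by linarith)
        have e2 : max (y - c j/4) 0 ≤ y := max_le (by linarith) hy.1
        rw [e1]; linarith
      · have e2 : max (y - c j/4) 0 = y - c j/4 := max_eq_left (by linarith)
        have e1 : y ≤ min (y + c j/4) 1 := le_min (by linarith) hy.2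
        rw [e2]; linarith
    set lo : ℕ → Fin n → ℝ := fun j i => if i = 0 then lo1 j else 0 with hlo
    set hi : ℕ → Fin n → ℝ := fun j i => if i = 0 then hi1 j else 1 with hhi
    set S : ℕ → Set (Fin (n+1) → ℝ) := fun j =>
      (fun z : Fin n → ℝ => (Fin.cons (c j) z : Fin (n+1) → ℝ)) '' (Set.Icc (lo j) (hi j))
      with hS
    have hSsub : ∀ j, S j ⊆ Set.Icc 0 1 ∩ F ⁻¹' {y} := by
      intro j x hxS
      rw [hS] at hxS
      obtain ⟨z, hz, rfl⟩ := hxS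
      rw [Set.mem_Icc] at hz
      have hzlo : ∀ i, lo j i ≤ z i := fun i => hz.1 i
      have hzhi : ∀ i, z i ≤ hi j i := fun i => hz.2 i
      have hz0cd : ∀ i, 0 ≤ z i ∧ z i ≤ 1 := by
        intro i
        have h1 := hzlo i
        have h2 := hzhi i
        simp only [hlo] at h1; simp only [hhi] at h2
        by_cases hi0 : i = 0
        · rw [if_pos hi0] at h1 h2
          exact ⟨le_trans (hlo1nn j) h1, le_trans h2 (hhi1le j)⟩
        · rw [if_neg hi0] at h1 h2
          exact ⟨h1, h2⟩
      constructor
      · rw [Set.mem_Icc]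
        constructor
        · intro i
          induction i using Fin.cases with
          | zero => simpa using le_of_lt (hc0 j)
          | succ i => simpa using (hz0cd i).1
        · intro i
          induction i using Fin.cases with
          | zero => simpa using hc1 j
          | succ i => simpa using (hz0cd i).2
      · rw [Set.mem_preimage, Set.mem_singleton_iff]
        have e0 : (Fin.cons (c j) z : Fin (n+1) → ℝ) 0 = c j := Fin.cons_zero _ _
        have e1 : (Fin.cons (c j) z : Fin (n+1) → ℝ) 1 = z 0 := by
          rw [← Fin.succ_zero_eq_one', Fin.cons_succ]
        have hz0win : |z 0 - y| ≤ c j / 4 := by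
          apply hwin j
          · have h := hzlo 0; simp only [hlo] at h; simpa using h
          · have h := hzhi 0; simp only [hhi] at h; simpa using h
        have hggy : gg (c j) (z 0) = y := gg_flat (hc0 j) (hyk j) hz0win
        rw [hFdef]
        simp only
        rw [e0, e1, hggy]
        exact min_eq_right hy.2
    have hSmeas : ∀ j, MeasurableSet (S j) := by
      intro j
      simp only [hS]
      exact (isCompact_Icc.image (isometry_cons (c j)).continuous).measurableSet
    have hSdisj : Pairwise (Function.onFun Disjoint S) := by
      intro i j hij
      rw [Function.onFun, Set.disjoint_left]
      rintro x ⟨z, _, rfl⟩ ⟨w, _, hw⟩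
      apply hij
      have hceq : c j = c i := by
        have h := congrFun hw 0
        simpa using h
      simp only [hc] at hceq
      rw [div_eq_div_iff (by positivity) (by positivity)] at hceq
      have h2 := mul_left_cancel₀ (ne_of_gt hT0) hceq
      have h3 : (i:ℝ) = (j:ℝ) := by linarith
      exact_mod_cast h3
    have hSmeasure : ∀ j : ℕ, ENNReal.ofReal (T/(4*((j:ℝ)+1))) ≤ μH[(n:ℝ)] (S j) := by
      intro j
      simp only [hS]
      rw [slice_measure]
      have hprod : (∏ i, ENNReal.ofReal (hi j i - lo j i)) = ENNReal.ofReal (hi1 j - lo1 j) := by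
        rw [Fintype.prod_eq_single (0 : Fin n)]
        · simp [hhi, hlo]
        · intro b hb
          simp [hhi, hlo, hb]
      rw [hprod]
      apply ENNReal.ofReal_le_ofReal
      have he : T/(4*((j:ℝ)+1)) = c j / 4 := by
        simp only [hc]
        rw [div_div, mul_comm]
      rw [he]
      exact hlen j
    have hμU : μH[(n:ℝ)] (⋃ j, S j) = ∑' j, μH[(n:ℝ)] (S j) :=
      measure_iUnion hSdisj hSmeas
    apply top_le_iff.1
    calc (⊤:ℝ≥0∞) = ∑' j : ℕ, ENNReal.ofReal (T/(4*((j:ℝ)+1))) := (tsum_harmonic_top hT0).symm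
      _ ≤ ∑' j, μH[(n:ℝ)] (S j) := ENNReal.tsum_le_tsum hSmeasure
      _ = μH[(n:ℝ)] (⋃ j, S j) := hμU.symm
      _ ≤ μH[(n:ℝ)] (Set.Icc 0 1 ∩ F ⁻¹' {y}) :=
          measure_mono (Set.iUnion_subset hSsub)
end

section
/- Let f : [0,1]^m → ℝ be a function such that the upper-scaled oscillation L_f(x) is finite for every x ∈ [0,1]^m. Then [0,1]^m can be written as a countable union of sets E_1, E_2, … such that the restriction of f to each E_n is a Lipschitz function. -/
open Set MeasureTheory Metric Filter
open scoped ENNReal NNReal Topology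

/-!
Finite upper-scaled oscillation at `x` yields constants `K, δ > 0` with
`dist (f y) (f x) ≤ K * dist y x` whenever `y ∈ A` and `dist y x < δ`. Rounding `(K, δ)` to
`(n, 1/(n+1))` sorts the points of `A` into countably many classes; cutting each class along
balls of radius `1/(2(n+1))` around a dense sequence leaves pieces any two of whose points are
within `1/(n+1)` of each other, so the pointwise bound at either point makes `f` `n`-Lipschitz
on the piece.
-/

variable {E F : Type*} [PseudoMetricSpace E] [PseudoMetricSpace F]

def PointwiseLipschitzAt (A : Set E) (f : E → F) (K : ℝ≥0) (δ : ℝ) (x : E) : Prop :=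
  ∀ y ∈ A, dist y x < δ → dist (f y) (f x) ≤ K * dist y x

theorem PointwiseLipschitzAt.mono {A : Set E} {f : E → F} {K K' : ℝ≥0} {δ δ' : ℝ} {x : E}
    (h : PointwiseLipschitzAt A f K δ x) (hK : K ≤ K') (hδ : δ' ≤ δ) :
    PointwiseLipschitzAt A f K' δ' x := fun y hy hyx =>
  (h y hy (hyx.trans_le hδ)).trans (mul_le_mul_of_nonneg_right hK dist_nonneg)

theorem PointwiseLipschitzAt.exists_nat {A : Set E} {f : E → F} {K : ℝ≥0} {δ : ℝ} {x : E}
    (h : PointwiseLipschitzAt A f K δ x) (hδ : 0 < δ) :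
    ∃ n : ℕ, PointwiseLipschitzAt A f n (n + 1 : ℝ)⁻¹ x := by
  obtain ⟨N, hN⟩ := exists_nat_one_div_lt hδ
  refine ⟨max ⌈K⌉₊ N, h.mono ((Nat.le_ceil K).trans (mod_cast le_max_left _ _)) ?_⟩
  rw [← one_div]
  refine (one_div_le_one_div_of_le (by positivity) ?_).trans hN.le
  gcongr
  exact_mod_cast le_max_right _ _

theorem lipschitzOnWith_of_pointwiseLipschitzAt {A S : Set E} {f : E → F} {K : ℝ≥0} {δ : ℝ}
    (hSA : S ⊆ A) (hS : ∀ x ∈ S, PointwiseLipschitzAt A f K δ x)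
    (hdist : ∀ x ∈ S, ∀ y ∈ S, dist x y < δ) : LipschitzOnWith K f S :=
  LipschitzOnWith.of_dist_le_mul fun x hx y hy => hS y hy x (hSA hx) (hdist x hx y hy)

theorem exists_pointwiseLipschitzAt_of_upperScaledOsc_lt_top {A : Set E} {f : E → F} {x : E}
    (h : upperScaledOsc A f x < ⊤) : ∃ K : ℝ≥0, ∃ δ > 0, PointwiseLipschitzAt A f K δ x := by
  obtain ⟨K, hLK, -⟩ := ENNReal.lt_iff_exists_nnreal_btwn.1 h
  obtain ⟨δ, hδ, hsmall⟩ := Metric.eventually_nhds_iff.1 <|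
    eventually_nhdsWithin_iff.1 (eventually_lt_of_limsup_lt hLK)
  refine ⟨K, δ, hδ, fun y hy hyx => ?_⟩
  have hscale : ∀ r ∈ Ioo (dist y x) δ, dist (f y) (f x) ≤ K * r := by
    rintro r ⟨hyr, hrδ⟩
    have hr : 0 < r := dist_nonneg.trans_lt hyr
    have hquot := hsmall (by rwa [Real.dist_eq, sub_zero, abs_of_pos hr]) hr
    rw [ENNReal.div_lt_iff (Or.inl (by simpa using hr)) (Or.inl ENNReal.ofReal_ne_top)] at hquot
    have hle : ENNReal.ofReal (dist (f y) (f x)) < ENNReal.ofReal (K * r) := by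
      rw [ENNReal.ofReal_mul K.coe_nonneg, ENNReal.ofReal_coe_nnreal]
      exact (le_iSup₂_of_le y hy (le_iSup (fun _ => _) hyr.le)).trans_lt hquot
    exact (ENNReal.ofReal_lt_ofReal_iff'.1 hle).1.le
  -- `r = dist y x` may be `0`, so pass to the limit `r ↓ dist y x` instead
  exact ge_of_tendsto (((continuous_const.mul continuous_id).tendsto _).mono_left
    nhdsWithin_le_nhds) (eventually_of_mem (Ioo_mem_nhdsGT hyx) hscale)

theorem exists_seq_lipschitzOnWith_cover [TopologicalSpace.SeparableSpace E] [Nonempty E]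
    {A : Set E} {f : E → F} (h : ∀ x ∈ A, ∃ K : ℝ≥0, ∃ δ > 0, PointwiseLipschitzAt A f K δ x) :
    ∃ S : ℕ → Set E, A = ⋃ k, S k ∧ ∀ k, ∃ K : ℝ≥0, LipschitzOnWith K f (S k) := by
  set c := TopologicalSpace.denseSeq E
  set piece : ℕ → ℕ → Set E := fun n j =>
    {x | x ∈ A ∧ PointwiseLipschitzAt A f n (n + 1 : ℝ)⁻¹ x} ∩ ball (c j) ((n + 1 : ℝ)⁻¹ / 2)
  refine ⟨fun k => piece k.unpair.1 k.unpair.2, ?_, fun k => ⟨k.unpair.1, ?_⟩⟩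
  · refine Subset.antisymm (fun x hx => ?_) (iUnion_subset fun k x hx => hx.1.1)
    obtain ⟨K, δ, hδ, hx'⟩ := h x hx
    obtain ⟨n, hn⟩ := hx'.exists_nat hδ
    obtain ⟨j, hj⟩ := Metric.denseRange_iff.1 (TopologicalSpace.denseRange_denseSeq E) x
      ((n + 1 : ℝ)⁻¹ / 2) (by positivity)
    exact mem_iUnion.2 ⟨Nat.pair n j, by simpa only [Nat.unpair_pair] using ⟨⟨hx, hn⟩, hj⟩⟩
  · refine lipschitzOnWith_of_pointwiseLipschitzAt (fun x hx => hx.1.1) (fun x hx => hx.1.2)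
      fun x hx y hy => ?_
    calc dist x y ≤ dist x (c k.unpair.2) + dist y (c k.unpair.2) := dist_triangle_right _ _ _
      _ < _ := add_lt_add hx.2 hy.2
      _ = _ := add_halves _

/-- If `f : [0,1]^m → ℝ` has finite upper-scaled oscillation at every point, then
`[0,1]^m` is a countable union of sets on each of which `f` is Lipschitz. -/
theorem stmt10 (m : ℕ) (f : (Fin m → ℝ) → ℝ)
    (hL : ∀ x ∈ Set.Icc (0 : Fin m → ℝ) 1, upperScaledOsc (Set.Icc 0 1) f x < ⊤) :
    ∃ E : ℕ → Set (Fin m → ℝ),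
      (Set.Icc (0 : Fin m → ℝ) 1 = ⋃ n, E n) ∧
      (∀ n, ∃ K : ℝ≥0, LipschitzOnWith K f (E n)) :=
  exists_seq_lipschitzOnWith_cover fun x hx =>
    exists_pointwiseLipschitzAt_of_upperScaledOsc_lt_top (hL x hx)
end
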